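/- arXiv:math/9802048 — 7 statements merged into one kernel-verified Lean document; each statement's English description precedes it below -/
import Mathlib

section
/- The operators φ_i = 1 + s_i·α_i^∨ (for i in Z/nZ) and φ_π = π in the degenerate double affine Hecke algebra satisfy the braid relations: φ_i·φ_{i+1}·φ_i = φ_{i+1}·φ_i·φ_{i+1}, φ_i·φ_j = φ_j·φ_i when i−j ≢ ±1 mod n, φ_π·φ_i = φ_{i+1}·φ_π, and φ_i² = 1 − (α_i^∨)². -/
noncomputable section

/-!
In the degenerate double affine Hecke algebra `H_n` of type `A_{n-1}^(1)`
(a unital associative ℂ-algebra containing the group algebra of the affine Weyl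
group `W = ⟨π, s_0, …, s_{n-1}⟩` and the symmetric algebra of
`t' = span(ε_1^∨, …, ε_n^∨, c)`, with the cross relations
`s_i·ξ − s_i(ξ)·s_i = −α_i(ξ)` and `π·ξ = π(ξ)·π`), the intertwiners
`φ_i = 1 + s_i·α_i^∨` and `φ_π = π` satisfy the braid-type relations.
-/

/-- The space `t' = span(ε_1^∨,…,ε_n^∨, c)`: coordinates indexed by `ZMod n`
(index `i mod n` corresponding to `ε_i^∨`, so `0 ↔ ε_n^∨`), plus the `c`-coordinate. -/
abbrev Tprime (n : ℕ) := (ZMod n → ℂ) × ℂ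

namespace DDAHA

variable (n : ℕ)

/-- The simple affine root `α_i` as a linear functional on `t'`
(`δ` vanishes on `t'`, so `α_i(ξ) = ξ_i − ξ_{i+1}` for all `i ∈ ℤ/n`). -/
def alphaL (i : ZMod n) : Tprime n →ₗ[ℂ] ℂ where
  toFun ξ := ξ.1 i - ξ.1 (i + 1)
  map_add' x y := by
    show x.1 i + y.1 i - (x.1 (i+1) + y.1 (i+1)) = x.1 i - x.1 (i+1) + (y.1 i - y.1 (i+1))
    ring
  map_smul' c x := by
    show c * x.1 i - c * x.1 (i+1) = c * (x.1 i - x.1 (i+1))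
    ring

/-- The coroot `α_i^∨ ∈ t'`; for `i = 0` it is `c + ε_n^∨ − ε_1^∨`. -/
def coroot (i : ZMod n) : Tprime n :=
  (fun j => (if j = i then 1 else 0) - (if j = i + 1 then 1 else 0),
    if i = 0 then 1 else 0)

/-- The action of the simple reflection `s_i` on `t'`: `s_i(ξ) = ξ − α_i(ξ)·α_i^∨`. -/
def sMap (i : ZMod n) : Tprime n →ₗ[ℂ] Tprime n :=
  LinearMap.id - (alphaL n i).smulRight (coroot n i)

/-- The action of `π = t_{ε_1} s_1 ⋯ s_{n-1}` on `t'`: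
`π(ε_i^∨) = ε_{i+1}^∨` for `i < n`, `π(ε_n^∨) = ε_1^∨ + c`, `π(c) = c`. -/
def piMap : Tprime n →ₗ[ℂ] Tprime n where
  toFun ξ := (fun j => ξ.1 (j - 1), ξ.2 + ξ.1 0)
  map_add' x y := by
    refine Prod.ext rfl ?_
    show x.2 + y.2 + (x.1 0 + y.1 0) = x.2 + x.1 0 + (y.2 + y.1 0)
    ring
  map_smul' c x := by
    refine Prod.ext rfl ?_
    show c * x.2 + c * x.1 0 = c * (x.2 + x.1 0)
    ring

/-- The data of the degenerate double affine Hecke algebra `H_n` realized inside a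
unital associative ℂ-algebra `A`: the group `W` generated by `π` (invertible) and the
simple reflections `s_i`, a commutative copy of `S[t']`, and the defining cross
relations `s_i·ξ − s_i(ξ)·s_i = −α_i(ξ)`, `π·ξ = π(ξ)·π`. -/
structure Rep (n : ℕ) (A : Type*) [Ring A] [Algebra ℂ A] where
  x : Tprime n →ₗ[ℂ] A
  s : ZMod n → A
  p : Aˣ
  x_comm : ∀ ξ η : Tprime n, x ξ * x η = x η * x ξ
  s_sq : ∀ i : ZMod n, s i * s i = 1
  p_s : ∀ i : ZMod n, (p : A) * s i = s (i + 1) * (p : A)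
  s_comm : ∀ i j : ZMod n, i - j ≠ 1 → j - i ≠ 1 → s i * s j = s j * s i
  s_braid : 3 ≤ n → ∀ i : ZMod n, s i * s (i + 1) * s i = s (i + 1) * s i * s (i + 1)
  s_rel : ∀ (i : ZMod n) (ξ : Tprime n),
    s i * x ξ = x (sMap n i ξ) * s i - algebraMap ℂ A (alphaL n i ξ)
  p_rel : ∀ ξ : Tprime n, (p : A) * x ξ = x (piMap n ξ) * (p : A)

variable {n} {A : Type*} [Ring A] [Algebra ℂ A]

/-- The intertwiner `φ_i = 1 + s_i·α_i^∨`. -/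
def phi (ρ : Rep n A) (i : ZMod n) : A := 1 + ρ.s i * ρ.x (coroot n i)

/-! ### Auxiliary ring-theoretic lemmas -/

section AuxRing
variable {A₀ : Type*} [Ring A₀]

lemma quad_aux (s X : A₀) (hss : s*s = 1) (h1 : s*X = -(X*s) - 2) :
    (1 + s*X) * (1 + s*X) = 1 - X*X := by
  have h1' : X*s = -(s*X) - 2 := by rw [h1]; noncomm_ring
  calc (1 + s*X) * (1 + s*X) = 1 + s*X + s*X + s*(X*s)*X := by noncomm_ring
    _ = 1 + s*X + s*X + s*(-(s*X) - 2)*X := by rw [h1']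
    _ = 1 + s*X + s*X - (s*s)*(X*X) - 2*(s*X) := by noncomm_ring
    _ = 1 - X*X := by rw [hss]; noncomm_ring

lemma comm_aux (s t X Y : A₀) (hst : s*t = t*s) (hXY : X*Y = Y*X)
    (hsY : s*Y = Y*s) (htX : t*X = X*t) :
    (1 + s*X) * (1 + t*Y) = (1 + t*Y) * (1 + s*X) := by
  have h1 : (s*X)*(t*Y) = (t*Y)*(s*X) := by
    calc (s*X)*(t*Y) = s*(X*t)*Y := by noncomm_ring
    _ = s*(t*X)*Y := by rw [htX]
    _ = (s*t)*(X*Y) := by noncomm_ring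
    _ = (t*s)*(Y*X) := by rw [hst, hXY]
    _ = t*(s*Y)*X := by noncomm_ring
    _ = t*(Y*s)*X := by rw [hsY]
    _ = (t*Y)*(s*X) := by noncomm_ring
  calc (1+s*X)*(1+t*Y) = 1 + s*X + t*Y + (s*X)*(t*Y) := by noncomm_ring
  _ = 1 + s*X + t*Y + (t*Y)*(s*X) := by rw [h1]
  _ = (1+t*Y)*(1+s*X) := by noncomm_ring

lemma braid_aux (s t X Y : A₀)
    (hss : s*s = 1) (htt : t*t = 1) (hsts : s*t*s = t*s*t)
    (hXY : X*Y = Y*X)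
    (h1 : s*X = -(X*s) - 2) (h2 : s*Y = (X+Y)*s + 1)
    (h3 : t*Y = -(Y*t) - 2) (h4 : t*X = (X+Y)*t + 1) :
    (1 + s*X) * (1 + t*Y) * (1 + s*X) = (1 + t*Y) * (1 + s*X) * (1 + t*Y) := by
  have hX_s : X*s = -(s*X) - 2 := by rw [h1]; noncomm_ring
  have hY_t : Y*t = -(t*Y) - 2 := by rw [h3]; noncomm_ring
  have hY_s : Y*s = s*X + s*Y + 1 := by
    calc Y*s = (s*s)*(Y*s) := by rw [hss, one_mul]
    _ = s*((s*Y)*s) := by noncomm_ring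
    _ = s*(((X+Y)*s + 1)*s) := by rw [h2]
    _ = s*(X+Y)*(s*s) + s*s := by noncomm_ring
    _ = s*X + s*Y + 1 := by rw [hss]; noncomm_ring
  have hX_t : X*t = t*X + t*Y + 1 := by
    calc X*t = (t*t)*(X*t) := by rw [htt, one_mul]
    _ = t*((t*X)*t) := by noncomm_ring
    _ = t*(((X+Y)*t + 1)*t) := by rw [h4]
    _ = t*(X+Y)*(t*t) + t*t := by noncomm_ring
    _ = t*X + t*Y + 1 := by rw [htt]; noncomm_ring
  have hYX : Y*X = X*Y := hXY.symm
  have hs1 : ∀ z : A₀, X*(s*z) = -(s*(X*z)) - (z+z) := fun z => by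
    rw [← mul_assoc, hX_s]; noncomm_ring
  have hs2 : ∀ z : A₀, Y*(s*z) = s*(X*z) + s*(Y*z) + z := fun z => by
    rw [← mul_assoc, hY_s]; noncomm_ring
  have ht1 : ∀ z : A₀, Y*(t*z) = -(t*(Y*z)) - (z+z) := fun z => by
    rw [← mul_assoc, hY_t]; noncomm_ring
  have ht2 : ∀ z : A₀, X*(t*z) = t*(X*z) + t*(Y*z) + z := fun z => by
    rw [← mul_assoc, hX_t]; noncomm_ring
  have hyx : ∀ z : A₀, Y*(X*z) = X*(Y*z) := fun z => by
    rw [← mul_assoc, hYX, mul_assoc]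
  have hsss : ∀ z : A₀, s*(s*z) = z := fun z => by rw [← mul_assoc, hss, one_mul]
  have httt : ∀ z : A₀, t*(t*z) = z := fun z => by rw [← mul_assoc, htt, one_mul]
  have htst : ∀ z : A₀, t*(s*(t*z)) = s*(t*(s*z)) := fun z => by
    rw [← mul_assoc, ← mul_assoc, ← hsts]; noncomm_ring
  simp only [mul_add, add_mul, mul_one, one_mul, mul_sub, sub_mul, mul_neg, neg_mul,
    mul_assoc, hs1, hs2, ht1, ht2, hyx, hsss, httt, htst, hX_s, hY_s, hX_t, hY_t, hYX,
    hss, htt]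
  noncomm_ring

end AuxRing

/-! ### Computations in `t'` -/

lemma alphaL_apply (m : ℕ) (i : ZMod m) (ξ : Tprime m) :
    alphaL m i ξ = ξ.1 i - ξ.1 (i + 1) := rfl

lemma sMap_apply (m : ℕ) (i : ZMod m) (ξ : Tprime m) :
    sMap m i ξ = ξ - alphaL m i ξ • coroot m i := rfl

lemma coroot_fst (m : ℕ) (i j : ZMod m) :
    (coroot m i).1 j = (if j = i then (1:ℂ) else 0) - (if j = i + 1 then 1 else 0) := rfl

section ZModComp

variable {m : ℕ} (h1z : (1 : ZMod m) ≠ 0) (h2z : (2 : ZMod m) ≠ 0)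

include h1z in
lemma zsucc_ne (a : ZMod m) : a ≠ a + 1 :=
  fun h => h1z (add_eq_left.mp h.symm)

include h2z in
lemma zsucc2_ne (a : ZMod m) : a ≠ a + 1 + 1 := fun h => by
  rw [add_assoc, one_add_one_eq_two] at h
  exact h2z (add_eq_left.mp h.symm)

include h1z in
lemma alpha_self (i : ZMod m) : alphaL m i (coroot m i) = 2 := by
  rw [alphaL_apply, coroot_fst, coroot_fst,
    if_pos rfl, if_neg (zsucc_ne h1z i), if_neg (Ne.symm (zsucc_ne h1z i)), if_pos rfl]
  norm_num

include h1z h2z in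
lemma alpha_next (i : ZMod m) : alphaL m i (coroot m (i + 1)) = -1 := by
  rw [alphaL_apply, coroot_fst, coroot_fst,
    if_neg (zsucc_ne h1z i), if_neg (zsucc2_ne h2z i), if_pos rfl,
    if_neg (zsucc_ne h1z (i + 1))]
  norm_num

include h1z h2z in
lemma alpha_prev (i : ZMod m) : alphaL m (i + 1) (coroot m i) = -1 := by
  rw [alphaL_apply, coroot_fst, coroot_fst,
    if_neg (Ne.symm (zsucc_ne h1z i)), if_pos rfl,
    if_neg (Ne.symm (zsucc2_ne h2z i)), if_neg (Ne.symm (zsucc_ne h1z (i + 1)))]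
  norm_num

lemma alpha_far (i j : ZMod m) (hij : i ≠ j) (hd1 : i - j ≠ 1) (hd2 : j - i ≠ 1) :
    alphaL m i (coroot m j) = 0 := by
  have e1 : i ≠ j + 1 := fun h => hd1 (by rw [h, add_sub_cancel_left])
  have e2 : i + 1 ≠ j := fun h => hd2 (by rw [← h, add_sub_cancel_left])
  have e3 : i + 1 ≠ j + 1 := fun h => hij (add_right_cancel h)
  rw [alphaL_apply, coroot_fst, coroot_fst,
    if_neg hij, if_neg e1, if_neg e2, if_neg e3]
  norm_num

/-- The element `c ∈ t'`. -/
def cvec (m : ℕ) : Tprime m := (fun _ => 0, 1)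

/-- The element `ε_n^∨ ∈ t'`. -/
def xi0 (m : ℕ) : Tprime m := (fun j => if j = 0 then 1 else 0, 0)

include h1z in
lemma alpha_xi0 : alphaL m 0 (xi0 m) = 1 := by
  rw [alphaL_apply]
  show (if (0 : ZMod m) = 0 then (1:ℂ) else 0) - (if (0:ZMod m) + 1 = 0 then 1 else 0) = 1
  rw [if_pos rfl, if_neg (by rw [zero_add]; exact h1z)]
  norm_num

include h1z in
lemma alpha_pi_xi0 : alphaL m 1 (piMap m (xi0 m)) = 1 := by
  rw [alphaL_apply]
  show (if (1 : ZMod m) - 1 = 0 then (1:ℂ) else 0) - (if (1:ZMod m) + 1 - 1 = 0 then 1 else 0) = 1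
  rw [if_pos (sub_self 1), if_neg (by rw [add_sub_cancel_right]; exact h1z)]
  norm_num

include h1z in
lemma piMap_coroot (i : ZMod m) :
    piMap m (coroot m i) = coroot m (i + 1)
      + (((if i = 0 then 2 else 0) - (if i + 1 = 0 then 2 else 0)) : ℂ) • cvec m := by
  refine Prod.ext (funext fun j => ?_) ?_
  · show (coroot m i).1 (j - 1)
        = (coroot m (i+1)).1 j
          + (((if i = 0 then 2 else 0) - (if i + 1 = 0 then 2 else 0)) : ℂ) * 0
    rw [mul_zero, add_zero, coroot_fst, coroot_fst]
    have hc1 : (j - 1 = i) ↔ (j = i + 1) := sub_eq_iff_eq_add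
    have hc2 : (j - 1 = i + 1) ↔ (j = i + 1 + 1) := sub_eq_iff_eq_add
    rw [if_congr hc1 rfl rfl, if_congr hc2 rfl rfl]
  · show ((if i = 0 then (1:ℂ) else 0)
        + ((if (0 : ZMod m) = i then (1:ℂ) else 0) - (if (0 : ZMod m) = i + 1 then 1 else 0)))
        = (if i + 1 = 0 then (1:ℂ) else 0)
          + (((if i = 0 then 2 else 0) - (if i + 1 = 0 then 2 else 0)) : ℂ) * 1
    by_cases hi : i = 0
    · have hi1 : i + 1 ≠ 0 := by rw [hi, zero_add]; exact h1z
      rw [if_pos hi, if_pos hi.symm, if_neg (Ne.symm hi1), if_neg hi1, if_pos hi, if_neg hi1]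
      norm_num
    · by_cases hi1 : i + 1 = 0
      · rw [if_neg hi, if_neg (fun h => hi h.symm), if_pos hi1.symm, if_pos hi1,
          if_neg hi, if_pos hi1]
        norm_num
      · rw [if_neg hi, if_neg (fun h => hi h.symm), if_neg (fun h => hi1 h.symm),
          if_neg hi1, if_neg hi, if_neg hi1]
        norm_num

end ZModComp


/-- the intertwiners `φ_i` (for `i ∈ ℤ/nℤ`) and `φ_π = π` satisfy:
`φ_i·φ_{i+1}·φ_i = φ_{i+1}·φ_i·φ_{i+1}`; `φ_i·φ_j = φ_j·φ_i` when `i − j ≢ ±1 (mod n)`;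
`φ_π·φ_i = φ_{i+1}·φ_π`; and `φ_i² = 1 − (α_i^∨)²`. -/
theorem statement_0 (hn : 3 ≤ n) (ρ : Rep n A) :
    (∀ i : ZMod n, phi ρ i * phi ρ (i + 1) * phi ρ i
        = phi ρ (i + 1) * phi ρ i * phi ρ (i + 1)) ∧
    (∀ i j : ZMod n, i - j ≠ 1 → j - i ≠ 1 → phi ρ i * phi ρ j = phi ρ j * phi ρ i) ∧
    (∀ i : ZMod n, (ρ.p : A) * phi ρ i = phi ρ (i + 1) * (ρ.p : A)) ∧
    (∀ i : ZMod n, phi ρ i * phi ρ i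
        = 1 - ρ.x (coroot n i) * ρ.x (coroot n i)) := by
  haveI : NeZero n := ⟨by omega⟩
  have h1z : (1 : ZMod n) ≠ 0 := by
    intro h
    have h2 : ((1:ℕ) : ZMod n) = 0 := by exact_mod_cast h
    rw [ZMod.natCast_eq_zero_iff] at h2
    have := Nat.le_of_dvd (by norm_num) h2; omega
  have h2z : (2 : ZMod n) ≠ 0 := by
    intro h
    have h2 : ((2:ℕ) : ZMod n) = 0 := by exact_mod_cast h
    rw [ZMod.natCast_eq_zero_iff] at h2
    have := Nat.le_of_dvd (by norm_num) h2; omega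
  have hx_sMap : ∀ (i : ZMod n) (ξ : Tprime n),
      ρ.x (sMap n i ξ) = ρ.x ξ - alphaL n i ξ • ρ.x (coroot n i) := by
    intro i ξ; rw [sMap_apply, map_sub, map_smul]
  have key1 : ∀ i : ZMod n, ρ.s i * ρ.x (coroot n i)
      = -(ρ.x (coroot n i) * ρ.s i) - 2 := by
    intro i
    have h2X : (2:ℂ) • ρ.x (coroot n i) = ρ.x (coroot n i) + ρ.x (coroot n i) := two_smul ℂ _
    rw [ρ.s_rel i (coroot n i), hx_sMap, alpha_self h1z i, h2X, map_ofNat]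
    noncomm_ring
  have key2 : ∀ i : ZMod n, ρ.s i * ρ.x (coroot n (i+1))
      = (ρ.x (coroot n i) + ρ.x (coroot n (i+1))) * ρ.s i + 1 := by
    intro i
    rw [ρ.s_rel i (coroot n (i+1)), hx_sMap, alpha_next h1z h2z i, neg_smul, one_smul,
      map_neg, map_one]
    noncomm_ring
  have key3 : ∀ i : ZMod n, ρ.s (i+1) * ρ.x (coroot n i)
      = (ρ.x (coroot n i) + ρ.x (coroot n (i+1))) * ρ.s (i+1) + 1 := by
    intro i
    rw [ρ.s_rel (i+1) (coroot n i), hx_sMap, alpha_prev h1z h2z i, neg_smul, one_smul,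
      map_neg, map_one]
    noncomm_ring
  have key4 : ∀ i j : ZMod n, i ≠ j → i - j ≠ 1 → j - i ≠ 1 →
      ρ.s i * ρ.x (coroot n j) = ρ.x (coroot n j) * ρ.s i := by
    intro i j hij hd1 hd2
    rw [ρ.s_rel i (coroot n j), hx_sMap, alpha_far i j hij hd1 hd2, zero_smul, map_zero]
    noncomm_ring
  have hp_s0 : (ρ.p : A) * ρ.s 0 = ρ.s 1 * ρ.p := by
    have := ρ.p_s 0; rwa [zero_add] at this
  have hE1 : (ρ.p : A) * (ρ.s 0 * ρ.x (xi0 n))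
      = ρ.x (piMap n (sMap n 0 (xi0 n))) * (ρ.s 1 * ρ.p) - ρ.p := by
    calc (ρ.p : A) * (ρ.s 0 * ρ.x (xi0 n))
        = (ρ.p : A) * (ρ.x (sMap n 0 (xi0 n)) * ρ.s 0
            - algebraMap ℂ A (alphaL n 0 (xi0 n))) := by rw [ρ.s_rel]
      _ = ((ρ.p : A) * ρ.x (sMap n 0 (xi0 n))) * ρ.s 0 - ρ.p := by
          rw [alpha_xi0 h1z, map_one]; noncomm_ring
      _ = (ρ.x (piMap n (sMap n 0 (xi0 n))) * ρ.p) * ρ.s 0 - ρ.p := by rw [ρ.p_rel]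
      _ = ρ.x (piMap n (sMap n 0 (xi0 n))) * ((ρ.p : A) * ρ.s 0) - ρ.p := by rw [mul_assoc]
      _ = ρ.x (piMap n (sMap n 0 (xi0 n))) * (ρ.s 1 * ρ.p) - ρ.p := by rw [hp_s0]
  have hE2 : (ρ.p : A) * (ρ.s 0 * ρ.x (xi0 n))
      = ρ.x (sMap n 1 (piMap n (xi0 n))) * (ρ.s 1 * ρ.p) - ρ.p := by
    calc (ρ.p : A) * (ρ.s 0 * ρ.x (xi0 n))
        = ((ρ.p : A) * ρ.s 0) * ρ.x (xi0 n) := by rw [mul_assoc]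
      _ = (ρ.s 1 * (ρ.p : A)) * ρ.x (xi0 n) := by rw [hp_s0]
      _ = ρ.s 1 * ((ρ.p : A) * ρ.x (xi0 n)) := by rw [mul_assoc]
      _ = ρ.s 1 * (ρ.x (piMap n (xi0 n)) * ρ.p) := by rw [ρ.p_rel]
      _ = (ρ.s 1 * ρ.x (piMap n (xi0 n))) * ρ.p := by rw [mul_assoc]
      _ = (ρ.x (sMap n 1 (piMap n (xi0 n))) * ρ.s 1
            - algebraMap ℂ A (alphaL n 1 (piMap n (xi0 n)))) * ρ.p := by rw [ρ.s_rel]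
      _ = ρ.x (sMap n 1 (piMap n (xi0 n))) * (ρ.s 1 * ρ.p) - ρ.p := by
          rw [alpha_pi_xi0 h1z, map_one]; noncomm_ring
  have hr0 : (((if (0:ZMod n) = 0 then 2 else 0)
      - (if (0:ZMod n) + 1 = 0 then 2 else 0)) : ℂ) = 2 := by
    rw [if_pos rfl, if_neg (by rw [zero_add]; exact h1z)]; ring
  have hdiff : ρ.x (piMap n (sMap n 0 (xi0 n)))
      = ρ.x (sMap n 1 (piMap n (xi0 n))) - (2:ℂ) • ρ.x (cvec n) := by
    have d1 : piMap n (sMap n 0 (xi0 n)) = piMap n (xi0 n) - piMap n (coroot n 0) := by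
      rw [sMap_apply, alpha_xi0 h1z, one_smul, map_sub]
    rw [d1, map_sub, piMap_coroot h1z 0, map_add, map_smul, hr0,
      hx_sMap, alpha_pi_xi0 h1z, one_smul, zero_add]
    abel
  have hcan : ρ.x (piMap n (sMap n 0 (xi0 n))) * (ρ.s 1 * ρ.p)
      = ρ.x (sMap n 1 (piMap n (xi0 n))) * (ρ.s 1 * ρ.p) :=
    sub_left_inj.mp (hE1.symm.trans hE2)
  have h0 : ((2:ℂ) • ρ.x (cvec n)) * (ρ.s 1 * ρ.p) = 0 := by
    rw [hdiff, sub_mul] at hcan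
    exact sub_eq_self.mp hcan
  have h0' : ((2:ℂ) • ρ.x (cvec n)) * ρ.s 1 = 0 := by
    calc ((2:ℂ) • ρ.x (cvec n)) * ρ.s 1
        = (((2:ℂ) • ρ.x (cvec n)) * ρ.s 1) * ((ρ.p : A) * (↑(ρ.p⁻¹) : A)) := by
          rw [Units.mul_inv, mul_one]
      _ = (((2:ℂ) • ρ.x (cvec n)) * (ρ.s 1 * ρ.p)) * (↑(ρ.p⁻¹) : A) := by noncomm_ring
      _ = 0 * (↑(ρ.p⁻¹) : A) := by rw [h0]
      _ = 0 := zero_mul _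
  have hxc : ρ.x (cvec n) = 0 := by
    have h2 : (2:ℂ) • ρ.x (cvec n) = 0 := by
      calc (2:ℂ) • ρ.x (cvec n)
          = ((2:ℂ) • ρ.x (cvec n)) * (ρ.s 1 * ρ.s 1) := by rw [ρ.s_sq, mul_one]
        _ = (((2:ℂ) • ρ.x (cvec n)) * ρ.s 1) * ρ.s 1 := by rw [mul_assoc]
        _ = 0 * ρ.s 1 := by rw [h0']
        _ = 0 := zero_mul _
    rcases smul_eq_zero.mp h2 with h | h
    · exact absurd h two_ne_zero
    · exact h
  have hxpi : ∀ i : ZMod n, ρ.x (piMap n (coroot n i)) = ρ.x (coroot n (i + 1)) := by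
    intro i
    rw [piMap_coroot h1z i, map_add, map_smul, hxc, smul_zero, add_zero]
  refine ⟨?_, ?_, ?_, ?_⟩
  · intro i
    simp only [phi]
    exact braid_aux (ρ.s i) (ρ.s (i+1)) (ρ.x (coroot n i)) (ρ.x (coroot n (i+1)))
      (ρ.s_sq i) (ρ.s_sq (i+1)) (ρ.s_braid hn i) (ρ.x_comm _ _)
      (key1 i) (key2 i) (key1 (i+1)) (key3 i)
  · intro i j hd1 hd2
    by_cases hij : i = j
    · subst hij; rfl
    · simp only [phi]
      exact comm_aux _ _ _ _ (ρ.s_comm i j hd1 hd2) (ρ.x_comm _ _)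
        (key4 i j hij hd1 hd2) (key4 j i (Ne.symm hij) hd2 hd1)
  · intro i
    simp only [phi]
    calc (ρ.p : A) * (1 + ρ.s i * ρ.x (coroot n i))
        = (ρ.p : A) + ((ρ.p : A) * ρ.s i) * ρ.x (coroot n i) := by noncomm_ring
      _ = (ρ.p : A) + (ρ.s (i+1) * (ρ.p : A)) * ρ.x (coroot n i) := by rw [ρ.p_s i]
      _ = (ρ.p : A) + ρ.s (i+1) * ((ρ.p : A) * ρ.x (coroot n i)) := by rw [mul_assoc]
      _ = (ρ.p : A) + ρ.s (i+1) * (ρ.x (piMap n (coroot n i)) * ρ.p) := by rw [ρ.p_rel]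
      _ = (ρ.p : A) + ρ.s (i+1) * (ρ.x (coroot n (i+1)) * ρ.p) := by rw [hxpi]
      _ = (1 + ρ.s (i+1) * ρ.x (coroot n (i+1))) * ρ.p := by noncomm_ring
  · intro i
    simp only [phi]
    exact quad_aux _ _ (ρ.s_sq i) (key1 i)

end DDAHA
end
end

section
/- The operators B(m) (m ∈ Z, m ≠ 0) acting on the Fock space F by B(m)·(u_{k_1}∧u_{k_2}∧···) = Σ_i u_{k_1}∧···∧(z^m·u_{k_i})∧··· are well defined and satisfy the Heisenberg relations [B(m), B(n)] = LN·m·δ_{m+n,0}·1; moreover they commute with the actions of sl_L^ and sl_N^ on F. -/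
noncomputable section

/-!
The defining formula of a shift operator `u_k ↦ c(k)·u_{k+d}` extends, by antisymmetry of the
wedge symbol, from normally ordered wedges to every eventually linear momentum sequence: sort it
by adjacent transpositions (the number of inversions drops), and if a momentum repeats, the two
terms moving the repeated factors cancel. Composing two shift operators then gives a double sum
over the pair of moved factors. On a square window of positions this sum is symmetric, so it
cancels in the commutator; outside the window the second moved factor sits in the linear tail
and collides with a tail momentum unless it lands in the slot vacated by the first move, which
happens only for opposite shifts `d, -d` and yields the central term `-d·1`.

The Chevalley generators shift by less than `NL` in absolute value and have coefficients periodic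
modulo `NL`, so they commute with `B(m)`; a Cartan generator acts by a normally ordered charge,
which does not change when one momentum is moved by a multiple of `NL`.
-/

namespace FockB

/-- Strictly decreasing, eventually linear momentum sequences: the normally
ordered semi-infinite wedges. -/
def WedgeIdx : Type :=
  {f : ℕ → ℤ // StrictAnti f ∧ ∃ N : ℕ, ∀ i ≥ N, f (i + 1) = f i - 1}

/-- The Fock space `F`. -/
abbrev Fock : Type := WedgeIdx →₀ ℂ

/-- `k̄ ∈ {1,…,N}` in the decomposition `k = k̄ − N(k̇ + L·k̲)`. -/
def kbar (N : ℕ) (k : ℤ) : ℤ := (k - 1) % N + 1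

/-- `k̇ ∈ {1,…,L}` in the decomposition `k = k̄ − N(k̇ + L·k̲)`. -/
def kdot (N L : ℕ) (k : ℤ) : ℤ := ((kbar N k - k) / N - 1) % L + 1

/-- An alternating "wedge symbol" `w : (ℕ → ℤ) → F`: `w f` is the semi-infinite
wedge with momentum sequence `f` — zero if `f` has a repeated momentum,
alternating under exchange of adjacent factors, and equal to the corresponding
basis vector on normally ordered sequences. -/
def WedgeSymbolSpec (w : (ℕ → ℤ) → Fock) : Prop :=
  (∀ f : ℕ → ℤ, ¬ Function.Injective f → w f = 0) ∧
  (∀ (f : ℕ → ℤ) (i : ℕ), w (f ∘ Equiv.swap i (i + 1)) = - w f) ∧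
  (∀ b : WedgeIdx, w b.1 = Finsupp.single b 1)

/-- Specification of the diagonal action on `F` of a one-body operator
`u_k ↦ c(k)·u_{k+d}` of shift type. -/
def DiagSpec (w : (ℕ → ℤ) → Fock) (T : Fock →ₗ[ℂ] Fock) (d : ℤ) (c : ℤ → ℂ) : Prop :=
  ∀ b : WedgeIdx, T (Finsupp.single b 1)
    = ∑ᶠ i : ℕ, c (b.1 i) • w (Function.update b.1 i (b.1 i + d))

/-- Specification of the diagonal action on `F` of a diagonal one-body operator
`u_k ↦ c(k)·u_k`, with the normal-ordering normalization making it annihilate the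
charge-0 vacuum `u_0 ∧ u_{-1} ∧ u_{-2} ∧ ⋯` (as for the Cartan generators). -/
def CartanSpec (T : Fock →ₗ[ℂ] Fock) (c : ℤ → ℂ) : Prop :=
  ∀ b : WedgeIdx, T (Finsupp.single b 1)
    = ((∑ᶠ k ∈ {k : ℤ | 0 < k ∧ k ∈ Set.range b.1}, c k)
        - ∑ᶠ k ∈ {k : ℤ | k ≤ 0 ∧ k ∉ Set.range b.1}, c k) • Finsupp.single b 1

/-- `T` is one of the Chevalley generators of the diagonal `sl_N^`-action on the
Fock space: `E_t u_k = [k̄ = t+1]·u_{k−1}`, `F_t u_k = [k̄ = t]·u_{k+1}`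
(`t = 1,…,N−1`), `E_0 u_k = [k̄ = 1]·u_{k+N−1−NL}`, `F_0 u_k = [k̄ = N]·u_{k+1−N+NL}`,
and `H_t` diagonal with `c(k) = [k̄ = t] − [k̄ = t+1]`. -/
def IsSlNGen (N L : ℕ) (w : (ℕ → ℤ) → Fock) (T : Fock →ₗ[ℂ] Fock) : Prop :=
  (∃ t : ℕ, 1 ≤ t ∧ t < N ∧
    DiagSpec w T (-1) (fun k => if kbar N k = t + 1 then 1 else 0)) ∨
  (∃ t : ℕ, 1 ≤ t ∧ t < N ∧
    DiagSpec w T 1 (fun k => if kbar N k = t then 1 else 0)) ∨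
  DiagSpec w T ((N : ℤ) - 1 - N * L) (fun k => if kbar N k = 1 then 1 else 0) ∨
  DiagSpec w T (1 - (N : ℤ) + N * L) (fun k => if kbar N k = N then 1 else 0) ∨
  (∃ t : ℕ, 1 ≤ t ∧ t < N ∧
    CartanSpec T (fun k => (if kbar N k = t then 1 else 0)
      - (if kbar N k = t + 1 then 1 else 0)))

/-- `T` is one of the Chevalley generators of the diagonal `sl_L^`-action on the
Fock space: `e_b u_k = [k̇ = L−b]·u_{k−N}` (`b = 0,…,L−1`, incl. `e_0` with
`k̇ = L`), `f_b u_k = [k̇ = L−b+1]·u_{k+N}` (`f_0` with `k̇ = 1`), and `h_b`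
diagonal with `c(k) = [k̇ = L−b+1] − [k̇ = L−b]` (`b = 1,…,L−1`). -/
def IsSlLGen (N L : ℕ) (w : (ℕ → ℤ) → Fock) (T : Fock →ₗ[ℂ] Fock) : Prop :=
  (∃ b : ℕ, b < L ∧
    DiagSpec w T (-(N : ℤ)) (fun k => if kdot N L k = (L : ℤ) - b then 1 else 0)) ∨
  (∃ b : ℕ, 1 ≤ b ∧ b < L ∧
    DiagSpec w T (N : ℤ) (fun k => if kdot N L k = (L : ℤ) - b + 1 then 1 else 0)) ∨
  DiagSpec w T (N : ℤ) (fun k => if kdot N L k = 1 then 1 else 0) ∨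
  (∃ b : ℕ, 1 ≤ b ∧ b < L ∧
    CartanSpec T (fun k => (if kdot N L k = (L : ℤ) - b + 1 then 1 else 0)
      - (if kdot N L k = (L : ℤ) - b then 1 else 0)))

open Function Finset

def HasLinearTail (f : ℕ → ℤ) (M : ℕ) : Prop := ∀ i ≥ M, f (i + 1) = f i - 1

namespace HasLinearTail

variable {f : ℕ → ℤ} {M : ℕ}

lemma apply_add (hf : HasLinearTail f M) {i : ℕ} (hi : M ≤ i) (t : ℕ) : f (i + t) = f i - t := by
  induction t with
  | zero => simp
  | succ t ih => rw [← add_assoc, hf _ (by omega), ih]; push_cast; ring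

lemma apply_eq (hf : HasLinearTail f M) {i j : ℕ} (hi : M ≤ i) (hj : M ≤ j) :
    f j = f i + i - j := by
  rcases le_total i j with h | h
  · obtain ⟨t, rfl⟩ := Nat.exists_eq_add_of_le h
    rw [hf.apply_add hi]; push_cast; ring
  · obtain ⟨t, rfl⟩ := Nat.exists_eq_add_of_le h
    rw [hf.apply_add hj]; push_cast; ring

lemma exists_apply_eq_add (hf : HasLinearTail f M) {j : ℕ} {d : ℤ} (hj : M + d.natAbs ≤ j) :
    ∃ p : ℕ, (p : ℤ) = j - d ∧ f p = f j + d :=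
  ⟨(j - d).toNat, by omega, by rw [hf.apply_eq (by omega : M ≤ j) (by omega)]; omega⟩

lemma mono (hf : HasLinearTail f M) {M' : ℕ} (h : M ≤ M') : HasLinearTail f M' :=
  fun i hi => hf i (h.trans hi)

lemma update (hf : HasLinearTail f M) (i : ℕ) (v : ℤ) :
    HasLinearTail (update f i v) (max M (i + 1)) := by
  intro x hx
  rw [update_of_ne (by omega), update_of_ne (by omega)]
  exact hf x (le_of_max_le_left hx)

lemma comp_swap (hf : HasLinearTail f M) (i : ℕ) :
    HasLinearTail (f ∘ Equiv.swap i (i + 1)) (max M (i + 2)) := by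
  intro x hx
  simp only [comp_apply]
  rw [Equiv.swap_apply_of_ne_of_ne (by omega) (by omega),
    Equiv.swap_apply_of_ne_of_ne (by omega) (by omega)]
  exact hf x (le_of_max_le_left hx)

end HasLinearTail

lemma WedgeIdx.hasLinearTail (b : WedgeIdx) : ∃ M, HasLinearTail b.1 M := b.2.2

def inversions (f : ℕ → ℤ) : Set (ℕ × ℕ) := {p | p.1 < p.2 ∧ f p.1 < f p.2}

lemma HasLinearTail.finite_inversions {f : ℕ → ℤ} {M : ℕ} (hf : HasLinearTail f M) :
    (inversions f).Finite := by
  refine ((Set.finite_lt_nat M).biUnion fun i _ =>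
    (Set.finite_singleton i).prod (Set.finite_lt_nat (M + (f M - f i).toNat))).subset ?_
  rintro ⟨i, j⟩ ⟨hij, hf_lt⟩
  dsimp only at hij hf_lt
  have hi : i < M := by
    by_contra! hi
    have := hf.apply_eq hi (by omega : M ≤ j)
    omega
  refine Set.mem_biUnion hi ⟨rfl, ?_⟩
  by_contra! hj
  simp only [Set.mem_ofPred_eq] at hj
  have := hf.apply_eq le_rfl (by omega : M ≤ j)
  omega

lemma ncard_inversions_comp_swap_lt {f : ℕ → ℤ} {M : ℕ} (hf : HasLinearTail f M) {i : ℕ}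
    (hi : f i < f (i + 1)) :
    (inversions (f ∘ Equiv.swap i (i + 1))).ncard < (inversions f).ncard := by
  set s := Equiv.swap i (i + 1)
  have hmem : (i, i + 1) ∈ inversions f := ⟨by omega, hi⟩
  have hpre : inversions (f ∘ s) = Prod.map s s ⁻¹' (inversions f \ {(i, i + 1)}) := by
    ext ⟨x, y⟩
    simp only [inversions, Set.mem_ofPred_eq, Set.mem_preimage, Prod.map, Set.mem_sdiff,
      Set.mem_singleton_iff, Prod.mk.injEq, comp_apply, s, Equiv.swap_apply_def]
    split_ifs <;> omega
  rw [hpre, Set.ncard_preimage_of_injective_subset_range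
    (Prod.map_injective.2 ⟨s.injective, s.injective⟩) (by simp [Set.range_eq_univ.2
      (Prod.map_surjective.2 ⟨s.surjective, s.surjective⟩)])]
  exact Set.ncard_sdiff_singleton_lt_of_mem hmem hf.finite_inversions

namespace WedgeSymbolSpec

variable {w : (ℕ → ℤ) → Fock}

lemma eq_zero_of_apply_eq (hw : WedgeSymbolSpec w) {f : ℕ → ℤ} {p q : ℕ} (hpq : p ≠ q)
    (h : f p = f q) : w f = 0 :=
  hw.1 f fun hinj => hpq (hinj h)

lemma comp_swap (hw : WedgeSymbolSpec w) (f : ℕ → ℤ) {a b : ℕ} (hab : a ≠ b) :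
    w (f ∘ Equiv.swap a b) = -w f := by
  wlog h : a < b generalizing a b
  · rw [Equiv.swap_comm]; exact this hab.symm (by omega)
  induction b, h using Nat.le_induction generalizing f with
  | base => exact hw.2.1 f a
  | succ b _ ih =>
    have hconj : Equiv.swap a (b + 1) =
        Equiv.swap b (b + 1) * Equiv.swap a b * Equiv.swap b (b + 1) := by
      have := Equiv.swap_apply_apply (Equiv.swap b (b + 1)) a b
      rwa [Equiv.swap_apply_of_ne_of_ne (by omega) (by omega), Equiv.swap_apply_left,
        Equiv.swap_inv] at this
    rw [hconj, Equiv.Perm.coe_mul, Equiv.Perm.coe_mul, ← comp_assoc, ← comp_assoc, hw.2.1,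
      ih _ (by omega), hw.2.1, neg_neg]

theorem exists_sort (hw : WedgeSymbolSpec w) {f : ℕ → ℤ} {M : ℕ} (hf : HasLinearTail f M)
    (hinj : Injective f) :
    ∃ (σ : Equiv.Perm ℕ) (ε : ℂ) (b : WedgeIdx), b.1 = f ∘ σ ∧ ∀ g, w g = ε • w (g ∘ σ) := by
  induction hn : (inversions f).ncard using Nat.strong_induction_on generalizing f M with
  | _ n ih =>
  by_cases hanti : StrictAnti f
  · exact ⟨1, 1, ⟨f, hanti, M, hf⟩, rfl, fun g => by simp⟩
  obtain ⟨i, hi⟩ : ∃ i, f i < f (i + 1) := by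
    by_contra! h
    refine hanti (strictAnti_nat_of_succ_lt fun i => (h i).lt_of_ne fun he => ?_)
    have := hinj he
    omega
  obtain ⟨σ, ε, b, hb, hσ⟩ := ih _ (hn ▸ ncard_inversions_comp_swap_lt hf hi)
    (hf.comp_swap i) (hinj.comp (Equiv.swap i (i + 1)).injective) rfl
  refine ⟨Equiv.swap i (i + 1) * σ, -ε, b, hb, fun g => ?_⟩
  rw [← neg_neg (w g), ← hw.2.1 g i, hσ, neg_smul]
  rfl

theorem exists_eq_smul_single (hw : WedgeSymbolSpec w) {f : ℕ → ℤ} {M : ℕ}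
    (hf : HasLinearTail f M) (hinj : Injective f) :
    ∃ (b : WedgeIdx) (ε : ℂ), w f = ε • Finsupp.single b 1 ∧ Set.range b.1 = Set.range f := by
  obtain ⟨σ, ε, b, hb, hσ⟩ := hw.exists_sort hf hinj
  exact ⟨b, ε, by rw [hσ f, ← hb, hw.2.2], by rw [hb, EquivLike.range_comp]⟩

lemma update_eq_zero_of_tail (hw : WedgeSymbolSpec w) {f : ℕ → ℤ} {M : ℕ}
    (hf : HasLinearTail f M) {d : ℤ} (hd : d ≠ 0) {i : ℕ} (hi : M + d.natAbs ≤ i) :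
    w (update f i (f i + d)) = 0 := by
  obtain ⟨p, hp, hfp⟩ := hf.exists_apply_eq_add hi
  refine hw.eq_zero_of_apply_eq (p := p) (q := i) (by omega) ?_
  rw [update_of_ne (by omega), update_self, hfp]

lemma finsum_update_eq_zero (hw : WedgeSymbolSpec w) {f : ℕ → ℤ} {p q : ℕ} (hpq : p ≠ q)
    (h : f p = f q) (d : ℤ) (c : ℤ → ℂ) :
    ∑ᶠ j, c (f j) • w (update f j (f j + d)) = 0 := by
  have hsupp : support (fun j => c (f j) • w (update f j (f j + d))) ⊆ ({p, q} : Finset ℕ) := by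
    intro j hj
    by_contra hjpq
    simp only [coe_insert, coe_singleton, Set.mem_insert_iff, Set.mem_singleton_iff,
      not_or] at hjpq
    refine hj ?_
    dsimp only
    rw [hw.eq_zero_of_apply_eq hpq (by rw [update_of_ne (Ne.symm hjpq.1),
      update_of_ne (Ne.symm hjpq.2), h]), smul_zero]
  have hswap : update f p (f p + d) = update f q (f q + d) ∘ Equiv.swap p q := by
    funext x
    simp only [comp_apply, update_apply, Equiv.swap_apply_def]
    split_ifs <;> simp_all
  rw [finsum_eq_finsetSum_of_support_subset _ hsupp, sum_pair hpq, hswap, hw.comp_swap _ hpq, h,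
    smul_neg, neg_add_cancel]

end WedgeSymbolSpec

namespace DiagSpec

variable {w : (ℕ → ℤ) → Fock} {T : Fock →ₗ[ℂ] Fock} {d : ℤ} {c : ℤ → ℂ}

theorem apply_wedge (hT : DiagSpec w T d c) (hw : WedgeSymbolSpec w) {f : ℕ → ℤ} {M : ℕ}
    (hf : HasLinearTail f M) :
    T (w f) = ∑ᶠ j, c (f j) • w (update f j (f j + d)) := by
  by_cases hinj : Injective f
  · obtain ⟨σ, ε, b, hb, hσ⟩ := hw.exists_sort hf hinj
    have hupd : ∀ i v, update (f ∘ σ) i v = update f (σ i) v ∘ σ := fun i v => by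
      rw [update_comp_equiv, Equiv.symm_apply_apply]
    calc T (w f) = ε • T (Finsupp.single b 1) := by rw [hσ f, ← hb, hw.2.2 b, map_smul]
    _ = ∑ᶠ i, ε • (c (b.1 i) • w (update b.1 i (b.1 i + d))) := by rw [hT b, smul_finsum]
    _ = ∑ᶠ i, c (f (σ i)) • w (update f (σ i) (f (σ i) + d)) := finsum_congr fun i => by
          rw [hb, comp_apply, hupd, smul_comm, ← hσ]
    _ = _ := finsum_comp_equiv σ (f := fun j => c (f j) • w (update f j (f j + d)))
  · obtain ⟨p, q, h, hpq⟩ : ∃ p q, f p = f q ∧ p ≠ q := by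
      simpa [Injective] using hinj
    rw [hw.1 f hinj, map_zero, hw.finsum_update_eq_zero hpq h]

theorem apply_wedge_eq_sum (hT : DiagSpec w T d c) (hw : WedgeSymbolSpec w) {f : ℕ → ℤ}
    {M : ℕ} (hf : HasLinearTail f M) (hd : d ≠ 0) {R : ℕ} (hR : M + d.natAbs ≤ R) :
    T (w f) = ∑ j ∈ range R, c (f j) • w (update f j (f j + d)) := by
  rw [hT.apply_wedge hw hf]
  refine finsum_eq_finsetSum_of_support_subset _ fun j hj => ?_
  by_contra hjR
  simp only [coe_range, Set.mem_Iio, not_lt] at hjR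
  refine hj ?_
  dsimp only
  rw [hw.update_eq_zero_of_tail hf hd (hR.trans hjR), smul_zero]

end DiagSpec

def composedTerm (w : (ℕ → ℤ) → Fock) (d₁ : ℤ) (c₁ : ℤ → ℂ) (d₂ : ℤ) (c₂ : ℤ → ℂ)
    (f : ℕ → ℤ) (i j : ℕ) : Fock :=
  (c₂ (f i) * c₁ (update f i (f i + d₂) j)) •
    w (update (update f i (f i + d₂)) j (update f i (f i + d₂) j + d₁))

lemma composedTerm_comm {w : (ℕ → ℤ) → Fock} {d₁ d₂ : ℤ} {c₁ c₂ : ℤ → ℂ}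
    (hc : ∀ k, c₂ k * c₁ (k + d₂) = c₁ k * c₂ (k + d₁)) (f : ℕ → ℤ) (i j : ℕ) :
    composedTerm w d₁ c₁ d₂ c₂ f i j = composedTerm w d₂ c₂ d₁ c₁ f j i := by
  unfold composedTerm
  rcases eq_or_ne i j with rfl | hij
  · rw [update_self, update_self, update_idem, update_idem, hc, add_right_comm]
  · rw [update_of_ne hij.symm, update_of_ne hij, update_comm hij, mul_comm]

lemma WedgeSymbolSpec.update_update_of_tail {w : (ℕ → ℤ) → Fock} (hw : WedgeSymbolSpec w)
    (b : WedgeIdx) {M : ℕ} (hM : HasLinearTail b.1 M) {d₁ d₂ : ℤ} (hd₁ : d₁ ≠ 0) (hd₂ : d₂ ≠ 0)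
    {i j : ℕ} (hij : i < j) (hj : M + d₁.natAbs + d₂.natAbs ≤ j) :
    w (update (update b.1 i (b.1 i + d₂)) j (b.1 j + d₁)) =
      if d₁ + d₂ = 0 ∧ (i : ℤ) + d₁ = j then -Finsupp.single b 1 else 0 := by
  split_ifs with h
  · have hb := hM.apply_eq (by omega : M ≤ i) (by omega : M ≤ j)
    have hswap : update (update b.1 i (b.1 i + d₂)) j (b.1 j + d₁) = b.1 ∘ Equiv.swap i j := by
      funext x
      simp only [comp_apply, update_apply, Equiv.swap_apply_def]
      split_ifs <;> subst_vars <;> omega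
    rw [hswap, hw.comp_swap _ hij.ne, hw.2.2]
  by_cases hij' : (i : ℤ) + d₁ = j
  · obtain ⟨q, hq, hbq⟩ := hM.exists_apply_eq_add (j := i) (d := d₂) (by omega)
    refine hw.eq_zero_of_apply_eq (p := q) (q := i) (by omega) ?_
    simp only [update_apply]
    split_ifs <;> omega
  · obtain ⟨p, hp, hbp⟩ := hM.exists_apply_eq_add (j := j) (d := d₁) (by omega)
    refine hw.eq_zero_of_apply_eq (p := p) (q := j) (by omega) ?_
    simp only [update_apply]
    split_ifs <;> omega

lemma sum_range_sum_Ico_ite {A : Type*} [AddCommMonoid A] {K : ℕ} {d : ℤ} (hd : d.natAbs ≤ K)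
    (x : A) :
    ∑ i ∈ range K, ∑ j ∈ Ico K (K + d.natAbs), (if (i : ℤ) + d = j then x else 0) =
      (if 0 < d then d.natAbs else 0) • x := by
  rw [sum_comm]
  split_ifs with hd0
  · rw [sum_congr rfl (g := fun _ => x) fun j hj => ?_, sum_const, Nat.card_Ico,
      Nat.add_sub_cancel_left]
    rw [mem_Ico] at hj
    rw [sum_eq_single_of_mem (j - d.natAbs) (mem_range.2 (by omega))
      fun i _ hi => if_neg (by omega), if_pos (by omega)]
  · rw [zero_smul]
    exact sum_eq_zero fun j hj => sum_eq_zero fun i hi => if_neg (by simp at hi hj; omega)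

lemma sum_sum_composedTerm_comm {w : (ℕ → ℤ) → Fock} {d₁ d₂ : ℤ} {c₁ c₂ : ℤ → ℂ}
    (hc : ∀ k, c₂ k * c₁ (k + d₂) = c₁ k * c₂ (k + d₁)) (f : ℕ → ℤ) (K : ℕ) :
    ∑ i ∈ range K, ∑ j ∈ range K, composedTerm w d₁ c₁ d₂ c₂ f i j =
      ∑ i ∈ range K, ∑ j ∈ range K, composedTerm w d₂ c₂ d₁ c₁ f i j := by
  rw [sum_comm]
  exact sum_congr rfl fun i _ => sum_congr rfl fun j _ => composedTerm_comm hc f j i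

namespace DiagSpec

variable {w : (ℕ → ℤ) → Fock} {T₁ T₂ : Fock →ₗ[ℂ] Fock} {d₁ d₂ : ℤ} {c₁ c₂ : ℤ → ℂ}

theorem apply_apply_wedge (hT₁ : DiagSpec w T₁ d₁ c₁) (hT₂ : DiagSpec w T₂ d₂ c₂)
    (hw : WedgeSymbolSpec w) (hd₁ : d₁ ≠ 0) (hd₂ : d₂ ≠ 0) {f : ℕ → ℤ} {M : ℕ}
    (hf : HasLinearTail f M) {K : ℕ} (hK : M + d₂.natAbs ≤ K) :
    T₁ (T₂ (w f)) =
      ∑ i ∈ range K, ∑ j ∈ range (K + d₁.natAbs), composedTerm w d₁ c₁ d₂ c₂ f i j := by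
  rw [hT₂.apply_wedge_eq_sum hw hf hd₂ hK, map_sum]
  refine sum_congr rfl fun i hi => ?_
  rw [map_smul, hT₁.apply_wedge_eq_sum hw ((hf.update i _).mono (M' := K)
    (max_le (by omega) (mem_range.1 hi))) hd₁ le_rfl, smul_sum]
  simp only [smul_smul, composedTerm]

theorem apply_apply_single (hT₁ : DiagSpec w T₁ d₁ c₁) (hT₂ : DiagSpec w T₂ d₂ c₂)
    (hw : WedgeSymbolSpec w) (hd₁ : d₁ ≠ 0) (hd₂ : d₂ ≠ 0) (b : WedgeIdx) {M : ℕ}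
    (hM : HasLinearTail b.1 M) {K : ℕ} (hK : M + d₁.natAbs + d₂.natAbs ≤ K) :
    T₁ (T₂ (Finsupp.single b 1)) =
      ∑ i ∈ range K, ∑ j ∈ range K, composedTerm w d₁ c₁ d₂ c₂ b.1 i j +
      ∑ i ∈ range K, ∑ j ∈ Ico K (K + d₁.natAbs), (c₂ (b.1 i) * c₁ (b.1 j)) •
        if d₁ + d₂ = 0 ∧ (i : ℤ) + d₁ = j then -Finsupp.single b 1 else 0 := by
  conv_lhs => rw [← hw.2.2 b, hT₁.apply_apply_wedge hT₂ hw hd₁ hd₂ hM (by omega : _ ≤ K)]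
  rw [← sum_add_distrib]
  refine sum_congr rfl fun i hi => ?_
  rw [← sum_range_add_sum_Ico _ (Nat.le_add_right K _)]
  refine congrArg _ (sum_congr rfl fun j hj => ?_)
  rw [mem_range] at hi
  rw [mem_Ico] at hj
  rw [composedTerm, update_of_ne (by omega),
    hw.update_update_of_tail b hM hd₁ hd₂ (by omega) (by omega)]

theorem comp_comm (hT₁ : DiagSpec w T₁ d₁ c₁) (hT₂ : DiagSpec w T₂ d₂ c₂)
    (hw : WedgeSymbolSpec w) (hd₁ : d₁ ≠ 0) (hd₂ : d₂ ≠ 0) (hsum : d₁ + d₂ ≠ 0)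
    (hc : ∀ k, c₂ k * c₁ (k + d₂) = c₁ k * c₂ (k + d₁)) :
    T₁ ∘ₗ T₂ = T₂ ∘ₗ T₁ := by
  refine Finsupp.lhom_ext' fun b => LinearMap.ext_ring ?_
  obtain ⟨M, hM⟩ := b.hasLinearTail
  simp only [LinearMap.comp_apply, Finsupp.lsingle_apply]
  rw [hT₁.apply_apply_single hT₂ hw hd₁ hd₂ b hM le_rfl,
    hT₂.apply_apply_single hT₁ hw hd₂ hd₁ b hM (K := M + d₁.natAbs + d₂.natAbs) (by omega)]
  simp only [hsum, add_comm d₂ d₁, false_and, if_false, smul_zero, sum_const_zero, add_zero]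
  exact sum_sum_composedTerm_comm hc b.1 _

theorem comp_sub_comp (hT₁ : DiagSpec w T₁ d₁ fun _ => 1) (hT₂ : DiagSpec w T₂ (-d₁) fun _ => 1)
    (hw : WedgeSymbolSpec w) (hd₁ : d₁ ≠ 0) :
    T₁ ∘ₗ T₂ - T₂ ∘ₗ T₁ = ((-d₁ : ℤ) : ℂ) • LinearMap.id := by
  refine Finsupp.lhom_ext' fun b => LinearMap.ext_ring ?_
  obtain ⟨M, hM⟩ := b.hasLinearTail
  have hd₂ : -d₁ ≠ 0 := neg_ne_zero.2 hd₁
  simp only [LinearMap.comp_apply, LinearMap.sub_apply, LinearMap.smul_apply,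
    LinearMap.id_apply, Finsupp.lsingle_apply]
  rw [hT₁.apply_apply_single hT₂ hw hd₁ hd₂ b hM le_rfl,
    hT₂.apply_apply_single hT₁ hw hd₂ hd₁ b hM (K := M + d₁.natAbs + (-d₁).natAbs) (by omega),
    sum_sum_composedTerm_comm (d₂ := -d₁) (c₁ := fun _ => 1) (c₂ := fun _ => 1)
      (fun _ => rfl), add_sub_add_left_eq_sub]
  simp only [one_mul, one_smul, add_neg_cancel, neg_add_cancel, true_and]
  rw [sum_range_sum_Ico_ite (by omega), sum_range_sum_Ico_ite (d := -d₁) (by omega),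
    Int.natAbs_neg]
  rcases hd₁.lt_or_gt with h | h
  · rw [if_neg h.not_gt, if_pos (neg_pos.2 h), zero_smul, zero_sub, smul_neg, neg_neg,
      ← Nat.cast_smul_eq_nsmul ℂ, ← Int.cast_natCast, (by omega : (d₁.natAbs : ℤ) = -d₁)]
  · rw [if_pos h, if_neg (neg_neg_of_pos h).not_gt, zero_smul, sub_zero, smul_neg,
      ← Nat.cast_smul_eq_nsmul ℂ, ← neg_smul, ← Int.cast_natCast, ← Int.cast_neg, (by omega : -(d₁.natAbs : ℤ) = -d₁)]

end DiagSpec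

def chargeOf (c : ℤ → ℂ) (S : Set ℤ) : ℂ :=
  (∑ᶠ k ∈ {k : ℤ | 0 < k ∧ k ∈ S}, c k) - ∑ᶠ k ∈ {k : ℤ | k ≤ 0 ∧ k ∉ S}, c k

lemma chargeOf_insert (c : ℤ → ℂ) {S : Set ℤ} {x : ℤ} (hx : x ∉ S)
    (hpos : {k : ℤ | 0 < k ∧ k ∈ S}.Finite) (hneg : {k : ℤ | k ≤ 0 ∧ k ∉ insert x S}.Finite) :
    chargeOf c (insert x S) = chargeOf c S + c x := by
  unfold chargeOf
  rcases lt_or_ge 0 x with h | h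
  · have h₁ : {k : ℤ | 0 < k ∧ k ∈ insert x S} = insert x {k | 0 < k ∧ k ∈ S} := by
      ext k; simp only [Set.mem_insert_iff, Set.mem_ofPred_eq]; grind
    have h₂ : {k : ℤ | k ≤ 0 ∧ k ∉ insert x S} = {k | k ≤ 0 ∧ k ∉ S} := by
      ext k; simp only [Set.mem_insert_iff, Set.mem_ofPred_eq]; grind
    rw [h₁, h₂, finsum_mem_insert _ (fun h' => hx h'.2) hpos]
    ring
  · have h₁ : {k : ℤ | 0 < k ∧ k ∈ insert x S} = {k | 0 < k ∧ k ∈ S} := by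
      ext k; simp only [Set.mem_insert_iff, Set.mem_ofPred_eq]; grind
    have h₂ : {k : ℤ | k ≤ 0 ∧ k ∉ S} = insert x {k | k ≤ 0 ∧ k ∉ insert x S} := by
      ext k; simp only [Set.mem_insert_iff, Set.mem_ofPred_eq]; grind
    rw [h₁, h₂, finsum_mem_insert _ (fun h' => h'.2 (Set.mem_insert x S)) hneg]
    ring

lemma chargeOf_insert_sdiff (c : ℤ → ℂ) {S : Set ℤ} {x y : ℤ} (hx : x ∈ S) (hy : y ∉ S)
    (hpos : {k : ℤ | 0 < k ∧ k ∈ S}.Finite) (hneg : {k : ℤ | k ≤ 0 ∧ k ∉ S}.Finite) :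
    chargeOf c (insert y (S \ {x})) = chargeOf c S - c x + c y := by
  have hpos' : {k : ℤ | 0 < k ∧ k ∈ S \ {x}}.Finite := hpos.subset fun k hk => ⟨hk.1, hk.2.1⟩
  have hS : chargeOf c S = chargeOf c (S \ {x}) + c x := by
    conv_lhs => rw [← Set.insert_eq_of_mem hx, ← Set.insert_sdiff_singleton]
    refine chargeOf_insert c (fun h => h.2 rfl) hpos' ?_
    rwa [Set.insert_sdiff_singleton, Set.insert_eq_of_mem hx]
  rw [chargeOf_insert c (fun h => hy h.1) hpos', hS]
  · ring
  · refine (hneg.insert x).subset fun k ⟨hk, hkS⟩ => ?_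
    by_cases hkx : k = x
    · exact .inl hkx
    · exact .inr ⟨hk, fun h => hkS (.inr ⟨h, hkx⟩)⟩

lemma range_update_of_injective {α β : Type*} [DecidableEq α] {f : α → β} (hf : Injective f)
    (i : α) (v : β) : Set.range (update f i v) = insert v (Set.range f \ {f i}) := by
  ext k
  simp only [Set.mem_range, Set.mem_insert_iff, Set.mem_sdiff, Set.mem_singleton_iff,
    update_apply]
  constructor
  · rintro ⟨p, hp⟩
    split_ifs at hp with h
    · exact .inl hp.symm
    · exact .inr ⟨⟨p, hp⟩, fun h' => h (hf (hp.trans h'))⟩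
  · rintro (rfl | ⟨⟨p, rfl⟩, hp⟩)
    · exact ⟨i, if_pos rfl⟩
    · exact ⟨p, if_neg fun h => hp (congrArg f h)⟩

namespace WedgeIdx

lemma finite_setOf_pos_mem_range (b : WedgeIdx) : {k : ℤ | 0 < k ∧ k ∈ Set.range b.1}.Finite := by
  have hle : ∀ i : ℕ, b.1 i ≤ b.1 0 - i := fun i => by
    induction i with
    | zero => simp
    | succ i ih => have := b.2.1 (Nat.lt_add_one i); push_cast; omega
  refine ((Set.finite_lt_nat (b.1 0).toNat).image b.1).subset ?_
  rintro k ⟨hk, i, rfl⟩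
  exact ⟨i, by have := hle i; simp only [Set.mem_ofPred_eq]; omega, rfl⟩

lemma finite_setOf_nonpos_notMem_range (b : WedgeIdx) :
    {k : ℤ | k ≤ 0 ∧ k ∉ Set.range b.1}.Finite := by
  obtain ⟨M, hM⟩ := b.hasLinearTail
  refine (Set.finite_Ioc (b.1 M) 0).subset fun k ⟨hk, hkb⟩ => ⟨?_, hk⟩
  by_contra! h
  exact hkb ⟨M + (b.1 M - k).toNat, by rw [hM.apply_eq le_rfl (by omega)]; omega⟩

end WedgeIdx

namespace CartanSpec

variable {w : (ℕ → ℤ) → Fock} {T : Fock →ₗ[ℂ] Fock} {c : ℤ → ℂ}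

lemma apply_single (hT : CartanSpec T c) (b : WedgeIdx) :
    T (Finsupp.single b 1) = chargeOf c (Set.range b.1) • Finsupp.single b 1 :=
  hT b

theorem apply_wedge_update (hT : CartanSpec T c) (hw : WedgeSymbolSpec w) (b : WedgeIdx)
    {d : ℤ} (hd : d ≠ 0) (hc : Periodic c d) (i : ℕ) :
    T (w (update b.1 i (b.1 i + d))) =
      chargeOf c (Set.range b.1) • w (update b.1 i (b.1 i + d)) := by
  obtain ⟨M, hM⟩ := b.hasLinearTail
  by_cases hinj : Injective (update b.1 i (b.1 i + d))
  · obtain ⟨b', ε, hwb', hrange⟩ := hw.exists_eq_smul_single (hM.update i _) hinj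
    have hnew : b.1 i + d ∉ Set.range b.1 := by
      rintro ⟨p, hp⟩
      have hpi : p ≠ i := by rintro rfl; omega
      exact hpi (hinj (by rw [update_of_ne hpi, update_self, hp]))
    have hcharge : chargeOf c (Set.range b'.1) = chargeOf c (Set.range b.1) := by
      rw [hrange, range_update_of_injective b.2.1.injective,
        chargeOf_insert_sdiff c (Set.mem_range_self i) hnew b.finite_setOf_pos_mem_range
          b.finite_setOf_nonpos_notMem_range, hc]
      ring
    rw [hwb', map_smul, hT.apply_single, hcharge, smul_comm]
  · rw [hw.1 _ hinj, map_zero, smul_zero]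

theorem comp_comm (hT : CartanSpec T c) {B : Fock →ₗ[ℂ] Fock} {d : ℤ} {c' : ℤ → ℂ}
    (hB : DiagSpec w B d c') (hw : WedgeSymbolSpec w) (hd : d ≠ 0) (hc : Periodic c d) :
    T ∘ₗ B = B ∘ₗ T := by
  refine Finsupp.lhom_ext' fun b => LinearMap.ext_ring ?_
  obtain ⟨M, hM⟩ := b.hasLinearTail
  simp only [LinearMap.comp_apply, Finsupp.lsingle_apply]
  rw [hT.apply_single, map_smul, ← hw.2.2 b, hB.apply_wedge_eq_sum hw hM hd le_rfl, map_sum,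
    smul_sum]
  exact sum_congr rfl fun i _ => by rw [map_smul, hT.apply_wedge_update hw b hd hc, smul_comm]

end CartanSpec

lemma periodic_kbar {N : ℕ} {p : ℤ} (hp : (N : ℤ) ∣ p) : Periodic (kbar N) p := by
  obtain ⟨t, rfl⟩ := hp
  intro k
  simp only [kbar, add_sub_right_comm, Int.add_mul_emod_self_left]

lemma periodic_kdot {N L : ℕ} {p : ℤ} (hp : (N * L : ℤ) ∣ p) : Periodic (kdot N L) p := by
  obtain ⟨t, rfl⟩ := hp
  intro k
  rcases eq_or_ne (N : ℤ) 0 with hN | hN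
  · simp [hN]
  unfold kdot
  rw [periodic_kbar (Dvd.intro (L * t) (mul_assoc _ _ _).symm) k,
    show kbar N k - (k + N * L * t) = kbar N k - k + N * (-(L * t)) by ring,
    Int.add_mul_ediv_left _ _ hN,
    show (kbar N k - k) / N + -(L * t) - 1 = (kbar N k - k) / N - 1 + L * (-t) by ring,
    Int.add_mul_emod_self_left]

lemma add_neg_mul_ne_zero {P d m : ℤ} (hd : |d| < P) (hm : m ≠ 0) : d + -(P * m) ≠ 0 := by
  intro h
  have hP := (abs_nonneg d).trans_lt hd
  have hPm : |P * m| = P * |m| := by rw [abs_mul, abs_of_pos hP]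
  have := Int.one_le_abs hm
  rw [show d = P * m by linarith, hPm] at hd
  nlinarith

theorem comp_comm_of_isSlNGen_or_isSlLGen {N L : ℕ} (hN : 2 ≤ N) (hL : 2 ≤ L) {w : (ℕ → ℤ) → Fock}
    (hw : WedgeSymbolSpec w) {T B : Fock →ₗ[ℂ] Fock} (hT : IsSlNGen N L w T ∨ IsSlLGen N L w T)
    {m : ℤ} (hm : m ≠ 0) (hB : DiagSpec w B (-(N * L * m)) fun _ => 1) :
    T ∘ₗ B = B ∘ₗ T := by
  have hdB : -((N : ℤ) * L * m) ≠ 0 := neg_ne_zero.2 (mul_ne_zero (by positivity) hm)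
  have hNL : (N : ℤ) + 2 ≤ N * L := by nlinarith
  have shift : ∀ {d : ℤ} {c : ℤ → ℂ}, DiagSpec w T d c → d ≠ 0 → -(N * L : ℤ) < d →
      d < N * L → Periodic c (-(N * L * m)) → T ∘ₗ B = B ∘ₗ T :=
    fun hTd hd hlo hhi hc => hTd.comp_comm hB hw hd hdB
      (add_neg_mul_ne_zero (abs_lt.2 ⟨hlo, hhi⟩) hm) fun k => by rw [one_mul, mul_one, hc]
  have hkbar : Periodic (kbar N) (-(N * L * m)) := periodic_kbar ⟨-(L * m), by ring⟩
  have hkdot : Periodic (kdot N L) (-(N * L * m)) := periodic_kdot ⟨-m, by ring⟩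
  rcases hT with (⟨t, -, -, hTd⟩ | ⟨t, -, -, hTd⟩ | hTd | hTd | ⟨t, -, -, hTd⟩) |
    (⟨s, -, hTd⟩ | ⟨s, -, -, hTd⟩ | hTd | ⟨s, -, -, hTd⟩)
  all_goals first
    | exact hTd.comp_comm hB hw hdB fun k => by simp only [hkbar k, hkdot k]
    | exact shift hTd (by omega) (by omega) (by omega) fun k => by simp only [hkbar k, hkdot k]

/-- (well-definedness) the prescription
`B(m)·(u_{k_1}∧u_{k_2}∧⋯) = Σ_i u_{k_1}∧⋯∧(u_{k_i − NLm})∧⋯` defines linear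
operators on `F`; any operators `B(m)` so defined satisfy the Heisenberg relations
`[B(m), B(n)] = LN·m·δ_{m+n,0}·1`; and they commute with all generators of the
`sl_L^`- and `sl_N^`-actions on `F`. -/
theorem statement_8 (N L : ℕ) (hN : 2 ≤ N) (hL : 2 ≤ L)
    (w : (ℕ → ℤ) → Fock) (hw : WedgeSymbolSpec w)
    (B : ℤ → Fock →ₗ[ℂ] Fock)
    (hB : ∀ m : ℤ, m ≠ 0 → DiagSpec w (B m) (-(N * L * m)) (fun _ => 1)) :
    (∀ m : ℤ, m ≠ 0 → ∃ T : Fock →ₗ[ℂ] Fock,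
        DiagSpec w T (-(N * L * m)) (fun _ => 1)) ∧
    (∀ m n : ℤ, m ≠ 0 → n ≠ 0 →
        B m ∘ₗ B n - B n ∘ₗ B m
          = (if m + n = 0 then ((L : ℂ) * N * m) else 0) • LinearMap.id) ∧
    (∀ T : Fock →ₗ[ℂ] Fock, IsSlNGen N L w T ∨ IsSlLGen N L w T →
        ∀ m : ℤ, m ≠ 0 → T ∘ₗ B m = B m ∘ₗ T) := by
  have hNL : (N : ℤ) * L ≠ 0 := mul_ne_zero (by omega) (by omega)
  have hdB : ∀ m : ℤ, m ≠ 0 → -((N : ℤ) * L * m) ≠ 0 :=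
    fun m hm => neg_ne_zero.2 (mul_ne_zero hNL hm)
  refine ⟨fun m hm => ⟨B m, hB m hm⟩, fun m n hm hn => ?_,
    fun T hT m hm => comp_comm_of_isSlNGen_or_isSlLGen hN hL hw hT hm (hB m hm)⟩
  split_ifs with hmn
  · obtain rfl : n = -m := by omega
    rw [(hB m hm).comp_sub_comp (by convert hB (-m) hn using 2; ring) hw (hdB m hm)]
    congr 1
    push_cast
    ring
  · rw [zero_smul]
    refine sub_eq_zero.2 ((hB m hm).comp_comm (hB n hn) hw (hdB m hm) (hdB n hn) ?_ fun _ => rfl)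
    rw [← neg_add, ← mul_add]
    exact neg_ne_zero.2 (mul_ne_zero hNL (by omega))

end FockB

end
end

section
/- Let r = a − Lλ ∈ R_0 be a non-decreasing integer sequence with a a weight-0 spin configuration, and let η = γ_λ(λ), w = w_{γ_λ(a)}, b = γ_λ(a). Then r is regular (i.e. (ζ_0, α) ∉ {−1,0,1} for every α ∈ S(x_r)) if and only if (1) the path p(b) is dominant, and (2) for each pair 1 ≤ i < j ≤ n with b_i = 1, b_j = L and #{k ≤ i : b_k = 1} = #{k ≤ j : b_k = L}, one has η_j − η_i ∈ {0,1}. -/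
noncomputable section

/-!
Regularity of elements of the affine Weyl group (Lemma on regular sequences).
Fix `L ≥ 2`, `m ≥ 1`, `n = Lm`.  A sequence `r = a − Lλ ∈ R_0` is given by a
weight-0 spin configuration `a : Fin n → {1,…,L}` (each value occurring `m`
times) and `λ : Fin n → ℤ` with `r` non-decreasing.  `γ_λ ∈ S_n` is the shortest
permutation with `γ_λ(λ)` antidominant (non-decreasing as a coordinate sequence),
`w_b ∈ W̄^β` is the element attached to the spin configuration `b = γ_λ(a)`
(characterized by `b(w_b(j)) = block(j)` and increasing rows), `η = γ_λ(λ)`,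
and `x_r = t_λ·γ_λ^{-1}·w_{γ_λ(a)}`, with finite part `σ = γ_λ^{-1}·w_b`.
`x_r` sends the affine root `ε_i − ε_j + kδ` to
`ε_{σ(i)} − ε_{σ(j)} + (k − λ_{σ(i)} + λ_{σ(j)})δ`, and the pairing of
`ζ_0 = Lc* + Σ_a Σ_{i ∈ block a} (i − a − am)ε_i` with `ε_i − ε_j + kδ` is
`c0_i − c0_j + kL`.  Regularity means this pairing avoids `{−1,0,1}` on
`S(x_r) = R_+ ∩ x_r^{-1}(R_-)`.
-/

namespace RegSeq

variable (L m : ℕ)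

/-- The coefficient of `ε_i` in `ζ_0` (for `κ = L`, `ν(a) = a`):
`i − a − am` for `i` in the (1-based) block `a` (here `i : Fin (L*m)` 0-based,
whose block is `i/m + 1`). -/
def c0 (i : Fin (L * m)) : ℤ :=
  (i.1 + 1 : ℤ) - ((i.1 / m : ℕ) + 1 : ℤ) - ((i.1 / m : ℕ) + 1 : ℤ) * m

/-- Positivity of the affine root `ε_i − ε_j + kδ` (with `i ≠ j`). -/
def PosRoot (i j : Fin (L * m)) (k : ℤ) : Prop := 0 < k ∨ (k = 0 ∧ i < j)

/-- The number of inversions (= length) of a permutation. -/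
def invCount (w : Equiv.Perm (Fin (L * m))) : ℕ :=
  (Finset.univ.filter
    (fun p : Fin (L * m) × Fin (L * m) => p.1 < p.2 ∧ w p.2 < w p.1)).card


/-!
Write `b = γ(a)` and `η = γ(λ)`. As `a − Lλ` is non-decreasing with letters in `[1, L]`, `λ` is
antitone, and a shortest sorting permutation `γ` is stable (transposing an out-of-order pair with
equal `λ` would remove an inversion), so `b` is non-decreasing wherever `η` is constant. The
index `j = cm + s` stands for the `s`-th letter `c + 1` of `b`, which sits at `w_b(j)`, and
`ζ_0` pairs with `ε_i − ε_j + kδ` to `(s_i − c_i) − (s_j − c_j) + kL`.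

If the path is not dominant, the `q`-th letter `c + 1` precedes the `q`-th letter `c` for some
`q`; their `η`-values differ, giving a root with `k = 0` that pairs to `1`. If a matched pair
(the `s`-th letter `1` and the `s`-th letter `L`) has `η`-gap at least `2`, the root
`ε_{(L−1)m+s} − ε_s + δ` pairs to `1`.

Conversely, by stability no root of `S(x_r)` is sent to a root without `δ`-part. On a dominant
path a root of `S(x_r)` with `k = 0` is an inversion of `w_b` across blocks, and pairs to at
least `2`. One with `k ≥ 1` has `η(w_b(i)) − η(w_b(j)) > k`, and a pairing in `{−1, 0, 1}` forces
`s_i ≤ s_j`; dominance then places a matched pair around `w_b(j) < w_b(i)`, whose `η`-gap is at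
most `1`.
-/

section Counting

variable {n : ℕ}

def countLE (b : Fin n → ℕ) (c : ℕ) (i : Fin n) : ℕ :=
  (Finset.univ.filter fun t => t ≤ i ∧ b t = c).card

def countLT (b : Fin n → ℕ) (c : ℕ) (i : Fin n) : ℕ :=
  (Finset.univ.filter fun t => t < i ∧ b t = c).card

variable {b : Fin n → ℕ} {c : ℕ}

theorem countLE_eq_countLT_add_one {i : Fin n} (h : b i = c) :
    countLE b c i = countLT b c i + 1 := by
  have hins : (Finset.univ.filter fun t => t ≤ i ∧ b t = c)
      = insert i (Finset.univ.filter fun t => t < i ∧ b t = c) := by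
    ext t
    simp only [Finset.mem_filter, Finset.mem_univ, true_and, Finset.mem_insert, le_iff_lt_or_eq]
    constructor
    · rintro ⟨ht | rfl, hb⟩
      exacts [Or.inr ⟨ht, hb⟩, Or.inl rfl]
    · rintro (rfl | ⟨ht, hb⟩)
      exacts [⟨Or.inr rfl, h⟩, ⟨Or.inl ht, hb⟩]
  rw [countLE, hins, Finset.card_insert_of_notMem (by simp), countLT]

theorem countLE_mono (b : Fin n → ℕ) (c : ℕ) : Monotone (countLE b c) := fun _ _ hij =>
  Finset.card_le_card fun _ ht => by
    simp only [Finset.mem_filter, Finset.mem_univ, true_and] at ht ⊢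
    exact ⟨ht.1.trans hij, ht.2⟩

theorem countLE_le_countLT {t u : Fin n} (h : t < u) : countLE b c t ≤ countLT b c u :=
  Finset.card_le_card fun _ hs => by
    simp only [Finset.mem_filter, Finset.mem_univ, true_and] at hs ⊢
    exact ⟨hs.1.trans_lt h, hs.2⟩

theorem countLT_eq_countLE_of_val_add_one {t u : Fin n} (h : t.1 + 1 = u.1) :
    countLT b c u = countLE b c t := by
  unfold countLE countLT
  congr 1
  ext s
  simp only [Finset.mem_filter, Finset.mem_univ, true_and, Fin.lt_def, Fin.le_def]
  omega

theorem le_iff_countLT_lt_countLE {t i : Fin n} (ht : b t = c) :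
    t ≤ i ↔ countLT b c t < countLE b c i := by
  rw [← not_lt, iff_comm, ← not_le, not_iff_not]
  refine ⟨fun h => ?_, fun h => countLE_le_countLT h⟩
  by_contra hti
  have := countLE_mono b c (not_lt.1 hti)
  rw [countLE_eq_countLT_add_one ht] at this
  omega

theorem eq_of_countLT_eq {t u : Fin n} (ht : b t = c) (hu : b u = c)
    (h : countLT b c t = countLT b c u) : t = u := by
  refine le_antisymm ((le_iff_countLT_lt_countLE ht).2 ?_) ((le_iff_countLT_lt_countLE hu).2 ?_)
  · rw [countLE_eq_countLT_add_one hu]; omega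
  · rw [countLE_eq_countLT_add_one ht]; omega

def IsDominantPath (L : ℕ) (b : Fin n → ℕ) : Prop :=
  ∀ (i : Fin n) (c : ℕ), 1 ≤ c → c < L → countLE b (c + 1) i ≤ countLE b c i

theorem IsDominantPath.countLE_le {L : ℕ} (hb : IsDominantPath L b) (i : Fin n) {c c' : ℕ}
    (hc : 1 ≤ c) (hcc' : c ≤ c') (hc' : c' ≤ L) : countLE b c' i ≤ countLE b c i := by
  induction c', hcc' using Nat.le_induction with
  | base => exact le_rfl
  | succ k hk ih => exact (hb i k (hc.trans hk) hc').trans (ih (by omega))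

theorem IsDominantPath.countLT_le {L : ℕ} (hb : IsDominantPath L b) (u : Fin n) {c c' : ℕ}
    (hc : 1 ≤ c) (hcc' : c ≤ c') (hc' : c' ≤ L) : countLT b c' u ≤ countLT b c u := by
  obtain ⟨_ | t, hu⟩ := u
  · simp [countLT, Fin.lt_def]
  · have ht : t < n := by omega
    rw [countLT_eq_countLE_of_val_add_one (t := ⟨t, ht⟩) rfl,
      countLT_eq_countLE_of_val_add_one (t := ⟨t, ht⟩) rfl]
    exact hb.countLE_le _ hc hcc' hc'

def MatchedPairCondition (L : ℕ) (b : Fin n → ℕ) (η : Fin n → ℤ) : Prop :=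
  ∀ i j : Fin n, i < j → b i = 1 → b j = L →
    countLE b 1 i = countLE b L j → η j - η i = 0 ∨ η j - η i = 1

end Counting

theorem antitone_of_monotone_sub_mul {ι : Type*} [Preorder ι] {L : ℕ} {a : ι → ℕ} {lam : ι → ℤ}
    (ha : ∀ i, 1 ≤ a i ∧ a i ≤ L) (hr : Monotone fun i => (a i : ℤ) - L * lam i) :
    Antitone lam := by
  intro p q hpq
  by_contra! hlt
  have hrpq := hr hpq
  have hap : (1 : ℤ) ≤ a p := by exact_mod_cast (ha p).1
  have haq : (a q : ℤ) ≤ L := by exact_mod_cast (ha q).2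
  have hgap : (L : ℤ) * 1 ≤ L * (lam q - lam p) := by gcongr; omega
  simp only at hrpq
  linarith

section Inversions

variable {N : ℕ}

/- An injection from the inversions of `w * swap p q` into those of `w` other than `(p, q)`:
a pair meeting `{p, q}` is moved by the transposition, except when its other entry lies
strictly between `p` and `q`. -/
def swapInversion (p q : Fin N) (z : Fin N × Fin N) : Fin N × Fin N :=
  (if z.1 = p ∧ q < z.2 then q else if z.1 = q then p else z.1,
    if z.2 = q ∧ z.1 < p then p else if z.2 = p then q else z.2)

theorem swapInversion_swapInversion {p q x y : Fin N} (hpq : p < q) (hxy : x < y) :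
    swapInversion p q (swapInversion p q (x, y)) = (x, y) := by
  simp only [swapInversion, Prod.mk.injEq]
  split_ifs <;>
    simp only [Fin.lt_def, Fin.ext_iff, not_and, not_lt, not_true, true_and, and_true] at * <;>
      omega

theorem swapInversion_fst_lt_snd {p q x y : Fin N} (hpq : p < q) (hxy : x < y) :
    (swapInversion p q (x, y)).1 < (swapInversion p q (x, y)).2 := by
  simp only [swapInversion]
  split_ifs <;>
    simp only [Fin.lt_def, Fin.ext_iff, not_and, not_lt] at * <;> omega

theorem swapInversion_mem {w : Equiv.Perm (Fin N)} {p q x y : Fin N} (hpq : p < q)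
    (hw : w q < w p) (hxy : x < y) (hinv : w (Equiv.swap p q y) < w (Equiv.swap p q x)) :
    w (swapInversion p q (x, y)).2 < w (swapInversion p q (x, y)).1 ∧
      swapInversion p q (x, y) ≠ (p, q) := by
  rw [Equiv.swap_apply_def, Equiv.swap_apply_def] at hinv
  have h1 := congrArg w (a₁ := x) (a₂ := p)
  have h2 := congrArg w (a₁ := x) (a₂ := q)
  have h3 := congrArg w (a₁ := y) (a₂ := p)
  have h4 := congrArg w (a₁ := y) (a₂ := q)
  simp only [swapInversion, Prod.mk.injEq, ne_eq, not_and]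
  split_ifs at hinv ⊢ <;>
    simp only [Fin.lt_def, Fin.ext_iff, not_and, not_lt, not_true, and_false, true_implies] at * <;>
      omega

end Inversions

section Sorting

variable {L m : ℕ}

theorem invCount_mul_swap_lt {w : Equiv.Perm (Fin (L * m))} {p q : Fin (L * m)} (hpq : p < q)
    (hw : w q < w p) : invCount L m (w * Equiv.swap p q) < invCount L m w := by
  set S := Finset.univ.filter fun z : Fin (L * m) × Fin (L * m) => z.1 < z.2 ∧ w z.2 < w z.1
  set T := Finset.univ.filter fun z : Fin (L * m) × Fin (L * m) =>
    z.1 < z.2 ∧ (w * Equiv.swap p q) z.2 < (w * Equiv.swap p q) z.1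
  have hmaps : ∀ z ∈ T, swapInversion p q z ∈ S.erase (p, q) := by
    rintro ⟨x, y⟩ hz
    obtain ⟨hxy, hinv⟩ := (Finset.mem_filter.1 hz).2
    obtain ⟨hlt, hne⟩ := swapInversion_mem hpq hw hxy hinv
    exact Finset.mem_erase.2 ⟨hne, by simpa [S] using ⟨swapInversion_fst_lt_snd hpq hxy, hlt⟩⟩
  have hinj : Set.InjOn (swapInversion p q) T := by
    rintro ⟨x₁, y₁⟩ h₁ ⟨x₂, y₂⟩ h₂ heq
    simp only [T, Finset.coe_filter, Finset.mem_univ, true_and, Set.mem_ofPred_eq] at h₁ h₂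
    rw [← swapInversion_swapInversion hpq h₁.1, ← swapInversion_swapInversion hpq h₂.1, heq]
  calc invCount L m (w * Equiv.swap p q) = T.card := rfl
    _ ≤ (S.erase (p, q)).card := Finset.card_le_card_of_injOn _ hmaps hinj
    _ < S.card := Finset.card_erase_lt_of_mem (by simpa [S] using ⟨hpq, hw⟩)

theorem symm_lt_symm_of_minimal {lam : Fin (L * m) → ℤ} {γ : Equiv.Perm (Fin (L * m))}
    (hγ1 : Monotone fun i => lam (γ.symm i))
    (hγ2 : ∀ γ' : Equiv.Perm (Fin (L * m)),
      (Monotone fun i => lam (γ'.symm i)) → invCount L m γ ≤ invCount L m γ')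
    {u v : Fin (L * m)} (huv : u < v) (heq : lam (γ.symm u) = lam (γ.symm v)) :
    γ.symm u < γ.symm v := by
  by_contra! hvu
  set p := γ.symm v
  set q := γ.symm u
  have hpq : p < q := hvu.lt_of_ne (γ.symm.injective.ne huv.ne')
  have hlam : ∀ i, lam ((γ * Equiv.swap p q).symm i) = lam (γ.symm i) := by
    intro i
    simp only [Equiv.Perm.mul_def, Equiv.symm_trans_apply, Equiv.symm_swap, Equiv.swap_apply_def]
    split_ifs with h₁ h₂ <;> simp_all [p, q]
  have hmono : Monotone fun i => lam ((γ * Equiv.swap p q).symm i) := by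
    simpa only [hlam] using hγ1
  have hγpq : γ q < γ p := by simpa [p, q] using huv
  exact (invCount_mul_swap_lt hpq hγpq).not_ge (hγ2 _ hmono)

end Sorting

theorem apply_symm_le_of_lam_eq {ι : Type*} [LinearOrder ι] {L : ℕ} {a : ι → ℕ} {lam : ι → ℤ}
    {γ : Equiv.Perm ι} (hr : Monotone fun i => (a i : ℤ) - L * lam i)
    (hstab : ∀ u v, u < v → lam (γ.symm u) = lam (γ.symm v) → γ.symm u < γ.symm v)
    {u v : ι} (huv : u ≤ v) (heq : lam (γ.symm u) = lam (γ.symm v)) :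
    a (γ.symm u) ≤ a (γ.symm v) := by
  obtain rfl | huv := huv.eq_or_lt
  · exact le_rfl
  · have h := hr (hstab u v huv heq).le
    simp only [heq] at h
    exact_mod_cast sub_le_sub_iff_right _ |>.1 h

section BlockEnumeration

variable {L m : ℕ}

theorem pos_of_fin_mul (i : Fin (L * m)) : 0 < m :=
  Nat.pos_of_mul_pos_left i.pos

theorem val_div_lt (i : Fin (L * m)) : i.1 / m < L :=
  (Nat.div_lt_iff_lt_mul (pos_of_fin_mul i)).2 i.2

theorem c0_eq (i : Fin (L * m)) : c0 L m i = ((i.1 % m : ℕ) : ℤ) - ((i.1 / m : ℕ) : ℤ) - m := by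
  have h : ((m : ℕ) : ℤ) * ((i.1 / m : ℕ) : ℤ) + ((i.1 % m : ℕ) : ℤ) = i.1 := by
    exact_mod_cast Nat.div_add_mod i.1 m
  unfold c0
  linear_combination -h

theorem mod_le_mod_of_c0_sub_c0_add_le_one {i j : Fin (L * m)} {k : ℤ} (hk : 1 ≤ k)
    (h : c0 L m i - c0 L m j + k * L ≤ 1) : i.1 % m ≤ j.1 % m := by
  have hkL : (L : ℤ) ≤ k * L := le_mul_of_one_le_left (by positivity) hk
  have hiL : ((i.1 / m : ℕ) : ℤ) + 1 ≤ L := by exact_mod_cast val_div_lt i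
  rw [c0_eq, c0_eq] at h
  have : ((i.1 % m : ℕ) : ℤ) ≤ (j.1 % m : ℕ) := by linarith [Int.natCast_nonneg (j.1 / m)]
  exact_mod_cast this

def slot (c s : ℕ) (hc : c < L) (hs : s < m) : Fin (L * m) :=
  ⟨c * m + s, by nlinarith⟩

theorem slot_val_div {c s : ℕ} (hc : c < L) (hs : s < m) : (slot c s hc hs).1 / m = c := by
  change (c * m + s) / m = c
  rw [add_comm, Nat.add_mul_div_right _ _ (by omega), Nat.div_eq_of_lt hs, zero_add]

theorem slot_val_mod {c s : ℕ} (hc : c < L) (hs : s < m) : (slot c s hc hs).1 % m = s := by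
  simp [slot, Nat.mod_eq_of_lt hs]

theorem c0_slot {c s : ℕ} (hc : c < L) (hs : s < m) : c0 L m (slot c s hc hs) = s - c - m := by
  rw [c0_eq, slot_val_div, slot_val_mod]

theorem slot_ne_slot {c c' s : ℕ} (hc : c < L) (hc' : c' < L) (hs : s < m) (h : c ≠ c') :
    slot c s hc hs ≠ slot c' s hc' hs := fun heq => h <| by
  rw [← slot_val_div hc hs, ← slot_val_div hc' hs, heq]

/- The characterization of `w_b` for the word `b`: block `c` of indices is sent increasingly onto
the positions of the letter `c + 1`. -/
structure IsBlockEnumeration (b : Fin (L * m) → ℕ) (w : Equiv.Perm (Fin (L * m))) : Prop where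
  apply_eq : ∀ j, b (w j) = j.1 / m + 1
  lt_of_lt_of_div_eq : ∀ i j, i < j → i.1 / m = j.1 / m → w i < w j

variable {b : Fin (L * m) → ℕ} {w : Equiv.Perm (Fin (L * m))}

theorem IsBlockEnumeration.lt_iff (hw : IsBlockEnumeration b w) {i j : Fin (L * m)}
    (h : i.1 / m = j.1 / m) : w i < w j ↔ i < j := by
  refine ⟨fun hij => ?_, fun hij => hw.lt_of_lt_of_div_eq i j hij h⟩
  by_contra! hji
  obtain rfl | hji := hji.eq_or_lt
  · exact hij.false
  · exact (hw.lt_of_lt_of_div_eq j i hji h.symm).not_gt hij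

theorem IsBlockEnumeration.countLT_apply (hw : IsBlockEnumeration b w) (j : Fin (L * m)) :
    countLT b (j.1 / m + 1) (w j) = j.1 % m := by
  have hblock : (Finset.univ.filter fun t => t < w j ∧ b t = j.1 / m + 1)
      = (Finset.Ico ⟨j.1 / m * m, (Nat.div_mul_le_self _ _).trans_lt j.2⟩ j).map
          w.toEmbedding := by
    ext t
    obtain ⟨x, rfl⟩ := w.surjective t
    simp only [Finset.mem_filter, Finset.mem_univ, true_and, Finset.mem_map_equiv,
      Equiv.symm_apply_apply, Finset.mem_Ico, hw.apply_eq, Nat.add_right_cancel_iff, Fin.le_def]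
    constructor
    · rintro ⟨hlt, hx⟩
      exact ⟨hx ▸ Nat.div_mul_le_self _ _, (hw.lt_iff hx).1 hlt⟩
    · rintro ⟨hle, hlt⟩
      have hx : x.1 / m = j.1 / m := le_antisymm (Nat.div_le_div_right (Fin.lt_def.1 hlt).le)
        ((Nat.le_div_iff_mul_le (pos_of_fin_mul j)).2 hle)
      exact ⟨(hw.lt_iff hx).2 hlt, hx⟩
  rw [countLT, hblock, Finset.card_map, Fin.card_Ico, Nat.mod_eq_sub_div_mul]

theorem IsBlockEnumeration.countLT_lt (hw : IsBlockEnumeration b w) {t : Fin (L * m)} {c : ℕ}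
    (ht : b t = c) : countLT b c t < m := by
  have hc := hw.apply_eq (w.symm t)
  rw [Equiv.apply_symm_apply, ht] at hc
  have hrank := hw.countLT_apply (w.symm t)
  rw [Equiv.apply_symm_apply, ← hc] at hrank
  exact hrank ▸ Nat.mod_lt _ (pos_of_fin_mul t)

theorem IsBlockEnumeration.countLE_le (hw : IsBlockEnumeration b w) (c : ℕ) (i : Fin (L * m)) :
    countLE b c i ≤ m := by
  have hinj : Set.InjOn (countLT b c) (Finset.univ.filter fun t => t ≤ i ∧ b t = c) :=
    fun t ht u hu h => eq_of_countLT_eq (Finset.mem_filter.1 ht).2.2 (Finset.mem_filter.1 hu).2.2 h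
  have h := Finset.card_le_card_of_injOn (t := Finset.range m) _
    (fun t ht => Finset.mem_range.2 (hw.countLT_lt (Finset.mem_filter.1 ht).2.2)) hinj
  rwa [Finset.card_range] at h

theorem IsBlockEnumeration.apply_slot (hw : IsBlockEnumeration b w) {c s : ℕ} (hc : c < L)
    (hs : s < m) : b (w (slot c s hc hs)) = c + 1 := by
  rw [hw.apply_eq, slot_val_div]

theorem IsBlockEnumeration.countLT_slot (hw : IsBlockEnumeration b w) {c s : ℕ} (hc : c < L)
    (hs : s < m) : countLT b (c + 1) (w (slot c s hc hs)) = s := by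
  simpa only [slot_val_div, slot_val_mod] using hw.countLT_apply (slot c s hc hs)

theorem IsBlockEnumeration.apply_slot_eq (hw : IsBlockEnumeration b w) {c s : ℕ} (hc : c < L)
    (hs : s < m) {t : Fin (L * m)} (ht : b t = c + 1) (hrank : countLT b (c + 1) t = s) :
    w (slot c s hc hs) = t :=
  eq_of_countLT_eq (hw.apply_slot hc hs) ht (by rw [hw.countLT_slot, hrank])

theorem IsBlockEnumeration.two_le_c0_sub_c0 (hw : IsBlockEnumeration b w)
    (hdom : IsDominantPath L b) {i j : Fin (L * m)} (hij : i < j) (hji : w j < w i) :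
    2 ≤ c0 L m i - c0 L m j := by
  have hblock : i.1 / m < j.1 / m := (Nat.div_le_div_right (Fin.lt_def.1 hij).le).lt_of_ne
    fun h => (hw.lt_of_lt_of_div_eq i j hij h).not_gt hji
  have hrank : j.1 % m + 1 ≤ i.1 % m := calc
    j.1 % m + 1 = countLE b (j.1 / m + 1) (w j) := by
      rw [countLE_eq_countLT_add_one (hw.apply_eq j), hw.countLT_apply]
    _ ≤ countLE b (i.1 / m + 1) (w j) :=
      hdom.countLE_le _ (Nat.le_add_left 1 _) (by omega) (val_div_lt j)
    _ ≤ countLT b (i.1 / m + 1) (w i) := countLE_le_countLT hji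
    _ = i.1 % m := hw.countLT_apply i
  rw [c0_eq, c0_eq]
  omega

theorem IsBlockEnumeration.countLT_lt_countLE (hw : IsBlockEnumeration b w)
    (hdom : IsDominantPath L b) {i j : Fin (L * m)} (h : i.1 % m ≤ j.1 % m) :
    countLT b L (w i) < countLE b 1 (w j) := calc
  countLT b L (w i) ≤ countLT b (i.1 / m + 1) (w i) :=
    hdom.countLT_le _ (Nat.le_add_left 1 _) (val_div_lt i) le_rfl
  _ = i.1 % m := hw.countLT_apply i
  _ < j.1 % m + 1 := by omega
  _ = countLE b (j.1 / m + 1) (w j) := by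
    rw [countLE_eq_countLT_add_one (hw.apply_eq j), hw.countLT_apply]
  _ ≤ countLE b 1 (w j) := hdom.countLE_le _ le_rfl (Nat.le_add_left 1 _) (val_div_lt j)

theorem IsBlockEnumeration.sub_le_one_of_countLT_lt (hw : IsBlockEnumeration b w)
    {η : Fin (L * m) → ℤ} (hη : Monotone η) (hpair : MatchedPairCondition L b η)
    {u v : Fin (L * m)} (hvu : v < u) (h : countLT b L u < countLE b 1 v) : η u - η v ≤ 1 := by
  set s := countLT b L u
  have hs : s < m := h.trans_le (hw.countLE_le 1 v)
  have hL : 0 < L := Nat.pos_of_mul_pos_right u.pos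
  have hL' : L - 1 + 1 = L := Nat.sub_add_cancel hL
  set i₀ := w (slot 0 s hL hs)
  set j₀ := w (slot (L - 1) s (by omega) hs)
  have hi₀ : b i₀ = 1 := hw.apply_slot hL hs
  have hj₀ : b j₀ = L := by rw [hw.apply_slot, hL']
  have hri₀ : countLT b 1 i₀ = s := hw.countLT_slot hL hs
  have hrj₀ : countLT b L j₀ = s := by
    have h := hw.countLT_slot (c := L - 1) (by omega) hs
    rwa [hL'] at h
  have hi₀v : i₀ ≤ v := (le_iff_countLT_lt_countLE hi₀).2 (by rwa [hri₀])
  have huj₀ : u ≤ j₀ := not_lt.1 fun hlt => by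
    have := countLE_le_countLT (b := b) (c := L) hlt
    rw [countLE_eq_countLT_add_one hj₀, hrj₀] at this
    omega
  have hclose := hpair i₀ j₀ (hi₀v.trans_lt (hvu.trans_le huj₀)) hi₀ hj₀
    (by rw [countLE_eq_countLT_add_one hi₀, countLE_eq_countLT_add_one hj₀, hri₀, hrj₀])
  have := hη hi₀v
  have := hη huj₀
  omega

end BlockEnumeration

section Regularity

variable {L m : ℕ}

/- Regularity of `x = t_lam σ`: for `i ≠ j`, the two `PosRoot` hypotheses say that
`ε_i − ε_j + kδ ∈ S(x)`. -/
def IsRegular (lam : Fin (L * m) → ℤ) (σ : Fin (L * m) → Fin (L * m)) : Prop :=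
  ∀ (i j : Fin (L * m)) (k : ℤ), i ≠ j → PosRoot L m i j k →
    ¬ PosRoot L m (σ i) (σ j) (k - lam (σ i) + lam (σ j)) →
    c0 L m i - c0 L m j + k * L ∉ ({-1, 0, 1} : Set ℤ)

variable {a : Fin (L * m) → ℕ} {lam : Fin (L * m) → ℤ} {γ w : Equiv.Perm (Fin (L * m))}

theorem isDominantPath_of_isRegular (hw : IsBlockEnumeration (fun t => a (γ.symm t)) w)
    (hη : Monotone fun t => lam (γ.symm t))
    (hb : ∀ u v, u ≤ v → lam (γ.symm u) = lam (γ.symm v) → a (γ.symm u) ≤ a (γ.symm v))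
    (hreg : IsRegular lam fun i => γ.symm (w i)) :
    IsDominantPath L fun t => a (γ.symm t) := by
  set b : Fin (L * m) → ℕ := fun t => a (γ.symm t)
  intro i₀ c hc hcL
  obtain ⟨c, rfl⟩ : ∃ c', c = c' + 1 := ⟨c - 1, by omega⟩
  by_contra! hlt
  set q := countLE b (c + 1) i₀
  have hq : q < m := hlt.trans_le (hw.countLE_le _ _)
  set i : Fin (L * m) := slot c q (by omega) hq
  set j := slot (c + 1) q hcL hq
  have hj : w j ≤ i₀ :=
    (le_iff_countLT_lt_countLE (hw.apply_slot hcL hq)).2 (by rwa [hw.countLT_slot])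
  have hi : i₀ < w i := not_le.1 fun h => by
    have := (le_iff_countLT_lt_countLE (hw.apply_slot _ hq)).1 h
    rw [hw.countLT_slot] at this
    exact this.false
  have hηji : lam (γ.symm (w j)) < lam (γ.symm (w i)) := by
    refine (hη (hj.trans hi.le)).lt_of_ne fun heq => ?_
    have hba := hb _ _ (hj.trans hi.le) heq
    have hbj : b (w j) = c + 1 + 1 := hw.apply_slot hcL hq
    have hbi : b (w i) = c + 1 := hw.apply_slot _ hq
    simp only [b] at hbi hbj
    omega
  refine hreg i j 0 (slot_ne_slot _ _ hq (by omega)) (Or.inr ⟨rfl, ?_⟩) ?_ ?_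
  · rw [Fin.lt_def]
    change c * m + q < (c + 1) * m + q
    nlinarith [pos_of_fin_mul i]
  · rintro (h | ⟨h, -⟩) <;> simp only at h <;> omega
  · rw [c0_slot, c0_slot]
    push_cast
    norm_num

theorem matchedPairCondition_of_isRegular (hL : 2 ≤ L)
    (hw : IsBlockEnumeration (fun t => a (γ.symm t)) w)
    (hη : Monotone fun t => lam (γ.symm t)) (hreg : IsRegular lam fun i => γ.symm (w i)) :
    MatchedPairCondition L (fun t => a (γ.symm t)) (fun t => lam (γ.symm t)) := by
  set b : Fin (L * m) → ℕ := fun t => a (γ.symm t)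
  intro i₀ j₀ hij hi₀ hj₀ hcount
  by_contra! hgap
  have hgap' : 2 ≤ lam (γ.symm j₀) - lam (γ.symm i₀) := by
    have := hη hij.le
    simp only at this
    omega
  set s := countLT b L j₀
  have hs : s < m := hw.countLT_lt hj₀
  have hsi : countLT b 1 i₀ = s := by
    rw [countLE_eq_countLT_add_one hi₀, countLE_eq_countLT_add_one hj₀] at hcount
    omega
  have hL' : L - 1 + 1 = L := by omega
  have hi : w (slot 0 s (by omega) hs) = i₀ := hw.apply_slot_eq _ hs hi₀ hsi
  have hj : w (slot (L - 1) s (by omega) hs) = j₀ :=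
    hw.apply_slot_eq _ hs (by rwa [hL']) (by rw [hL'])
  refine hreg (slot (L - 1) s (by omega) hs) (slot 0 s (by omega) hs) 1
    (slot_ne_slot _ _ hs (by omega)) (Or.inl one_pos) ?_ ?_
  · simp only [hi, hj]
    rintro (h | ⟨h, -⟩) <;> omega
  · rw [c0_slot, c0_slot]
    push_cast [Nat.cast_sub (by omega : 1 ≤ L)]
    norm_num

theorem symm_lt_symm_of_posRoot (hw : IsBlockEnumeration (fun t => a (γ.symm t)) w)
    (hanti : Antitone lam)
    (hstab : ∀ u v, u < v → lam (γ.symm u) = lam (γ.symm v) → γ.symm u < γ.symm v)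
    (hb : ∀ u v, u ≤ v → lam (γ.symm u) = lam (γ.symm v) → a (γ.symm u) ≤ a (γ.symm v))
    {i j : Fin (L * m)} {k : ℤ} (hij : i ≠ j) (hpos : PosRoot L m i j k)
    (hk : k - lam (γ.symm (w i)) + lam (γ.symm (w j)) = 0) : γ.symm (w i) < γ.symm (w j) := by
  by_contra! hji
  replace hji := hji.lt_of_ne (γ.symm.injective.ne (w.injective.ne hij.symm))
  have hle := hanti hji.le
  obtain ⟨rfl, hij'⟩ : k = 0 ∧ i < j := by
    rcases hpos with h | h
    · omega
    · exact h
  have heq : lam (γ.symm (w j)) = lam (γ.symm (w i)) := by omega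
  have hwji : w j < w i := (lt_or_gt_of_ne (w.injective.ne hij)).resolve_left
    fun h => (hstab _ _ h heq.symm).not_gt hji
  have hblock : i.1 / m = j.1 / m := by
    have hba := hb _ _ hwji.le heq
    have hbi := hw.apply_eq i
    have hbj := hw.apply_eq j
    exact le_antisymm (Nat.div_le_div_right (Fin.lt_def.1 hij').le) (by omega)
  exact (hw.lt_of_lt_of_div_eq i j hij' hblock).not_gt hwji

theorem isRegular_of_isDominantPath (hw : IsBlockEnumeration (fun t => a (γ.symm t)) w)
    (hη : Monotone fun t => lam (γ.symm t)) (hanti : Antitone lam)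
    (hstab : ∀ u v, u < v → lam (γ.symm u) = lam (γ.symm v) → γ.symm u < γ.symm v)
    (hb : ∀ u v, u ≤ v → lam (γ.symm u) = lam (γ.symm v) → a (γ.symm u) ≤ a (γ.symm v))
    (hdom : IsDominantPath L fun t => a (γ.symm t))
    (hpair : MatchedPairCondition L (fun t => a (γ.symm t)) (fun t => lam (γ.symm t))) :
    IsRegular lam fun i => γ.symm (w i) := by
  intro i j k hij hpos hneg hmem
  simp only [Set.mem_insert_iff, Set.mem_singleton_iff] at hmem
  simp only [PosRoot, not_or, not_and, not_lt] at hneg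
  obtain ⟨hk', hk0⟩ := hneg
  have hk : 0 ≤ k := by rcases hpos with h | ⟨h, -⟩ <;> omega
  obtain hk' | hk' := hk'.lt_or_eq
  · have hji : w j < w i := lt_of_not_ge fun h => by
      have := hη h
      simp only at this
      omega
    obtain hk1 | rfl := hk.lt_or_eq
    · have hmod : i.1 % m ≤ j.1 % m := mod_le_mod_of_c0_sub_c0_add_le_one (k := k) (by omega)
        (by rcases hmem with h | h | h <;> linarith)
      have := hw.sub_le_one_of_countLT_lt hη hpair hji (hw.countLT_lt_countLE hdom hmod)
      omega
    · have hij' : i < j := by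
        rcases hpos with h | ⟨-, h⟩
        · exact absurd h (lt_irrefl 0)
        · exact h
      have := hw.two_le_c0_sub_c0 hdom hij' hji
      simp only [zero_mul, add_zero] at hmem
      omega
  · exact (hk0 hk').not_gt (symm_lt_symm_of_posRoot hw hanti hstab hb hij hpos hk')

end Regularity

theorem statement_11 (hL : 2 ≤ L)
    (a : Fin (L * m) → ℕ) (ha : ∀ i, 1 ≤ a i ∧ a i ≤ L)
    (lam : Fin (L * m) → ℤ)
    (hr : Monotone fun i => (a i : ℤ) - L * lam i)
    -- γ = γ_λ : shortest permutation sorting λ into non-decreasing order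
    (γ : Equiv.Perm (Fin (L * m)))
    (hγ1 : Monotone fun i => lam (γ.symm i))
    (hγ2 : ∀ γ' : Equiv.Perm (Fin (L * m)),
      (Monotone fun i => lam (γ'.symm i)) → invCount L m γ ≤ invCount L m γ')
    -- w_b for b = γ(a):
    (wb : Equiv.Perm (Fin (L * m)))
    (hwb1 : ∀ j : Fin (L * m), a (γ.symm (wb j)) = j.1 / m + 1)
    (hwb2 : ∀ i j : Fin (L * m), i < j → i.1 / m = j.1 / m → wb i < wb j) :
    -- regularity of x_r = t_λ · γ⁻¹ · w_b, with finite part σ = γ⁻¹ ∘ w_b: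
    (∀ (i j : Fin (L * m)) (k : ℤ), i ≠ j →
      PosRoot L m i j k →
      ¬ PosRoot L m (γ.symm (wb i)) (γ.symm (wb j))
          (k - lam (γ.symm (wb i)) + lam (γ.symm (wb j))) →
      (c0 L m i - c0 L m j + k * L ∉ ({-1, 0, 1} : Set ℤ)))
    ↔
    -- (1) the path of b = γ(a) is dominant:
    ((∀ (i : Fin (L * m)) (c : ℕ), 1 ≤ c → c < L →
        (Finset.univ.filter fun t => t ≤ i ∧ a (γ.symm t) = c + 1).card
          ≤ (Finset.univ.filter fun t => t ≤ i ∧ a (γ.symm t) = c).card) ∧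
    -- (2) the pairing condition on η = γ(λ):
      (∀ i j : Fin (L * m), i < j → a (γ.symm i) = 1 → a (γ.symm j) = L →
        (Finset.univ.filter fun t => t ≤ i ∧ a (γ.symm t) = 1).card
          = (Finset.univ.filter fun t => t ≤ j ∧ a (γ.symm t) = L).card →
        lam (γ.symm j) - lam (γ.symm i) = 0 ∨ lam (γ.symm j) - lam (γ.symm i) = 1)) := by
  have hw : IsBlockEnumeration (fun t => a (γ.symm t)) wb := ⟨hwb1, hwb2⟩
  have hanti : Antitone lam := antitone_of_monotone_sub_mul ha hr
  have hstab : ∀ u v, u < v → lam (γ.symm u) = lam (γ.symm v) → γ.symm u < γ.symm v :=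
    fun _ _ => symm_lt_symm_of_minimal hγ1 hγ2
  have hb : ∀ u v, u ≤ v → lam (γ.symm u) = lam (γ.symm v) → a (γ.symm u) ≤ a (γ.symm v) :=
    fun _ _ => apply_symm_le_of_lam_eq hr hstab
  exact ⟨fun hreg => ⟨isDominantPath_of_isRegular hw hγ1 hb hreg,
      matchedPairCondition_of_isRegular hL hw hγ1 hreg⟩,
    fun ⟨hdom, hpair⟩ => isRegular_of_isDominantPath hw hγ1 hanti hstab hb hdom hpair⟩

end RegSeq

end
end

section
/- With notation as above, if s_α (α a positive root of A_{n−1}) satisfies s_α·φ = +φ then s_α ∈ W̄_{D^+} (i.e. the two indices exchanged by s_α lie in the same column of D^+), while if s_α·φ = −φ then s_α ∈ W̄_{D^−} (the two indices lie in the same row of D^−). -/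
noncomputable section

namespace SkewIsoAux

variable {n : ℕ} {M : Type*} [AddCommGroup M] [Module ℂ M]
variable {P : Equiv.Perm (Fin n) →* Module.End ℂ M} {X : Fin n → Module.End ℂ M}
variable {φ : M} {ζ : Fin n → ℂ}

lemma brel_eval
    (hbrel : ∀ (w : Equiv.Perm (Fin n)) (j : Fin n),
      P w⁻¹ * X j * P w
        = X (w⁻¹ j)
          + ∑ p ∈ Finset.univ.filter
              (fun p : Fin n × Fin n => p.1 < p.2 ∧ w p.2 < w p.1),
            (((if j = w p.1 then 1 else 0) - (if j = w p.2 then 1 else 0) : ℂ))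
              • P (Equiv.swap p.1 p.2))
    (hwt : ∀ i, X i φ = ζ i • φ)
    {k l : Fin n} {ε : ℂ} (hε2 : ε * ε = 1)
    (hs : P (Equiv.swap k l) φ = ε • φ) (j : Fin n) :
    ζ j • φ
      = X ((Equiv.swap k l) j) φ
        + ∑ p ∈ Finset.univ.filter
            (fun p : Fin n × Fin n => p.1 < p.2 ∧ (Equiv.swap k l) p.2 < (Equiv.swap k l) p.1),
          (((if j = (Equiv.swap k l) p.1 then 1 else 0)
              - (if j = (Equiv.swap k l) p.2 then 1 else 0) : ℂ))
            • P (Equiv.swap p.1 p.2) φ := by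
  have h := congrArg (fun F : Module.End ℂ M => F φ) (hbrel (Equiv.swap k l) j)
  simp only [Equiv.swap_inv, Module.End.mul_apply, LinearMap.add_apply,
    LinearMap.sum_apply, LinearMap.smul_apply] at h
  rw [hs, map_smul, hwt, map_smul, map_smul, hs, smul_smul, smul_smul] at h
  have hc : ε * ζ j * ε = ζ j := by
    have : ε * ζ j * ε = ζ j * (ε * ε) := by ring
    rw [this, hε2, mul_one]
  rw [hc] at h
  exact h

lemma adjacent_case
    (hbrel : ∀ (w : Equiv.Perm (Fin n)) (j : Fin n),
      P w⁻¹ * X j * P w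
        = X (w⁻¹ j)
          + ∑ p ∈ Finset.univ.filter
              (fun p : Fin n × Fin n => p.1 < p.2 ∧ w p.2 < w p.1),
            (((if j = w p.1 then 1 else 0) - (if j = w p.2 then 1 else 0) : ℂ))
              • P (Equiv.swap p.1 p.2))
    (hwt : ∀ i, X i φ = ζ i • φ) (hφ : φ ≠ 0)
    {k l : Fin n} (hkl : (k : ℕ) + 1 = l)
    {ε : ℂ} (hε2 : ε * ε = 1)
    (hs : P (Equiv.swap k l) φ = ε • φ) : ζ l - ζ k = ε := by
  have hklt : k < l := by rw [Fin.lt_def]; omega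
  have hne : k ≠ l := Fin.ne_of_lt hklt
  have hwk : Equiv.swap k l k = l := Equiv.swap_apply_left k l
  have hwl : Equiv.swap k l l = k := Equiv.swap_apply_right k l
  have h := brel_eval hbrel hwt hε2 hs k
  have hsum : ∑ p ∈ Finset.univ.filter
        (fun p : Fin n × Fin n => p.1 < p.2 ∧ Equiv.swap k l p.2 < Equiv.swap k l p.1),
      (((if k = Equiv.swap k l p.1 then 1 else 0)
          - (if k = Equiv.swap k l p.2 then 1 else 0) : ℂ))
        • P (Equiv.swap p.1 p.2) φ
      = (-1 : ℂ) • (ε • φ) := by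
    have hmem : ({((k, l) : Fin n × Fin n)} : Finset (Fin n × Fin n))
        ⊆ Finset.univ.filter
          (fun p : Fin n × Fin n => p.1 < p.2 ∧ Equiv.swap k l p.2 < Equiv.swap k l p.1) := by
      intro p hp
      rw [Finset.mem_singleton] at hp
      subst hp
      simp only [Finset.mem_filter, Finset.mem_univ, true_and]
      exact ⟨hklt, by rw [hwk, hwl]; exact hklt⟩
    have hz : ∀ p ∈ Finset.univ.filter
        (fun p : Fin n × Fin n => p.1 < p.2 ∧ Equiv.swap k l p.2 < Equiv.swap k l p.1),
        p ∉ ({((k, l) : Fin n × Fin n)} : Finset (Fin n × Fin n)) →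
        (((if k = Equiv.swap k l p.1 then 1 else 0)
            - (if k = Equiv.swap k l p.2 then 1 else 0) : ℂ))
          • P (Equiv.swap p.1 p.2) φ = 0 := by
      intro p hp hnp
      rw [Finset.mem_filter] at hp
      rw [Finset.mem_singleton] at hnp
      obtain ⟨-, h1, h2⟩ := hp
      have hc1 : ¬ (k = Equiv.swap k l p.1) := by
        intro he
        have hp1 : p.1 = l := by
          have h' := congrArg (Equiv.swap k l) he
          rw [Equiv.swap_apply_self, hwk] at h'
          exact h'.symm
        rw [hp1] at h1 h2
        rw [hwl] at h2
        have hne2 : p.2 ≠ k := (hklt.trans h1).ne'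
        have hne2' : p.2 ≠ l := h1.ne'
        rw [Equiv.swap_apply_of_ne_of_ne hne2 hne2'] at h2
        exact absurd (h2.trans (hklt.trans h1)) (lt_irrefl _)
      have hc2 : (k = Equiv.swap k l p.2) → p = (k, l) := by
        intro he
        have hp2 : p.2 = l := by
          have h' := congrArg (Equiv.swap k l) he
          rw [Equiv.swap_apply_self, hwk] at h'
          exact h'.symm
        by_cases h3 : p.1 = k
        · exact Prod.ext h3 hp2
        · exfalso
          rw [hp2] at h1 h2
          rw [hwl] at h2
          rw [Equiv.swap_apply_of_ne_of_ne h3 h1.ne] at h2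
          rw [Fin.lt_def] at h1 h2
          omega
      rw [if_neg hc1, if_neg (fun he => hnp (hc2 he)), sub_zero, zero_smul]
    rw [← Finset.sum_subset hmem hz, Finset.sum_singleton]
    rw [if_neg (by rw [hwk]; exact hne), if_pos (by rw [hwl]), hs]
    norm_num
  rw [hwk, hwt, hsum] at h
  have h' : ζ k • φ = (ζ l - ε) • φ := by
    rw [h, sub_smul, neg_one_smul, ← sub_eq_add_neg]
  have h0 : (ζ k - (ζ l - ε)) • φ = 0 := by rw [sub_smul, h', sub_self]
  rcases smul_eq_zero.mp h0 with h1 | h1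
  · linear_combination -h1
  · exact absurd h1 hφ

lemma intermediate
    (hbrel : ∀ (w : Equiv.Perm (Fin n)) (j : Fin n),
      P w⁻¹ * X j * P w
        = X (w⁻¹ j)
          + ∑ p ∈ Finset.univ.filter
              (fun p : Fin n × Fin n => p.1 < p.2 ∧ w p.2 < w p.1),
            (((if j = w p.1 then 1 else 0) - (if j = w p.2 then 1 else 0) : ℂ))
              • P (Equiv.swap p.1 p.2))
    (hwt : ∀ i, X i φ = ζ i • φ)
    {k j l : Fin n} (hkj : k < j) (hjl : j < l)
    {ε : ℂ} (hε2 : ε * ε = 1)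
    (hs : P (Equiv.swap k l) φ = ε • φ) :
    P (Equiv.swap j l) φ = P (Equiv.swap k j) φ := by
  have hklt : k < l := hkj.trans hjl
  have hwk : Equiv.swap k l k = l := Equiv.swap_apply_left k l
  have hwl : Equiv.swap k l l = k := Equiv.swap_apply_right k l
  have hwj : Equiv.swap k l j = j := Equiv.swap_apply_of_ne_of_ne hkj.ne' hjl.ne
  have h := brel_eval hbrel hwt hε2 hs j
  have hsum : ∑ p ∈ Finset.univ.filter
        (fun p : Fin n × Fin n => p.1 < p.2 ∧ Equiv.swap k l p.2 < Equiv.swap k l p.1),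
      (((if j = Equiv.swap k l p.1 then 1 else 0)
          - (if j = Equiv.swap k l p.2 then 1 else 0) : ℂ))
        • P (Equiv.swap p.1 p.2) φ
      = P (Equiv.swap j l) φ - P (Equiv.swap k j) φ := by
    have hne1 : ((j, l) : Fin n × Fin n) ≠ (k, j) := by
      intro h'
      exact hkj.ne (congrArg Prod.fst h').symm
    have hmem : ({((j, l) : Fin n × Fin n), (k, j)} : Finset (Fin n × Fin n))
        ⊆ Finset.univ.filter
          (fun p : Fin n × Fin n => p.1 < p.2 ∧ Equiv.swap k l p.2 < Equiv.swap k l p.1) := by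
      intro p hp
      rw [Finset.mem_insert, Finset.mem_singleton] at hp
      simp only [Finset.mem_filter, Finset.mem_univ, true_and]
      rcases hp with hp | hp <;> subst hp
      · exact ⟨hjl, by rw [hwl, hwj]; exact hkj⟩
      · exact ⟨hkj, by rw [hwj, hwk]; exact hjl⟩
    have hz : ∀ p ∈ Finset.univ.filter
        (fun p : Fin n × Fin n => p.1 < p.2 ∧ Equiv.swap k l p.2 < Equiv.swap k l p.1),
        p ∉ ({((j, l) : Fin n × Fin n), (k, j)} : Finset (Fin n × Fin n)) →
        (((if j = Equiv.swap k l p.1 then 1 else 0)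
            - (if j = Equiv.swap k l p.2 then 1 else 0) : ℂ))
          • P (Equiv.swap p.1 p.2) φ = 0 := by
      intro p hp hnp
      rw [Finset.mem_filter] at hp
      rw [Finset.mem_insert, Finset.mem_singleton] at hnp
      push_neg at hnp
      obtain ⟨-, h1, h2⟩ := hp
      have hc1 : ¬ (j = Equiv.swap k l p.1) := by
        intro he
        have hp1 : p.1 = j := by
          have h' := congrArg (Equiv.swap k l) he
          rw [Equiv.swap_apply_self, hwj] at h'
          exact h'.symm
        rw [hp1] at h1 h2
        rw [hwj] at h2
        have hb : p.2 ≠ l := by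
          intro hb'
          exact hnp.1 (Prod.ext hp1 hb')
        have ha : p.2 ≠ k := (hkj.trans h1).ne'
        rw [Equiv.swap_apply_of_ne_of_ne ha hb] at h2
        exact absurd (h2.trans h1) (lt_irrefl _)
      have hc2 : ¬ (j = Equiv.swap k l p.2) := by
        intro he
        have hp2 : p.2 = j := by
          have h' := congrArg (Equiv.swap k l) he
          rw [Equiv.swap_apply_self, hwj] at h'
          exact h'.symm
        rw [hp2] at h1 h2
        rw [hwj] at h2
        have ha : p.1 ≠ k := by
          intro ha'
          exact hnp.2 (Prod.ext ha' hp2)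
        have hb : p.1 ≠ l := (h1.trans hjl).ne
        rw [Equiv.swap_apply_of_ne_of_ne ha hb] at h2
        exact absurd (h2.trans h1) (lt_irrefl _)
      rw [if_neg hc1, if_neg hc2, sub_zero, zero_smul]
    rw [← Finset.sum_subset hmem hz, Finset.sum_pair hne1]
    rw [show ((j, l) : Fin n × Fin n).1 = j from rfl, show ((j, l) : Fin n × Fin n).2 = l from rfl,
      show ((k, j) : Fin n × Fin n).1 = k from rfl, show ((k, j) : Fin n × Fin n).2 = j from rfl,
      hwj, hwk, hwl, if_pos rfl, if_neg hkj.ne', if_neg hjl.ne]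
    norm_num
    abel
  rw [hwj, hwt, hsum] at h
  have := left_eq_add.mp h
  exact sub_eq_zero.mp this

lemma descend {k j l : Fin n} (hkj : k < j) (hjl : j < l)
    (hC : P (Equiv.swap j l) φ = P (Equiv.swap k j) φ)
    {ε : ℂ} (hs : P (Equiv.swap k l) φ = ε • φ) :
    P (Equiv.swap k j) φ = ε • φ ∧ P (Equiv.swap j l) φ = ε • φ := by
  have hkj' : k ≠ j := hkj.ne
  have hkl' : k ≠ l := (hkj.trans hjl).ne
  have hid : Equiv.swap j l * Equiv.swap k j * Equiv.swap j l = Equiv.swap k l := by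
    rw [Equiv.swap_mul_swap_mul_swap hkj' hkl']
    exact Equiv.swap_comm l k
  have h2 : P (Equiv.swap k j) (P (Equiv.swap k j) φ) = φ := by
    rw [← Module.End.mul_apply, ← map_mul, Equiv.swap_mul_self, map_one, Module.End.one_apply]
  have hchain : P (Equiv.swap j l) (P (Equiv.swap k j) (P (Equiv.swap j l) φ)) = ε • φ := by
    have h' := congrArg (fun F : Module.End ℂ M => F φ) (congrArg P hid)
    simp only [map_mul, Module.End.mul_apply] at h'
    exact h'.trans hs
  rw [hC, h2] at hchain
  exact ⟨hC ▸ hchain, hchain⟩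

end SkewIsoAux


/-!
Setting of Propositions on isotropy subgroups: `D` is a skew Young diagram of type
`D_L^m` (m rows of L squares each, occupying rows 1,…,m), numbered column by column
(left to right, top to bottom within columns) with the labels `1,…,n = Lm`
(here `Fin (L·m)`), encoded by the position map `pos : Fin (L·m) → ℤ × ℤ`
(`pos i = (row, column)`).  `D⁺` is the union of the columns of height `> 1` and
`D⁻` its complement; `W̄_{D⁺}` (resp. `W̄_{D⁻}`) is the subgroup of `S_n`
preserving the label set of every column of `D⁺` and fixing the labels of `D⁻`
(resp. preserving the label sets of rows of `D⁻` and fixing the labels of `D⁺`).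
`φ` is a nonzero vector of `S[t']`-weight `ζ_r = Lc* − Σ_i (c_i + m)ε_i` (`c_i` the
content of square `i`) in a module over the degenerate double affine Hecke algebra
`H_n`, on which the relation
`w⁻¹·ξ·w = w⁻¹(ξ) + Σ_{α ∈ S(w)} w(α)(ξ)·s_α` holds; this is the situation of the
vector `φ = [π_{κ,ν}(φ_{x_r})·v_0] ∈ 𝔙/U'(b^0)𝔙` (κ = L, ν(a) = a) attached to the
regular sequence `r` of `D`.
-/

namespace SkewIso

/-- `S ⊆ ℤ²` is a skew Young diagram of type `D_L^m`: `m` rows, each of `L`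
squares, in the rows `1,…,m`, forming a skew Young diagram. -/
def TypeDLm (L m : ℕ) (S : Set (ℤ × ℤ)) : Prop :=
  ∃ mu : ℤ → ℤ, (∀ t : ℤ, 1 ≤ t → t < m → mu (t + 1) ≤ mu t) ∧
    S = {p : ℤ × ℤ | 1 ≤ p.1 ∧ p.1 ≤ m ∧ mu p.1 < p.2 ∧ p.2 ≤ mu p.1 + L}

variable (L m : ℕ) (pos : Fin (L * m) → ℤ × ℤ)

/-- The content `c_i` of the square numbered `i` (column minus row). -/
def content (i : Fin (L * m)) : ℤ := (pos i).2 - (pos i).1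

/-- The height of the column containing square `i`. -/
def colHeight (i : Fin (L * m)) : ℕ :=
  (Finset.univ.filter fun j => (pos j).2 = (pos i).2).card

/-- The subgroup `W̄_{D⁺}`: permutations of the labels preserving each column
(hence fixing the labels of columns of height 1, i.e. of `D⁻`). -/
def WDplus : Set (Equiv.Perm (Fin (L * m))) :=
  {w | ∀ i, (pos (w i)).2 = (pos i).2}

/-- The subgroup `W̄_{D⁻}`: permutations fixing the labels of `D⁺` and preserving
the intersection of each row with `D⁻`. -/
def WDminus : Set (Equiv.Perm (Fin (L * m))) :=
  {w | ∀ i, (2 ≤ colHeight L m pos i → w i = i) ∧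
    (colHeight L m pos i = 1 →
      colHeight L m pos (w i) = 1 ∧ (pos (w i)).1 = (pos i).1)}

/-- The inversion set relation (brel) of the degenerate double affine Hecke algebra,
restricted to the finite Weyl group `S_n`:
`w⁻¹·ε_j^∨·w = ε_{w⁻¹(j)}^∨ + Σ_{α_{kl} ∈ S(w)} (δ_{j,w(k)} − δ_{j,w(l)})·s_{kl}`. -/
def BrelHolds {M : Type*} [AddCommGroup M] [Module ℂ M]
    (P : Equiv.Perm (Fin (L * m)) →* Module.End ℂ M)
    (X : Fin (L * m) → Module.End ℂ M) : Prop :=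
  ∀ (w : Equiv.Perm (Fin (L * m))) (j : Fin (L * m)),
    P w⁻¹ * X j * P w
      = X (w⁻¹ j)
        + ∑ p ∈ Finset.univ.filter
            (fun p : Fin (L * m) × Fin (L * m) => p.1 < p.2 ∧ w p.2 < w p.1),
          (((if j = w p.1 then 1 else 0) - (if j = w p.2 then 1 else 0) : ℂ))
            • P (Equiv.swap p.1 p.2)

lemma combAdj (hL : 2 ≤ L) (hm : 1 ≤ m)
    (hinj : Function.Injective pos)
    (hshape : TypeDLm L m (Set.range pos))
    (horder : ∀ i j : Fin (L * m), i < j ↔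
      ((pos i).2 < (pos j).2 ∨ ((pos i).2 = (pos j).2 ∧ (pos i).1 < (pos j).1)))
    {i j : Fin (L * m)} (hij : (i : ℕ) + 1 = j) :
    (content L m pos i - content L m pos j = 1 → (pos i).2 = (pos j).2) ∧
    (content L m pos j - content L m pos i = 1 →
      (pos i).1 = (pos j).1 ∧ colHeight L m pos i = 1 ∧ colHeight L m pos j = 1) := by
  obtain ⟨mu, hmu, hS⟩ := hshape
  have mem : ∀ x : Fin (L * m), 1 ≤ (pos x).1 ∧ (pos x).1 ≤ (m : ℤ) ∧
      mu (pos x).1 < (pos x).2 ∧ (pos x).2 ≤ mu (pos x).1 + L := by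
    intro x
    have hx : pos x ∈ Set.range pos := ⟨x, rfl⟩
    rw [hS] at hx
    exact hx
  have exS : ∀ r γ : ℤ, 1 ≤ r → r ≤ (m : ℤ) → mu r < γ → γ ≤ mu r + L →
      ∃ x : Fin (L * m), pos x = (r, γ) := by
    intro r γ h1 h2 h3 h4
    have hx : ((r, γ) : ℤ × ℤ) ∈ Set.range pos := by
      rw [hS]; exact ⟨h1, h2, h3, h4⟩
    exact hx
  have antiN : ∀ (d : ℕ) (t : ℤ), 1 ≤ t → t + d ≤ (m : ℤ) → mu (t + d) ≤ mu t := by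
    intro d
    induction d with
    | zero => intro t _ _; simp
    | succ d ih =>
      intro t h1 h2
      have e : t + ((d : ℤ) + 1) = (t + d) + 1 := by ring
      have h3 : mu (t + d + 1) ≤ mu (t + d) := hmu (t + d) (by omega) (by omega)
      have h4 : mu (t + d) ≤ mu t := ih t h1 (by omega)
      have e2 : t + ((d + 1 : ℕ) : ℤ) = t + d + 1 := by push_cast; ring
      rw [e2]
      exact h3.trans h4
  have anti : ∀ t t' : ℤ, 1 ≤ t → t ≤ t' → t' ≤ (m : ℤ) → mu t' ≤ mu t := by
    intro t t' h1 h2 h3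
    have e : t + ((t' - t).toNat : ℤ) = t' := by
      have := Int.toNat_of_nonneg (a := t' - t) (by omega)
      omega
    have := antiN (t' - t).toNat t h1 (by omega)
    rwa [e] at this
  have noB : ∀ x : Fin (L * m), i < x → x < j → False := by
    intro x h1 h2
    rw [Fin.lt_def] at h1 h2
    omega
  have hilt : i < j := by rw [Fin.lt_def]; omega
  obtain ⟨hi1, hi2, hi3, hi4⟩ := mem i
  obtain ⟨hj1, hj2, hj3, hj4⟩ := mem j
  rcases (horder i j).mp hilt with hcol | ⟨hceq, hrlt⟩
  · -- cross-column case
    have fact1 : (pos i).1 + 1 ≤ (m : ℤ) → mu ((pos i).1 + 1) + L < (pos i).2 := by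
      intro hrm
      by_contra hge
      push_neg at hge
      have hmu1 : mu ((pos i).1 + 1) ≤ mu (pos i).1 := hmu (pos i).1 hi1 (by omega)
      obtain ⟨x, hx⟩ := exS ((pos i).1 + 1) (pos i).2 (by omega) hrm (by omega) hge
      have hx1 : (pos x).1 = (pos i).1 + 1 := by rw [hx]
      have hx2 : (pos x).2 = (pos i).2 := by rw [hx]
      exact noB x ((horder i x).mpr (Or.inr ⟨hx2.symm, by omega⟩))
        ((horder x j).mpr (Or.inl (by omega)))
    have fact2 : (pos j).1 ≤ (pos i).1 := by
      by_contra hgt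
      push_neg at hgt
      have h5 := fact1 (by omega)
      have h6 : mu (pos j).1 ≤ mu ((pos i).1 + 1) := anti _ _ (by omega) (by omega) hj2
      omega
    constructor
    · intro h2
      exfalso
      simp only [content] at h2
      omega
    · intro h2
      simp only [content] at h2
      have hgam : (pos j).2 = (pos i).2 + 1 := by omega
      have hrow : (pos j).1 = (pos i).1 := by omega
      rw [hrow, hgam] at hj3 hj4
      have huniqI : ∀ x : Fin (L * m), (pos x).2 = (pos i).2 → x = i := by
        intro x hxcol
        obtain ⟨hx1, hx2, hx3, hx4⟩ := mem x
        rw [hxcol] at hx3 hx4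
        have hle : (pos x).1 ≤ (pos i).1 := by
          by_contra hc; push_neg at hc
          have h5 := fact1 (by omega)
          have h6 : mu (pos x).1 ≤ mu ((pos i).1 + 1) := anti _ _ (by omega) (by omega) hx2
          omega
        have hge : (pos i).1 ≤ (pos x).1 := by
          by_contra hc; push_neg at hc
          have h7 : mu ((pos i).1 - 1) ≤ mu (pos x).1 := anti _ _ hx1 (by omega) (by omega)
          have h8 : mu (pos i).1 ≤ mu ((pos i).1 - 1) := anti _ _ (by omega) (by omega) hi2
          obtain ⟨y, hy⟩ := exS ((pos i).1 - 1) ((pos i).2 + 1) (by omega) (by omega)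
            (by omega) (by omega)
          have hy1 : (pos y).1 = (pos i).1 - 1 := by rw [hy]
          have hy2 : (pos y).2 = (pos i).2 + 1 := by rw [hy]
          exact noB y ((horder i y).mpr (Or.inl (by omega)))
            ((horder y j).mpr (Or.inr ⟨by omega, by omega⟩))
        exact hinj (Prod.ext (le_antisymm hle hge) hxcol)
      have huniqJ : ∀ x : Fin (L * m), (pos x).2 = (pos j).2 → x = j := by
        intro x hxcol
        obtain ⟨hx1, hx2, hx3, hx4⟩ := mem x
        rw [hxcol, hgam] at hx3 hx4
        have hle : (pos x).1 ≤ (pos i).1 := by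
          by_contra hc; push_neg at hc
          have h5 := fact1 (by omega)
          have h6 : mu (pos x).1 ≤ mu ((pos i).1 + 1) := anti _ _ (by omega) (by omega) hx2
          omega
        have hge : (pos i).1 ≤ (pos x).1 := by
          by_contra hc; push_neg at hc
          have h7 : mu ((pos i).1 - 1) ≤ mu (pos x).1 := anti _ _ hx1 (by omega) (by omega)
          have h8 : mu (pos i).1 ≤ mu ((pos i).1 - 1) := anti _ _ (by omega) (by omega) hi2
          obtain ⟨y, hy⟩ := exS ((pos i).1 - 1) ((pos i).2 + 1) (by omega) (by omega)
            (by omega) (by omega)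
          have hy1 : (pos y).1 = (pos i).1 - 1 := by rw [hy]
          have hy2 : (pos y).2 = (pos i).2 + 1 := by rw [hy]
          exact noB y ((horder i y).mpr (Or.inl (by omega)))
            ((horder y j).mpr (Or.inr ⟨by omega, by omega⟩))
        have hx1i : (pos x).1 = (pos j).1 := by omega
        exact hinj (Prod.ext hx1i hxcol)
      refine ⟨hrow.symm, ?_, ?_⟩
      · rw [colHeight, Finset.card_eq_one]
        refine ⟨i, ?_⟩
        ext x
        simp only [Finset.mem_filter, Finset.mem_univ, true_and, Finset.mem_singleton]
        exact ⟨huniqI x, fun hxi => by rw [hxi]⟩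
      · rw [colHeight, Finset.card_eq_one]
        refine ⟨j, ?_⟩
        ext x
        simp only [Finset.mem_filter, Finset.mem_univ, true_and, Finset.mem_singleton]
        exact ⟨huniqJ x, fun hxj => by rw [hxj]⟩
  · -- same-column case
    constructor
    · intro _; exact hceq
    · intro h2
      exfalso
      simp only [content] at h2
      omega


lemma main_aux (hL : 2 ≤ L) (hm : 1 ≤ m)
    (hinj : Function.Injective pos)
    (hshape : TypeDLm L m (Set.range pos))
    (horder : ∀ i j : Fin (L * m), i < j ↔
      ((pos i).2 < (pos j).2 ∨ ((pos i).2 = (pos j).2 ∧ (pos i).1 < (pos j).1)))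
    {M : Type*} [AddCommGroup M] [Module ℂ M]
    (P : Equiv.Perm (Fin (L * m)) →* Module.End ℂ M)
    (X : Fin (L * m) → Module.End ℂ M)
    (hbrel : BrelHolds L m P X)
    (φ : M) (hφ : φ ≠ 0)
    (hwt : ∀ i : Fin (L * m), X i φ = ((-(content L m pos i) - m : ℤ) : ℂ) • φ)
    {ε : ℂ} (hε : ε = 1 ∨ ε = -1) :
    ∀ d : ℕ, ∀ k l : Fin (L * m), (k : ℕ) + 1 + d = l →
      P (Equiv.swap k l) φ = ε • φ →
      ((ε = 1 → (pos k).2 = (pos l).2) ∧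
       (ε = -1 → (pos k).1 = (pos l).1 ∧
          colHeight L m pos k = 1 ∧ colHeight L m pos l = 1)) := by
  have hε2 : ε * ε = 1 := by rcases hε with h | h <;> rw [h] <;> norm_num
  have hwt' : ∀ i : Fin (L * m), X i φ
      = (fun i => ((-(content L m pos i) - m : ℤ) : ℂ)) i • φ := hwt
  intro d
  induction d using Nat.strong_induction_on with
  | _ d IH =>
    intro k l hd hs
    rcases Nat.eq_zero_or_pos d with hd0 | hdpos
    · subst hd0
      have hadj : (k : ℕ) + 1 = l := by omega
      have hz := SkewIsoAux.adjacent_case hbrel hwt' hφ hadj hε2 hs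
      obtain ⟨cA, cB⟩ := combAdj L m pos hL hm hinj hshape horder hadj
      constructor
      · intro h1
        apply cA
        rw [h1] at hz
        have hzz : ((content L m pos k : ℂ)) - (content L m pos l : ℂ) = 1 := by
          push_cast at hz
          linear_combination hz
        exact_mod_cast hzz
      · intro h1
        apply cB
        rw [h1] at hz
        have hzz : ((content L m pos l : ℂ)) - (content L m pos k : ℂ) = 1 := by
          push_cast at hz
          linear_combination -hz
        exact_mod_cast hzz
    · have hjlt : (k : ℕ) + d < L * m := by omega
      set j : Fin (L * m) := ⟨(k : ℕ) + d, hjlt⟩ with hjdef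
      have hjv : (j : ℕ) = (k : ℕ) + d := rfl
      have hkj : k < j := by rw [Fin.lt_def]; omega
      have hjl : j < l := by rw [Fin.lt_def]; omega
      have hC := SkewIsoAux.intermediate hbrel hwt' hkj hjl hε2 hs
      obtain ⟨hs1, hs2⟩ := SkewIsoAux.descend hkj hjl hC hs
      have g1 := IH (d - 1) (by omega) k j (by omega) hs1
      have g2 := IH 0 hdpos j l (by omega) hs2
      constructor
      · intro h1
        exact (g1.1 h1).trans (g2.1 h1)
      · intro h1
        obtain ⟨r1, c1, c2⟩ := g1.2 h1
        obtain ⟨r2, c2', c3⟩ := g2.2 h1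
        exact ⟨r1.trans r2, c1, c3⟩

/-- if a transposition `s_α = (k l)` satisfies `s_α·φ = +φ`, then the
squares `k` and `l` lie in the same column of `D⁺`; if `s_α·φ = −φ`, then `k` and
`l` lie in the same row of `D⁻`. -/
theorem statement_14 (hL : 2 ≤ L) (hm : 1 ≤ m)
    (hinj : Function.Injective pos)
    (hshape : TypeDLm L m (Set.range pos))
    (horder : ∀ i j : Fin (L * m), i < j ↔
      ((pos i).2 < (pos j).2 ∨ ((pos i).2 = (pos j).2 ∧ (pos i).1 < (pos j).1)))
    {M : Type*} [AddCommGroup M] [Module ℂ M]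
    (P : Equiv.Perm (Fin (L * m)) →* Module.End ℂ M)
    (X : Fin (L * m) → Module.End ℂ M)
    (hXcomm : ∀ i j, X i * X j = X j * X i)
    (hbrel : BrelHolds L m P X)
    (φ : M) (hφ : φ ≠ 0)
    (hwt : ∀ i : Fin (L * m), X i φ = ((-(content L m pos i) - m : ℤ) : ℂ) • φ)
    (k l : Fin (L * m)) (hkl : k ≠ l) :
    (P (Equiv.swap k l) φ = φ →
      (pos k).2 = (pos l).2) ∧
    (P (Equiv.swap k l) φ = -φ →
      (pos k).1 = (pos l).1 ∧ colHeight L m pos k = 1 ∧ colHeight L m pos l = 1) := by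
  rcases lt_or_gt_of_ne hkl with hlt | hgt
  · have hlt' : (k : ℕ) < (l : ℕ) := hlt
    constructor
    · intro h1
      have h := main_aux L m pos hL hm hinj hshape horder P X hbrel φ hφ hwt
        (ε := (1 : ℂ)) (Or.inl rfl) ((l : ℕ) - (k : ℕ) - 1) k l (by omega)
        (by rw [one_smul]; exact h1)
      exact h.1 rfl
    · intro h1
      have h := main_aux L m pos hL hm hinj hshape horder P X hbrel φ hφ hwt
        (ε := (-1 : ℂ)) (Or.inr rfl) ((l : ℕ) - (k : ℕ) - 1) k l (by omega)
        (by rw [neg_one_smul]; exact h1)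
      exact h.2 rfl
  · have hgt' : (l : ℕ) < (k : ℕ) := hgt
    rw [Equiv.swap_comm]
    constructor
    · intro h1
      have h := main_aux L m pos hL hm hinj hshape horder P X hbrel φ hφ hwt
        (ε := (1 : ℂ)) (Or.inl rfl) ((k : ℕ) - (l : ℕ) - 1) l k (by omega)
        (by rw [one_smul]; exact h1)
      exact (h.1 rfl).symm
    · intro h1
      have h := main_aux L m pos hL hm hinj hshape horder P X hbrel φ hφ hwt
        (ε := (-1 : ℂ)) (Or.inr rfl) ((k : ℕ) - (l : ℕ) - 1) l k (by omega)
        (by rw [neg_one_smul]; exact h1)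
      obtain ⟨hr, hc1, hc2⟩ := h.2 rfl
      exact ⟨hr.symm, hc2, hc1⟩


end SkewIso

end
end

section
/- Let w ∈ W̄_{D^−} and suppose w·φ = a·φ with a ∈ C*. Then a = (−1)^{l(w)}, where l(w) is the length of w in S_n. -/
noncomputable section

/-!
Setting of Propositions on isotropy subgroups: `D` is a skew Young diagram of type
`D_L^m` (m rows of L squares each, occupying rows 1,…,m), numbered column by column
(left to right, top to bottom within columns) with the labels `1,…,n = Lm`
(here `Fin (L·m)`), encoded by the position map `pos : Fin (L·m) → ℤ × ℤ`
(`pos i = (row, column)`).  `D⁺` is the union of the columns of height `> 1` and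
`D⁻` its complement; `W̄_{D⁺}` (resp. `W̄_{D⁻}`) is the subgroup of `S_n`
preserving the label set of every column of `D⁺` and fixing the labels of `D⁻`
(resp. preserving the label sets of rows of `D⁻` and fixing the labels of `D⁺`).
`φ` is a nonzero vector of `S[t']`-weight `ζ_r = Lc* − Σ_i (c_i + m)ε_i` (`c_i` the
content of square `i`) in a module over the degenerate double affine Hecke algebra
`H_n`, on which the relation
`w⁻¹·ξ·w = w⁻¹(ξ) + Σ_{α ∈ S(w)} w(α)(ξ)·s_α` holds; this is the situation of the
vector `φ = [π_{κ,ν}(φ_{x_r})·v_0] ∈ 𝔙/U'(b^0)𝔙` (κ = L, ν(a) = a) attached to the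
regular sequence `r` of `D`.
-/

namespace SkewIso

variable (L m : ℕ) (pos : Fin (L * m) → ℤ × ℤ)

/-- The length of `w ∈ S_n` (the number of inversions). -/
def len (w : Equiv.Perm (Fin (L * m))) : ℕ :=
  (Finset.univ.filter
    (fun p : Fin (L * m) × Fin (L * m) => p.1 < p.2 ∧ w p.2 < w p.1)).card

end SkewIso

/-!
The vector `φ` has weight `λ = (-c_i - m)_i`, and no `x ≠ 1` in `W̄_{D⁻}` fixes `λ`, since
distinct labels in one row of `D⁻` have distinct contents. Let `F` be the sum of the generalised
weight spaces of the weights `x·λ`, `x ∈ W̄_{D⁻} \ {1}`. By induction on `l(u)`,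
`P u φ ≡ (-1)^{l(u)} φ (mod F)` for all `u ∈ W̄_{D⁻}`: an adjacent descent `s = s_{j,j+1}` of `u`
lies in a row of `D⁻`, so `λ_j = λ_{j+1} + 1` and `P s φ + φ` is a weight vector of weight `s·λ`
fixed by `s`. The commutation relation, in which the correction terms are shorter, puts all its
`W̄_{D⁻}`-translates into `F`, and `P u φ = P (u s) (P s φ + φ) - P (u s) φ`. Finally
generalised weight spaces of distinct weights are independent, so `(a - (-1)^{l(w)}) φ ∈ F`
forces `a = (-1)^{l(w)}`.
-/

open Module End Set Equiv Finset

section JointGenEigenspace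

variable {ι K M : Type*} [Field K] [AddCommGroup M] [Module K M] (X : ι → End K M)

abbrev jointGenEigenspace (χ : ι → K) : Submodule K M :=
  ⨅ i, (X i).maxGenEigenspace (χ i)

variable {X}

lemma mapsTo_jointGenEigenspace {g : End K M} (hg : ∀ i, Commute (X i) g) (χ : ι → K) :
    MapsTo g (jointGenEigenspace X χ) (jointGenEigenspace X χ) := by
  intro x hx
  simp only [SetLike.mem_coe, Submodule.mem_iInf] at hx ⊢
  exact fun i => mapsTo_maxGenEigenspace_of_comm (hg i) (χ i) (hx i)

lemma mapsTo_finsetSup_jointGenEigenspace {g : End K M} (hg : ∀ i, Commute (X i) g)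
    (S : Finset (ι → K)) :
    MapsTo g (S.sup (jointGenEigenspace X) : Submodule K M)
      (S.sup (jointGenEigenspace X) : Submodule K M) := by
  suffices (S.sup (jointGenEigenspace X)).map g ≤ S.sup (jointGenEigenspace X) from
    fun x hx => this (Submodule.mem_map_of_mem hx)
  refine Finset.sup_induction (p := fun V : Submodule K M => V.map g ≤ V) (by simp) ?_ ?_
  · intro V hV W hW
    rw [Submodule.map_sup]
    exact sup_le_sup hV hW
  · intro χ _
    rw [Submodule.map_le_iff_le_comap]
    exact mapsTo_jointGenEigenspace hg χ

lemma disjoint_jointGenEigenspace_finsetSup (hX : ∀ i j, Commute (X i) (X j))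
    {χ : ι → K} {S : Finset (ι → K)} (hχ : χ ∉ S) :
    Disjoint (jointGenEigenspace X χ) (S.sup (jointGenEigenspace X)) := by
  have hindep := independent_iInf_maxGenEigenspace_of_forall_mapsTo X
    fun i j μ => mapsTo_maxGenEigenspace_of_comm (hX j i) μ
  rw [Finset.sup_eq_iSup]
  exact hindep.disjoint_biSup hχ

lemma mem_jointGenEigenspace_of_forall_apply_eq_smul {χ : ι → K} {x : M}
    (hx : ∀ i, X i x = χ i • x) : x ∈ jointGenEigenspace X χ :=
  (Submodule.mem_iInf _).mpr fun i => (mem_maxGenEigenspace _ _ _).mpr ⟨1, by simp [hx]⟩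

lemma mem_maxGenEigenspace_of_sub_smul_mem {f : End K M} {μ : K} {x : M}
    (hx : (f - μ • 1) x ∈ f.maxGenEigenspace μ) : x ∈ f.maxGenEigenspace μ := by
  obtain ⟨k, hk⟩ := (mem_maxGenEigenspace f μ _).mp hx
  exact (mem_maxGenEigenspace f μ x).mpr ⟨k + 1, by rwa [pow_succ, mul_apply]⟩

lemma pow_apply_sub_pow_smul_mem {V : Submodule K M} {Q : End K M} (hQ : MapsTo Q V V)
    {d : K} {z : M} (hz : Q z - d • z ∈ V) (k : ℕ) : (Q ^ k) z - d ^ k • z ∈ V := by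
  induction k with
  | zero => simp
  | succ k ih =>
    have h : (Q ^ (k + 1)) z - d ^ (k + 1) • z =
        Q ((Q ^ k) z - d ^ k • z) + d ^ k • (Q z - d • z) := by
      rw [pow_succ', mul_apply, map_sub, map_smul, smul_sub, smul_smul, ← pow_succ]
      abel
    rw [h]
    exact V.add_mem (hQ ih) (V.smul_mem _ hz)

lemma mem_finsetSup_insert_of_sub_smul_mem [Fintype ι] [DecidableEq (ι → K)]
    (hX : ∀ i j, Commute (X i) (X j)) {c : ι → K} {T : Finset (ι → K)} (hcT : c ∉ T) {y : M}
    (hy : ∀ i, (X i - c i • 1) y ∈ (insert c T).sup (jointGenEigenspace X)) :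
    y ∈ (insert c T).sup (jointGenEigenspace X) := by
  induction T using Finset.induction_on generalizing y with
  | empty =>
    simp only [Finset.sup_insert, Finset.sup_empty, sup_bot_eq, Submodule.mem_iInf] at hy ⊢
    exact fun i => mem_maxGenEigenspace_of_sub_smul_mem (hy i i)
  | insert ν T hνT ih =>
    obtain ⟨hcν, hcT⟩ := not_or.mp (Finset.mem_insert.not.mp hcT)
    obtain ⟨j, hj⟩ := Function.ne_iff.mp hcν
    rw [Finset.insert_comm] at hy ⊢
    have hy' : ∀ i, (X i - c i • 1) y ∈
        jointGenEigenspace X ν ⊔ (insert c T).sup (jointGenEigenspace X) := fun i => by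
      rw [← Finset.sup_insert]
      exact hy i
    set V := (insert ν (insert c T)).sup (jointGenEigenspace X)
    choose g hg h hh hgh using fun i => Submodule.mem_sup.mp (hy' i)
    choose k hk using fun i =>
      (mem_maxGenEigenspace _ _ _).mp ((Submodule.mem_iInf _).mp (hg i) j)
    set Q := X j - ν j • (1 : End K M)
    set N := Finset.univ.sup k
    have hQ : ∀ i, Commute (X i) Q := fun i =>
      (hX i j).sub_right ((Commute.one_right _).smul_right _)
    -- `Q ^ N` kills the `ν`-components, so `Q ^ N y` satisfies the hypothesis for `T`
    have hQNy : (Q ^ N) y ∈ (insert c T).sup (jointGenEigenspace X) := by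
      refine ih hcT fun i => ?_
      have hcomm : Commute (X i - c i • 1) (Q ^ N) :=
        ((hQ i).pow_right N).sub_left ((Commute.one_left _).smul_left (c i))
      rw [← mul_apply, hcomm.eq, mul_apply, ← hgh i, map_add,
        pow_map_zero_of_le (Finset.le_sup (Finset.mem_univ i)) (hk i), zero_add]
      exact mapsTo_finsetSup_jointGenEigenspace (fun i => (hQ i).pow_right N) _ (hh i)
    -- while modulo `V` it acts on `y` as the nonzero scalar `(c j - ν j) ^ N`
    have hQy : Q y - (c j - ν j) • y ∈ V := by
      have : Q y - (c j - ν j) • y = (X j - c j • 1) y := by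
        simp only [Q, LinearMap.sub_apply, LinearMap.smul_apply, one_apply, sub_smul]
        abel
      exact this ▸ hy j
    have hscalar := V.sub_mem
      (Finset.sup_mono (f := jointGenEigenspace X) (Finset.subset_insert ν _) hQNy)
      (pow_apply_sub_pow_smul_mem (mapsTo_finsetSup_jointGenEigenspace hQ _) hQy N)
    rw [sub_sub_cancel] at hscalar
    exact (V.smul_mem_iff (pow_ne_zero N (sub_ne_zero.mpr hj))).mp hscalar

lemma mem_finsetSup_jointGenEigenspace_of_sub_smul_mem [Fintype ι]
    (hX : ∀ i j, Commute (X i) (X j)) {S : Finset (ι → K)} {c : ι → K} (hc : c ∈ S) {y : M}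
    (hy : ∀ i, (X i - c i • 1) y ∈ S.sup (jointGenEigenspace X)) :
    y ∈ S.sup (jointGenEigenspace X) := by
  classical
  rw [← Finset.insert_erase hc] at hy ⊢
  exact mem_finsetSup_insert_of_sub_smul_mem hX (S.notMem_erase c) hy

end JointGenEigenspace

section Inversions

variable {n : ℕ}

def inversions (u : Perm (Fin n)) : Finset (Fin n × Fin n) :=
  univ.filter fun p => p.1 < p.2 ∧ u p.2 < u p.1

@[simp]
lemma mem_inversions {u : Perm (Fin n)} {p : Fin n × Fin n} :
    p ∈ inversions u ↔ p.1 < p.2 ∧ u p.2 < u p.1 := by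
  simp [inversions]

lemma inversions_one : inversions (1 : Perm (Fin n)) = ∅ := by
  ext p
  simpa using le_of_lt

lemma exists_descent {u : Perm (Fin n)} (hu : u ≠ 1) :
    ∃ j k : Fin n, (j : ℕ) + 1 = k ∧ u k < u j := by
  by_contra! h
  apply hu
  have hmono : StrictMono u := by
    cases n with
    | zero => exact fun a => a.elim0
    | succ n =>
      refine Fin.strictMono_iff_lt_succ.mpr fun i => ?_
      refine (h i.castSucc i.succ (by simp)).lt_of_ne fun he => ?_
      exact (Fin.castSucc_lt_succ (i := i)).ne (u.injective he)
  have hid : ⇑u = id := (hmono.range_inj strictMono_id).mp (by simp)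
  exact Perm.ext (congrFun hid)

lemma swap_apply_lt_swap_apply {j k p q : Fin n} (hjk : (j : ℕ) + 1 = k) (hpq : p < q)
    (hne : (p, q) ≠ (j, k)) : swap j k p < swap j k q := by
  simp only [swap_apply_def]
  simp only [ne_eq, Prod.mk.injEq, Fin.lt_def, Fin.ext_iff] at *
  split_ifs <;> omega

lemma inversions_swap_succ {j k : Fin n} (hjk : (j : ℕ) + 1 = k) :
    inversions (swap j k) = {(j, k)} := by
  ext ⟨p, q⟩
  simp only [mem_inversions, Finset.mem_singleton]
  constructor
  · rintro ⟨hpq, hswap⟩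
    by_contra hne
    exact hswap.not_gt (swap_apply_lt_swap_apply hjk hpq hne)
  · rintro ⟨⟩
    have hlt : j < k := Fin.lt_def.mpr (by omega)
    simpa using hlt

lemma card_inversions_mul_swap_succ (u : Perm (Fin n)) {j k : Fin n} (hjk : (j : ℕ) + 1 = k) :
    #(inversions (u * swap j k)) =
      if u k < u j then #(inversions u) - 1 else #(inversions u) + 1 := by
  have hlt : j < k := Fin.lt_def.mpr (by omega)
  set s := swap j k
  have hmaps : ∀ v : Perm (Fin n), ∀ p ∈ (inversions (v * s)).erase (j, k),
      (s p.1, s p.2) ∈ (inversions v).erase (j, k) := by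
    rintro v ⟨a, b⟩ hp
    simp only [mem_erase, mem_inversions, Perm.mul_apply] at hp ⊢
    obtain ⟨hne, hab, hv⟩ := hp
    refine ⟨fun h => ?_, swap_apply_lt_swap_apply hjk hab hne, hv⟩
    simp only [Prod.mk.injEq, s, swap_apply_eq_iff, swap_apply_left, swap_apply_right] at h
    exact hab.not_gt (h.1 ▸ h.2 ▸ hlt)
  have hss : ∀ x, s (s x) = x := swap_apply_self j k
  have herase : #((inversions (u * s)).erase (j, k)) = #((inversions u).erase (j, k)) :=
    card_bij' (fun p _ => (s p.1, s p.2)) (fun p _ => (s p.1, s p.2)) (hmaps u)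
      (fun p hp => hmaps (u * s) p (by rwa [mul_assoc, swap_mul_self, mul_one]))
      (fun p _ => by simp [hss]) (fun p _ => by simp [hss])
  have hjk_mem : (j, k) ∈ inversions u ↔ u k < u j := by simp [hlt]
  have hjk_mem' : (j, k) ∈ inversions (u * s) ↔ u j < u k := by simp [hlt, s]
  split_ifs with h
  · rw [← erase_eq_of_notMem (hjk_mem'.not.mpr h.not_gt), herase,
      card_erase_of_mem (hjk_mem.mpr h)]
  · have h' : u j < u k := (not_lt.mp h).lt_of_ne (u.injective.ne hlt.ne)
    rw [← card_erase_add_one (hjk_mem'.mpr h'), herase,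
      erase_eq_of_notMem (hjk_mem.not.mpr h)]

lemma apply_fst_eq_apply_snd_of_mem_inversions {β : Type*} {f : Fin n → β}
    (hf : ∀ a b c, a < b → b < c → f a = f c → f b = f a) {u : Perm (Fin n)}
    (hu : ∀ i, f (u i) = f i) {p : Fin n × Fin n} (hp : p ∈ inversions u) : f p.1 = f p.2 := by
  obtain ⟨k, l⟩ := p
  obtain ⟨hkl, hul⟩ := mem_inversions.mp hp
  by_contra hne
  have hk := hu k
  have hl := hu l
  -- as the fibres of `f` are intervals, `u l` lies strictly between `k` and `u k`
  have hkul : k < u l := by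
    rcases lt_trichotomy k (u l) with h | h | h
    · exact h
    · exact absurd (h ▸ hl) hne
    · exact absurd ((hf _ _ _ h hkl hl).trans hl) hne
  exact hne ((hf _ _ _ hkul hul hk.symm).symm.trans hl)

lemma card_inversions_mul_swap_lt {u : Perm (Fin n)} {p : Fin n × Fin n}
    (hp : p ∈ inversions u) : #(inversions (u * swap p.1 p.2)) < #(inversions u) := by
  induction h : #(inversions u) using Nat.strong_induction_on generalizing u p with
  | _ N ih =>
  subst h
  obtain ⟨k, l⟩ := p
  show #(inversions (u * swap k l)) < _
  have hu : u ≠ 1 := by rintro rfl; simp [inversions_one] at hp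
  obtain ⟨j, j', hjj', hdesc⟩ := exists_descent hu
  set s := swap j j'
  have hdrop : #(inversions (u * s)) = #(inversions u) - 1 := by
    rw [card_inversions_mul_swap_succ u hjj', if_pos hdesc]
  have hpos : 0 < #(inversions u) := card_pos.mpr ⟨_, hp⟩
  by_cases hkl : (k, l) = (j, j')
  · obtain ⟨rfl, rfl⟩ := Prod.mk.inj hkl
    rw [hdrop]
    omega
  -- conjugating by the descent `s` moves the inversion `(k, l)` of `u` to one of `u * s`
  have hp' : (s k, s l) ∈ inversions (u * s) := by
    rw [mem_inversions] at hp ⊢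
    exact ⟨swap_apply_lt_swap_apply hjj' hp.1 hkl, by simpa [s] using hp.2⟩
  have hlt := ih #(inversions (u * s)) (by omega) hp' rfl
  dsimp only at hlt
  have hconj : u * swap k l = u * s * swap (s k) (s l) * s := by
    rw [swap_apply_apply]
    simp only [mul_assoc, inv_mul_cancel, mul_one, s, swap_mul_self_mul]
  have hle : #(inversions (u * swap k l)) ≤ #(inversions (u * s * swap (s k) (s l))) + 1 := by
    rw [hconj, card_inversions_mul_swap_succ _ hjj']
    split_ifs <;> omega
  omega

end Inversions

namespace SkewIso

namespace BrelHolds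

variable {L m : ℕ} {M : Type*} [AddCommGroup M] [Module ℂ M]
  {P : Perm (Fin (L * m)) →* End ℂ M} {X : Fin (L * m) → End ℂ M}

lemma X_apply_P_apply (hbrel : BrelHolds L m P X) (u : Perm (Fin (L * m))) (ψ : M)
    (i : Fin (L * m)) :
    X i (P u ψ) = P u (X (u⁻¹ i) ψ) + ∑ p ∈ inversions u,
      ((if i = u p.1 then 1 else 0) - (if i = u p.2 then 1 else 0) : ℂ) •
        P (u * swap p.1 p.2) ψ := by
  have h := congrArg (fun A => (P u * A) ψ) (hbrel u i)
  simp only [← mul_assoc, ← map_mul, mul_inv_cancel, map_one, one_mul] at h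
  rw [← mul_apply, h, mul_add, Finset.mul_sum]
  simp only [mul_smul_comm, ← map_mul, LinearMap.add_apply, mul_apply, LinearMap.sum_apply,
    LinearMap.smul_apply]
  rfl

lemma X_apply_P_swap_add (hbrel : BrelHolds L m P X) {j k : Fin (L * m)}
    (hjk : (j : ℕ) + 1 = k) {φ : M} {lam : Fin (L * m) → ℂ} (hφ : ∀ i, X i φ = lam i • φ)
    (hlam : lam j = lam k + 1) (i : Fin (L * m)) :
    X i (P (swap j k) φ + φ) = lam (swap j k i) • (P (swap j k) φ + φ) := by
  have hjk' : j ≠ k := fun h => by simp [h] at hjk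
  rw [map_add, hbrel.X_apply_P_apply, inversions_swap_succ hjk, sum_singleton, swap_inv,
    swap_mul_self, map_one, one_apply, hφ, hφ, map_smul, smul_add, add_assoc, ← add_smul]
  congr 2
  rw [swap_apply_left, swap_apply_right]
  by_cases hij : i = j
  · simp [hij, hjk', hlam]
  by_cases hik : i = k
  · simp [hik, hjk'.symm, hlam, add_comm]
  · simp [hij, hik, swap_apply_of_ne_of_ne hij hik]

lemma P_apply_mem_finsetSup (hbrel : BrelHolds L m P X) (hX : ∀ i j, Commute (X i) (X j))
    {G : Set (Perm (Fin (L * m)))} (hG : ∀ v ∈ G, ∀ p ∈ inversions v, v * swap p.1 p.2 ∈ G)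
    {S : Finset (Fin (L * m) → ℂ)} {γ : M} {χ : Fin (L * m) → ℂ} (hγ : ∀ i, X i γ = χ i • γ)
    (hS : ∀ v ∈ G, χ ∘ ⇑v⁻¹ ∈ S ∨ P v γ ∈ S.sup (jointGenEigenspace X))
    {v : Perm (Fin (L * m))} (hv : v ∈ G) : P v γ ∈ S.sup (jointGenEigenspace X) := by
  induction h : #(inversions v) using Nat.strong_induction_on generalizing v with
  | _ N ih =>
  subst h
  refine (hS v hv).elim (fun hc => ?_) id
  refine mem_finsetSup_jointGenEigenspace_of_sub_smul_mem hX hc fun i => ?_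
  have hsub : (X i - (χ ∘ ⇑v⁻¹) i • 1) (P v γ) = ∑ p ∈ inversions v,
      ((if i = v p.1 then 1 else 0) - (if i = v p.2 then 1 else 0) : ℂ) •
        P (v * swap p.1 p.2) γ := by
    rw [LinearMap.sub_apply, hbrel.X_apply_P_apply, hγ, map_smul]
    simp
  rw [hsub]
  exact Submodule.sum_mem _ fun p hp => Submodule.smul_mem _ _
    (ih _ (card_inversions_mul_swap_lt hp) (hG v hv p hp) rfl)

lemma P_apply_P_swap_add_mem (hbrel : BrelHolds L m P X) (hX : ∀ i j, Commute (X i) (X j))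
    {G : Set (Perm (Fin (L * m)))} (hGmul : ∀ u ∈ G, ∀ v ∈ G, u * v ∈ G)
    (hGswap : ∀ u ∈ G, ∀ p ∈ inversions u, swap p.1 p.2 ∈ G)
    {φ : M} {lam : Fin (L * m) → ℂ} (hφ : ∀ i, X i φ = lam i • φ)
    {S : Finset (Fin (L * m) → ℂ)} (hS : ∀ x ∈ G, x ≠ 1 → lam ∘ ⇑x⁻¹ ∈ S)
    {j k : Fin (L * m)} (hjk : (j : ℕ) + 1 = k) (hs : swap j k ∈ G) (hlam : lam j = lam k + 1)
    {v : Perm (Fin (L * m))} (hv : v ∈ G) :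
    P v (P (swap j k) φ + φ) ∈ S.sup (jointGenEigenspace X) := by
  set s := swap j k
  have hjk' : j ≠ k := fun h => by simp [h] at hjk
  have hs1 : s ≠ 1 := fun h => hjk' (swap_eq_one_iff.mp h)
  have hγ : ∀ i, X i (P s φ + φ) = (lam ∘ s) i • (P s φ + φ) :=
    hbrel.X_apply_P_swap_add hjk hφ hlam
  refine hbrel.P_apply_mem_finsetSup hX (fun v hv p hp => hGmul v hv _ (hGswap v hv p hp)) hγ
    (fun v hv => ?_) hv
  by_cases hvs : v = s
  · refine .inr ?_
    rw [hvs, map_add, ← mul_apply, ← map_mul, swap_mul_self, map_one, one_apply, add_comm]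
    exact Finset.le_sup (f := jointGenEigenspace X) (by simpa [s] using hS s hs hs1)
      (mem_jointGenEigenspace_of_forall_apply_eq_smul hγ)
  · refine .inl ?_
    have hvs1 : v * s ≠ 1 := fun h => hvs (by simpa [s] using eq_inv_of_mul_eq_one_left h)
    convert hS (v * s) (hGmul v hv s hs) hvs1 using 1
    ext i
    simp [s, mul_inv_rev]

lemma P_apply_sub_sign_smul_mem (hbrel : BrelHolds L m P X)
    (hX : ∀ i j, Commute (X i) (X j)) {G : Set (Perm (Fin (L * m)))}
    (hGmul : ∀ u ∈ G, ∀ v ∈ G, u * v ∈ G)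
    (hGswap : ∀ u ∈ G, ∀ p ∈ inversions u, swap p.1 p.2 ∈ G)
    {φ : M} {lam : Fin (L * m) → ℂ} (hφ : ∀ i, X i φ = lam i • φ)
    (hlam : ∀ j k : Fin (L * m), (j : ℕ) + 1 = k → swap j k ∈ G → lam j = lam k + 1)
    {S : Finset (Fin (L * m) → ℂ)} (hS : ∀ x ∈ G, x ≠ 1 → lam ∘ ⇑x⁻¹ ∈ S)
    {u : Perm (Fin (L * m))} (hu : u ∈ G) :
    P u φ - (-1 : ℂ) ^ #(inversions u) • φ ∈ S.sup (jointGenEigenspace X) := by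
  induction h : #(inversions u) using Nat.strong_induction_on generalizing u with
  | _ N ih =>
  subst h
  by_cases hu1 : u = 1
  · simp [hu1, inversions_one]
  obtain ⟨j, k, hjk, hdesc⟩ := exists_descent hu1
  have hjk_mem : (j, k) ∈ inversions u :=
    mem_inversions.mpr ⟨(Fin.lt_def.mpr (by omega) : j < k), hdesc⟩
  set s := swap j k
  have hs : s ∈ G := hGswap u hu _ hjk_mem
  have hus : u * s ∈ G := hGmul u hu s hs
  have hlen : #(inversions (u * s)) + 1 = #(inversions u) := by
    have := card_pos.mpr ⟨_, hjk_mem⟩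
    rw [card_inversions_mul_swap_succ u hjk, if_pos hdesc]
    omega
  have hsplit : P u φ - (-1 : ℂ) ^ #(inversions u) • φ =
      P (u * s) (P s φ + φ) - (P (u * s) φ - (-1 : ℂ) ^ #(inversions (u * s)) • φ) := by
    rw [← hlen, pow_succ, map_add (P (u * s)), ← mul_apply, ← map_mul, mul_assoc, swap_mul_self,
      mul_one, mul_neg_one, neg_smul]
    abel
  rw [hsplit]
  exact Submodule.sub_mem _
    (hbrel.P_apply_P_swap_add_mem hX hGmul hGswap hφ hS hjk hs (hlam j k hjk hs) hus)
    (ih _ (by omega) hus rfl)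

end BrelHolds

section Diagram

variable {L m : ℕ} {pos : Fin (L * m) → ℤ × ℤ}

lemma colHeight_eq_one_iff {i : Fin (L * m)} :
    colHeight L m pos i = 1 ↔ ∀ j, (pos j).2 = (pos i).2 → j = i := by
  rw [colHeight, card_eq_one]
  constructor
  · rintro ⟨a, ha⟩ j hj
    have hj' : j ∈ ({a} : Finset _) := ha ▸ by simp [hj]
    have hi' : i ∈ ({a} : Finset _) := ha ▸ by simp
    rw [Finset.mem_singleton] at hj' hi'
    rw [hj', hi']
  · intro h
    exact ⟨i, by ext j; simpa using ⟨h j, fun hj => hj ▸ rfl⟩⟩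

lemma one_le_colHeight (i : Fin (L * m)) : 1 ≤ colHeight L m pos i :=
  card_pos.mpr ⟨i, by simp⟩

variable (L m pos) in
/-- `W̄_{D⁻}` is the stabiliser of this map: a label of `D⁻` goes to its row, a label of `D⁺` to
itself. -/
def block (i : Fin (L * m)) : ℤ ⊕ Fin (L * m) :=
  if colHeight L m pos i = 1 then .inl (pos i).1 else .inr i

lemma block_eq_block_iff {i j : Fin (L * m)} :
    block L m pos i = block L m pos j ↔
      i = j ∨ colHeight L m pos i = 1 ∧ colHeight L m pos j = 1 ∧ (pos i).1 = (pos j).1 := by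
  unfold block
  split_ifs <;> aesop

lemma mem_WDminus_iff {u : Perm (Fin (L * m))} :
    u ∈ WDminus L m pos ↔ ∀ i, block L m pos (u i) = block L m pos i := by
  refine forall_congr' fun i => ?_
  rw [block_eq_block_iff]
  have := one_le_colHeight (pos := pos) i
  constructor
  · rintro ⟨hfix, hrow⟩
    by_cases h : colHeight L m pos i = 1
    · exact Or.inr ⟨(hrow h).1, h, (hrow h).2⟩
    · exact Or.inl (hfix (by omega))
  · rintro (h | ⟨hu1, h1, hrow⟩)
    · exact ⟨fun _ => h, fun h1 => by rw [h]; exact ⟨h1, rfl⟩⟩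
    · exact ⟨fun h2 => by omega, fun _ => ⟨hu1, hrow⟩⟩

lemma mul_mem_WDminus {u v : Perm (Fin (L * m))} (hu : u ∈ WDminus L m pos)
    (hv : v ∈ WDminus L m pos) : u * v ∈ WDminus L m pos := by
  rw [mem_WDminus_iff] at *
  exact fun i => (hu (v i)).trans (hv i)

lemma swap_mem_WDminus {k l : Fin (L * m)} (h : block L m pos k = block L m pos l) :
    swap k l ∈ WDminus L m pos := by
  rw [mem_WDminus_iff]
  intro i
  rw [swap_apply_def]
  split_ifs with hk hl
  · rw [hk, h]
  · rw [hl, h]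
  · rfl

lemma eq_one_of_mem_WDminus_of_content_eq (hinj : Function.Injective pos)
    {x : Perm (Fin (L * m))} (hx : x ∈ WDminus L m pos)
    (hc : ∀ i, content L m pos (x i) = content L m pos i) : x = 1 := by
  ext i
  rcases block_eq_block_iff.mp (mem_WDminus_iff.mp hx i) with h | ⟨-, -, hrow⟩
  · rw [h, Perm.one_apply]
  · have := hc i
    simp only [content] at this
    rw [hinj (Prod.ext hrow (by omega)), Perm.one_apply]

section Shape

lemma antitoneOn_Icc_of_succ_le {β : Type*} [Preorder β] {f : ℤ → β} {a b : ℤ}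
    (hf : ∀ t, a ≤ t → t < b → f (t + 1) ≤ f t) : AntitoneOn f (Set.Icc a b) :=
  antitoneOn_of_succ_le Set.ordConnected_Icc fun t _ ht hst => by
    rw [Order.succ_eq_add_one] at hst ⊢
    exact hf t ht.1 (by linarith [hst.2])

variable {mu : ℤ → ℤ}

variable (L m mu) in
def diagramDLm : Set (ℤ × ℤ) :=
  {p : ℤ × ℤ | 1 ≤ p.1 ∧ p.1 ≤ m ∧ mu p.1 < p.2 ∧ p.2 ≤ mu p.1 + L}

lemma pos_mem_diagramDLm (hran : Set.range pos = diagramDLm L m mu) (i : Fin (L * m)) :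
    1 ≤ (pos i).1 ∧ (pos i).1 ≤ m ∧ mu (pos i).1 < (pos i).2 ∧ (pos i).2 ≤ mu (pos i).1 + L :=
  (hran ▸ Set.mem_range_self i : pos i ∈ diagramDLm L m mu)

lemma exists_pos_eq (hran : Set.range pos = diagramDLm L m mu) {r c : ℤ} (h1 : 1 ≤ r)
    (h2 : r ≤ m) (h3 : mu r < c) (h4 : c ≤ mu r + L) : ∃ t, pos t = (r, c) :=
  (hran ▸ ⟨h1, h2, h3, h4⟩ : (r, c) ∈ Set.range pos)

lemma row_eq_of_colHeight_eq_one (hran : Set.range pos = diagramDLm L m mu) {a : Fin (L * m)}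
    (ha : colHeight L m pos a = 1) {r : ℤ} (h1 : 1 ≤ r) (h2 : r ≤ m) (h3 : mu r < (pos a).2)
    (h4 : (pos a).2 ≤ mu r + L) : (pos a).1 = r := by
  obtain ⟨t, ht⟩ := exists_pos_eq hran h1 h2 h3 h4
  rw [← colHeight_eq_one_iff.mp ha t (by rw [ht]), ht]

lemma row_eq_of_col_mem_Ioo (hmu : AntitoneOn mu (Set.Icc 1 (m : ℤ)))
    (hran : Set.range pos = diagramDLm L m mu) {a c j : Fin (L * m)}
    (ha : colHeight L m pos a = 1) (hc : colHeight L m pos c = 1) (hac : (pos a).1 = (pos c).1)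
    (haj : (pos a).2 < (pos j).2) (hjc : (pos j).2 < (pos c).2) : (pos j).1 = (pos a).1 := by
  obtain ⟨ha1, ha2, ha3, ha4⟩ := pos_mem_diagramDLm hran a
  obtain ⟨hc1, hc2, hc3, hc4⟩ := pos_mem_diagramDLm hran c
  obtain ⟨hj1, hj2, hj3, hj4⟩ := pos_mem_diagramDLm hran j
  rw [← hac] at hc3 hc4
  have anti : ∀ r r' : ℤ, 1 ≤ r → r ≤ r' → r' ≤ m → mu r' ≤ mu r := fun r r' h1 h2 h3 =>
    hmu ⟨h1, by omega⟩ ⟨by omega, h3⟩ h2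
  -- otherwise the column of `c` (resp. `a`) would also meet the row above (resp. below)
  rcases lt_trichotomy (pos j).1 (pos a).1 with h | h | h
  · have := anti (pos j).1 ((pos a).1 - 1) hj1 (by omega) (by omega)
    have := anti ((pos a).1 - 1) (pos a).1 (by omega) (by omega) ha2
    have := row_eq_of_colHeight_eq_one hran hc (r := (pos a).1 - 1) (by omega) (by omega)
      (by omega) (by omega)
    omega
  · exact h
  · have := anti (pos a).1 ((pos a).1 + 1) ha1 (by omega) (by omega)
    have := anti ((pos a).1 + 1) (pos j).1 (by omega) (by omega) hj2
    have := row_eq_of_colHeight_eq_one hran ha (r := (pos a).1 + 1) (by omega) (by omega)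
      (by omega) (by omega)
    omega

variable (L m pos) in
def ColumnOrdered : Prop :=
  ∀ i j : Fin (L * m), i < j ↔
    ((pos i).2 < (pos j).2 ∨ ((pos i).2 = (pos j).2 ∧ (pos i).1 < (pos j).1))

lemma col_lt_col_of_lt
    (horder : ColumnOrdered L m pos)
    {i j : Fin (L * m)} (hij : i < j) (h : colHeight L m pos i = 1 ∨ colHeight L m pos j = 1) :
    (pos i).2 < (pos j).2 := by
  refine ((horder i j).mp hij).resolve_right fun ⟨hcol, _⟩ => hij.ne ?_
  exact h.elim (fun hi => (colHeight_eq_one_iff.mp hi j hcol.symm).symm)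
    (fun hj => colHeight_eq_one_iff.mp hj i hcol)

lemma block_eq_of_lt_of_lt (hinj : Function.Injective pos)
    (hmu : AntitoneOn mu (Set.Icc 1 (m : ℤ))) (hran : Set.range pos = diagramDLm L m mu)
    (horder : ColumnOrdered L m pos)
    {a b c : Fin (L * m)} (hab : a < b) (hbc : b < c)
    (hac : block L m pos a = block L m pos c) : block L m pos b = block L m pos a := by
  rw [block_eq_block_iff] at hac ⊢
  rcases hac with rfl | ⟨ha, hc, hrow⟩
  · exact absurd (hab.trans hbc) (lt_irrefl a)
  have hrow_of : ∀ j, (pos j).2 = (pos b).2 → (pos j).1 = (pos a).1 := fun j hj =>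
    row_eq_of_col_mem_Ioo hmu hran ha hc hrow (hj ▸ col_lt_col_of_lt horder hab (.inl ha))
      (hj ▸ col_lt_col_of_lt horder hbc (.inr hc))
  refine .inr ⟨colHeight_eq_one_iff.mpr fun j hj => hinj ?_, ha, hrow_of b rfl⟩
  exact Prod.ext ((hrow_of j hj).trans (hrow_of b rfl).symm) hj

lemma content_succ (hran : Set.range pos = diagramDLm L m mu)
    (horder : ColumnOrdered L m pos)
    {j k : Fin (L * m)} (hjk : (j : ℕ) + 1 = k) (hj : colHeight L m pos j = 1)
    (hrow : (pos j).1 = (pos k).1) : content L m pos k = content L m pos j + 1 := by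
  have hcol := col_lt_col_of_lt horder (Fin.lt_def.mpr (by omega) : j < k) (.inl hj)
  obtain ⟨hj1, hj2, hj3, -⟩ := pos_mem_diagramDLm hran j
  obtain ⟨-, -, -, hk4⟩ := pos_mem_diagramDLm hran k
  rw [← hrow] at hk4
  -- a gap between the columns of `j` and `k` would be filled by a label strictly between them
  have hcolk : (pos k).2 = (pos j).2 + 1 := by
    by_contra hne
    obtain ⟨t, ht⟩ := exists_pos_eq hran hj1 hj2 (c := (pos j).2 + 1) (by omega) (by omega)
    have hjt : j < t := (horder j t).mpr (.inl (by rw [ht]; omega))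
    have htk : t < k := (horder t k).mpr (.inl (by rw [ht]; omega))
    rw [Fin.lt_def] at hjt htk
    omega
  simp only [content]
  omega

lemma swap_mem_WDminus_of_mem_inversions (hinj : Function.Injective pos)
    (hmu : AntitoneOn mu (Set.Icc 1 (m : ℤ))) (hran : Set.range pos = diagramDLm L m mu)
    (horder : ColumnOrdered L m pos)
    {u : Perm (Fin (L * m))} (hu : u ∈ WDminus L m pos) {p : Fin (L * m) × Fin (L * m)}
    (hp : p ∈ inversions u) : swap p.1 p.2 ∈ WDminus L m pos :=
  swap_mem_WDminus <| apply_fst_eq_apply_snd_of_mem_inversions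
    (fun _ _ _ => block_eq_of_lt_of_lt hinj hmu hran horder) (mem_WDminus_iff.mp hu) hp

lemma content_succ_of_swap_mem_WDminus (hran : Set.range pos = diagramDLm L m mu)
    (horder : ColumnOrdered L m pos)
    {j k : Fin (L * m)} (hjk : (j : ℕ) + 1 = k) (hs : swap j k ∈ WDminus L m pos) :
    content L m pos k = content L m pos j + 1 := by
  have h := mem_WDminus_iff.mp hs j
  rw [swap_apply_left, block_eq_block_iff] at h
  rcases h with h | ⟨-, hj, hrow⟩
  · rw [h] at hjk
    omega
  · exact content_succ hran horder hjk hj hrow.symm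

end Shape

end Diagram

variable (L m : ℕ) (pos : Fin (L * m) → ℤ × ℤ)

theorem statement_15
    (hinj : Function.Injective pos)
    (hshape : TypeDLm L m (Set.range pos))
    (horder : ∀ i j : Fin (L * m), i < j ↔
      ((pos i).2 < (pos j).2 ∨ ((pos i).2 = (pos j).2 ∧ (pos i).1 < (pos j).1)))
    {M : Type*} [AddCommGroup M] [Module ℂ M]
    (P : Equiv.Perm (Fin (L * m)) →* Module.End ℂ M)
    (X : Fin (L * m) → Module.End ℂ M)
    (hXcomm : ∀ i j, X i * X j = X j * X i)
    (hbrel : BrelHolds L m P X)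
    (φ : M) (hφ : φ ≠ 0)
    (hwt : ∀ i : Fin (L * m), X i φ = ((-(content L m pos i) - m : ℤ) : ℂ) • φ)
    (w : Equiv.Perm (Fin (L * m))) (hw : w ∈ WDminus L m pos)
    (a : ℂ) (hwφ : P w φ = a • φ) :
    a = (-1 : ℂ) ^ (len L m w) := by
  classical
  obtain ⟨mu, hmu, hran⟩ := hshape
  set lam : Fin (L * m) → ℂ := fun i => ((-(content L m pos i) - m : ℤ) : ℂ)
  set S := (univ.filter fun x => x ∈ WDminus L m pos ∧ x ≠ 1).image
    fun x : Perm (Fin (L * m)) => lam ∘ ⇑x⁻¹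
  have hmem := hbrel.P_apply_sub_sign_smul_mem hXcomm (fun _ hu _ hv => mul_mem_WDminus hu hv)
    (fun _ hu _ => swap_mem_WDminus_of_mem_inversions hinj (antitoneOn_Icc_of_succ_le hmu) hran
      horder hu) hwt
    (fun j k hjk hs => by
      simp [content_succ_of_swap_mem_WDminus hran horder hjk hs]
      ring)
    (S := S) (fun x hx hx1 => mem_image_of_mem _ (by simp [hx, hx1])) hw
  have hlam : lam ∉ S := by
    simp only [S, Finset.mem_image, Finset.mem_filter, Finset.mem_univ, true_and, not_exists,
      not_and]
    refine fun x ⟨hx, hx1⟩ hxlam => hx1 (eq_one_of_mem_WDminus_of_content_eq hinj hx fun i => ?_)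
    have := congrFun hxlam (x i)
    simp [lam] at this
    exact_mod_cast this.symm
  rw [hwφ, ← sub_smul] at hmem
  have h0 := Submodule.disjoint_def.mp (disjoint_jointGenEigenspace_finsetSup hXcomm hlam) _
    (Submodule.smul_mem _ _ (mem_jointGenEigenspace_of_forall_apply_eq_smul hwt)) hmem
  exact sub_eq_zero.mp ((smul_eq_zero.mp h0).resolve_right hφ)

end SkewIso

end
end

section
/- For integers 0 ≤ d ≤ l, every normally ordered semi-infinite wedge u_{k_1}∧u_{k_2}∧··· in the charge-M Fock space of degree d satisfies k_i = M − i + 1 for all i > s + dNL (where M ≡ s mod NL, 0 ≤ s < NL); consequently the map ρ_l^d : V_{s+lNL}^d → F_M^d, w ↦ w∧|M − s − lNL⟩, is an isomorphism of vector spaces. -/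
noncomputable section

/-!
Charge-`M` Fock space and finite wedges.  Basis vectors `u_k` of
`V_aff = ℂ[z^{±1}] ⊗ ℂ^L ⊗ ℂ^N` are labeled by `k ∈ ℤ` via
`k = k̄ − N(k̇ + L·k̲)` with `k̄ ∈ {1,…,N}`, `k̇ ∈ {1,…,L}`, `k̲ ∈ ℤ`.
A normally ordered semi-infinite wedge of charge `M` is a strictly decreasing
sequence `(k_i)` (0-indexed here, so `k_{i+1} = f i`) with `f i = M − i` for all
but finitely many `i`; its degree is `Σ_i (o̲_i − k̲_i)` with `o_i = M − i`.
`V_{s+lNL}` is the span of normally ordered finite wedges of `s + lNL` factors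
whose last momentum `k` satisfies `k̲ ≤ o̲`; `ρ_l^d(w) = w ∧ |M − s − lNL⟩`.
-/

namespace WedgeDeg

/-- `k̄ ∈ {1,…,N}`. -/
def kbar (N : ℕ) (k : ℤ) : ℤ := (k - 1) % N + 1

/-- `k̇ + L·k̲ ∈ ℤ`. -/
def kmid (N L : ℕ) (k : ℤ) : ℤ := (kbar N k - k) / N

/-- `k̇ ∈ {1,…,L}`. -/
def kdot (N L : ℕ) (k : ℤ) : ℤ := (kmid N L k - 1) % L + 1

/-- `k̲ ∈ ℤ`. -/
def kund (N L : ℕ) (k : ℤ) : ℤ := (kmid N L k - kdot N L k) / L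

/-- Degree of a semi-infinite wedge of charge `M` (0-indexed momenta `f`). -/
def degF (N L : ℕ) (M : ℤ) (f : ℕ → ℤ) : ℤ :=
  ∑ᶠ i : ℕ, (kund N L (M - i) - kund N L (f i))

/-- Degree of a finite wedge of `n` factors inside the charge-`M` picture. -/
def degV (N L : ℕ) (M : ℤ) (n : ℕ) (g : Fin n → ℤ) : ℤ :=
  ∑ i : Fin n, (kund N L (M - i.1) - kund N L (g i))

/-- The extension map `ρ_l^d : w ↦ w ∧ |M − s − lNL⟩`, on momentum labels. -/
def extWedge (M : ℤ) (n : ℕ) (g : Fin n → ℤ) : ℕ → ℤ :=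
  fun i => if h : i < n then g ⟨i, h⟩ else M - i

/-!
With `P = NL`, the label `k̲ = -⌈k / P⌉` is antitone in `k` and drops exactly when `k` passes
a multiple of `P`. A normally ordered wedge dominates the vacuum termwise, so every term of its
degree is nonnegative; if it differs from the vacuum at position `i`, it differs at every earlier
position, in particular at the `d + 1` positions `s + mP` (`m ≤ d`) where `M - j` is a multiple
of `P`, and each of those contributes at least one. So a wedge of degree `d` is the vacuum beyond
`s + dP`, and truncation at `s + lP` inverts `ρ_l^d`; the condition `k̲ ≤ o̲` on the last factor
is what makes the extended wedge normally ordered.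
-/

section

variable {N L : ℕ}

theorem kmid_eq (hN : 0 < N) (k : ℤ) : kmid N L k = -((k - 1) / N) := by
  have hN' : (N : ℤ) ≠ 0 := by omega
  rw [kmid, kbar, Int.emod_def,
    show k - 1 - N * ((k - 1) / N) + 1 - k = -((k - 1) / N) * N by ring, Int.mul_ediv_cancel _ hN']

theorem _root_.Int.neg_sub_one_ediv {b : ℤ} (hb : 0 < b) (a : ℤ) : (-a - 1) / b = -(a / b) - 1 := by
  rw [Int.ediv_eq_iff_of_pos hb]
  have := Int.ediv_mul_le a hb.ne'
  have := Int.lt_ediv_add_one_mul_self a hb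
  constructor <;> linarith

theorem kund_eq (hN : 0 < N) (hL : 0 < L) (k : ℤ) :
    kund N L k = -((k - 1) / (N * L)) - 1 := by
  have hL' : (L : ℤ) ≠ 0 := by omega
  rw [kund, kdot, show kmid N L k - ((kmid N L k - 1) % L + 1) = (kmid N L k - 1) / L * L by
      rw [Int.emod_def]; ring,
    Int.mul_ediv_cancel _ hL', kmid_eq hN, Int.neg_sub_one_ediv (by omega),
    Int.ediv_ediv_of_nonneg (by omega)]

theorem kund_antitone (hN : 0 < N) (hL : 0 < L) : Antitone (kund N L) := by
  intro a b hab
  have hP : (0 : ℤ) < N * L := by positivity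
  rw [kund_eq hN hL, kund_eq hN hL]
  have := Int.ediv_le_ediv hP (sub_le_sub_right hab 1)
  omega

theorem kund_mul (hN : 0 < N) (hL : 0 < L) (q : ℤ) : kund N L (N * L * q) = -q := by
  have hP : (0 : ℤ) < N * L := by positivity
  rw [kund_eq hN hL, show (N * L * q - 1 : ℤ) / (N * L) = q - 1 by
    rw [Int.ediv_eq_iff_of_pos hP]; constructor <;> linarith]
  ring

theorem kund_mul_add_one (hN : 0 < N) (hL : 0 < L) (q : ℤ) :
    kund N L (N * L * q + 1) = -q - 1 := by
  have hP : (0 : ℤ) < N * L := by positivity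
  rw [kund_eq hN hL, add_sub_cancel_right, Int.mul_ediv_cancel_left _ hP.ne']

theorem kund_lt_neg_iff (hN : 0 < N) (hL : 0 < L) (q k : ℤ) :
    kund N L k < -q ↔ N * L * q < k := by
  have hP : (0 : ℤ) < N * L := by positivity
  rw [kund_eq hN hL, show -((k - 1) / (N * L)) - 1 < -q ↔ q ≤ (k - 1) / (N * L) by omega,
    Int.le_ediv_iff_mul_le hP]
  constructor <;> intro h <;> linarith

theorem _root_.StrictAnti.add_sub_le {f : ℕ → ℤ} (hf : StrictAnti f) {i j : ℕ} (hij : i ≤ j) :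
    f j + (j - i : ℕ) ≤ f i := by
  induction j, hij using Nat.le_induction with
  | base => simp
  | succ j hij ih =>
    have := hf (show j < j + 1 by omega)
    push_cast [Nat.sub_add_comm hij] at ih ⊢
    omega

variable {M : ℤ} {f : ℕ → ℤ} {n : ℕ}

theorem sub_le_of_eventually_eq (hf : StrictAnti f) (hn : ∀ i ≥ n, f i = M - i) (i : ℕ) :
    M - i ≤ f i := by
  have := hf.add_sub_le (le_max_left i n)
  rw [hn _ (le_max_right i n)] at this
  push_cast [Nat.cast_sub (le_max_left i n)] at this
  omega

theorem sub_lt_of_le_of_sub_lt (hf : StrictAnti f) {i j : ℕ} (hji : j ≤ i) (hi : M - i < f i) :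
    M - j < f j := by
  have := hf.add_sub_le hji
  push_cast [Nat.cast_sub hji] at this
  omega

theorem degF_eq_sum_range (hn : ∀ i ≥ n, f i = M - i) :
    degF N L M f = ∑ i ∈ Finset.range n, (kund N L (M - i) - kund N L (f i)) := by
  refine finsum_eq_finsetSum_of_support_subset _ fun i hi => ?_
  by_contra h
  simp_all

theorem card_le_degF (hN : 0 < N) (hL : 0 < L) (hf : StrictAnti f) (hn : ∀ i ≥ n, f i = M - i)
    (S : Finset ℕ) (hS : ∀ j ∈ S, (N * L : ℤ) ∣ M - j ∧ M - j < f j) :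
    (S.card : ℤ) ≤ degF N L M f := by
  have hSn : S ⊆ Finset.range n := fun j hj => by
    by_contra h
    have := (hS j hj).2
    rw [hn j (by simpa using h)] at this
    exact lt_irrefl _ this
  rw [degF_eq_sum_range hn, Finset.card_eq_sum_ones, Nat.cast_sum]
  refine (Finset.sum_le_sum fun j hj => ?_).trans (Finset.sum_le_sum_of_subset_of_nonneg hSn
    fun i _ _ => sub_nonneg.2 (kund_antitone hN hL (sub_le_of_eventually_eq hf hn i)))
  obtain ⟨⟨q, hq⟩, hlt⟩ := hS j hj
  rw [hq] at hlt
  rw [hq, kund_mul hN hL]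
  have := (kund_lt_neg_iff hN hL q (f j)).2 hlt
  push_cast
  omega

theorem dvd_sub_of_emod_eq {s : ℕ} (hs : M % (N * L) = s) (m : ℕ) :
    (N * L : ℤ) ∣ M - (s + m * (N * L) : ℕ) := by
  have := Int.dvd_self_sub_of_emod_eq hs
  push_cast
  rw [show M - (s + m * (N * L)) = M - s - (N * L) * m by ring]
  exact dvd_sub this (dvd_mul_right _ _)

theorem eq_sub_of_degF_eq (hN : 0 < N) (hL : 0 < L) {s d : ℕ} (hs : M % (N * L) = s)
    (hf : StrictAnti f) (hev : ∃ n, ∀ i ≥ n, f i = M - i) (hdeg : degF N L M f = d)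
    {i : ℕ} (hi : s + d * (N * L) ≤ i) : f i = M - i := by
  obtain ⟨n, hn⟩ := hev
  by_contra hne
  have hlt : M - i < f i := lt_of_le_of_ne (sub_le_of_eventually_eq hf hn i) (Ne.symm hne)
  let pos : ℕ ↪ ℕ := ⟨fun m => s + m * (N * L), fun a b h =>
    Nat.eq_of_mul_eq_mul_right (Nat.mul_pos hN hL) (Nat.add_left_cancel h)⟩
  have := card_le_degF hN hL hf hn ((Finset.range (d + 1)).map pos) fun j hj => by
    obtain ⟨m, hm, rfl⟩ := Finset.mem_map.1 hj
    have : m * (N * L) ≤ d * (N * L) :=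
      Nat.mul_le_mul_right _ (by simpa [Nat.lt_succ_iff] using hm)
    exact ⟨dvd_sub_of_emod_eq hs m,
      sub_lt_of_le_of_sub_lt hf (show s + m * (N * L) ≤ i by omega) hlt⟩
  simp only [Finset.card_map, Finset.card_range, hdeg] at this
  omega

theorem extWedge_of_le (g : Fin n → ℤ) {i : ℕ} (hi : n ≤ i) : extWedge M n g i = M - i := by
  simp [extWedge, Nat.not_lt.2 hi]

theorem extWedge_injective : Function.Injective (extWedge M n) := fun g g' h =>
  funext fun i => by simpa [extWedge] using congrFun h i

theorem extWedge_restrict (hn : ∀ i ≥ n, f i = M - i) :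
    extWedge M n (fun i : Fin n => f i) = f := by
  funext i
  by_cases hi : i < n
  · simp [extWedge, hi]
  · rw [extWedge_of_le _ (Nat.le_of_not_lt hi), hn i (Nat.le_of_not_lt hi)]

theorem degF_extWedge (g : Fin n → ℤ) : degF N L M (extWedge M n g) = degV N L M n g := by
  rw [degF_eq_sum_range fun i => extWedge_of_le g, degV, ← Fin.sum_univ_eq_sum_range]
  simp [extWedge]

theorem strictAnti_extWedge {g : Fin n → ℤ} (hg : ∀ i j, i < j → g j < g i)
    (hlast : ∀ h : 0 < n, M - n < g ⟨n - 1, by omega⟩) : StrictAnti (extWedge M n g) := by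
  refine strictAnti_nat_of_succ_lt fun i => ?_
  rcases lt_trichotomy (i + 1) n with h | h | h
  · simpa [extWedge, h, (by omega : i < n)] using hg ⟨i, by omega⟩ ⟨i + 1, h⟩ (by simp)
  · have := hlast (by omega)
    simp only [extWedge, h, lt_irrefl, dite_false, (by omega : i < n), dite_true]
    simp only [show n - 1 = i by omega] at this
    omega
  · rw [extWedge_of_le g (by omega), extWedge_of_le g (by omega)]
    push_cast
    omega

theorem bijOn_extWedge (hN : 0 < N) (hL : 0 < L) (hn : (N * L : ℤ) ∣ M - n) (D : ℤ)
    (hvac : ∀ f : ℕ → ℤ, StrictAnti f → (∃ N₀ : ℕ, ∀ i ≥ N₀, f i = M - i) → degF N L M f = D →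
      ∀ i ≥ n, f i = M - i) :
    Set.BijOn (extWedge M n)
      {g : Fin n → ℤ | (∀ i j : Fin n, i < j → g j < g i) ∧
        (∀ h : 0 < n, kund N L (g ⟨n - 1, by omega⟩) ≤ kund N L (M - (n - 1 : ℕ))) ∧
        degV N L M n g = D}
      {f : ℕ → ℤ | StrictAnti f ∧ (∃ N₀ : ℕ, ∀ i ≥ N₀, f i = M - i) ∧ degF N L M f = D} := by
  refine ⟨?_, extWedge_injective.injOn, ?_⟩
  · rintro g ⟨hg, hlast, hdeg⟩
    refine ⟨strictAnti_extWedge hg fun h => ?_, ⟨n, fun i => extWedge_of_le g⟩,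
      (degF_extWedge g).trans hdeg⟩
    obtain ⟨q, hq⟩ := hn
    have hle := hlast h
    rw [show M - (n - 1 : ℕ) = N * L * q + 1 by push_cast [Nat.cast_sub h]; linarith,
      kund_mul_add_one hN hL] at hle
    rw [hq]
    exact (kund_lt_neg_iff hN hL q _).1 (by omega)
  · rintro f ⟨hf, hev, hdeg⟩
    have hfn := hvac f hf hev hdeg
    obtain ⟨N₀, hN₀⟩ := hev
    refine ⟨fun i => f i, ⟨fun i j hij => hf hij,
      fun h => kund_antitone hN hL (sub_le_of_eventually_eq hf hN₀ _), ?_⟩, extWedge_restrict hfn⟩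
    rw [← degF_extWedge, extWedge_restrict hfn, hdeg]

end

/-- for `0 ≤ d ≤ l`, every normally ordered semi-infinite wedge of
charge `M` and degree `d` satisfies `k_i = M − i + 1` for all (1-based) `i > s + dNL`
(where `M ≡ s mod NL`, `0 ≤ s < NL`); consequently
`ρ_l^d : V_{s+lNL}^d → F_M^d`, `w ↦ w ∧ |M − s − lNL⟩`, is a bijection between the
normally ordered wedge bases, hence an isomorphism of vector spaces. -/
theorem statement_16 (N L : ℕ) (hN : 2 ≤ N) (hL : 2 ≤ L)
    (M : ℤ) (s d l : ℕ) (hs : (M : ℤ) % (N * L) = s) (hdl : d ≤ l) :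
    (∀ f : ℕ → ℤ, StrictAnti f → (∃ N₀ : ℕ, ∀ i ≥ N₀, f i = M - i) →
      degF N L M f = d →
      ∀ i : ℕ, s + d * (N * L) ≤ i → f i = M - i) ∧
    Set.BijOn (extWedge M (s + l * (N * L)))
      {g : Fin (s + l * (N * L)) → ℤ |
        (∀ i j : Fin (s + l * (N * L)), i < j → g j < g i) ∧
        (∀ h : 0 < s + l * (N * L),
          kund N L (g ⟨s + l * (N * L) - 1, by omega⟩)
            ≤ kund N L (M - (s + l * (N * L) - 1 : ℕ))) ∧
        degV N L M (s + l * (N * L)) g = d}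
      {f : ℕ → ℤ | StrictAnti f ∧ (∃ N₀ : ℕ, ∀ i ≥ N₀, f i = M - i) ∧
        degF N L M f = d} := by
  have hN' : 0 < N := by omega
  have hL' : 0 < L := by omega
  refine ⟨fun f hf hev hdeg _ => eq_sub_of_degF_eq hN' hL' hs hf hev hdeg,
    bijOn_extWedge hN' hL' (dvd_sub_of_emod_eq hs l) d fun f hf hev hdeg _ hi =>
      eq_sub_of_degF_eq hN' hL' hs hf hev hdeg (le_trans ?_ hi)⟩
  gcongr

end WedgeDeg

end
end

section
/- For any skew Young diagram D(h⃗) of type D_L(N), the rational function Ω_{h⃗}(u) = Π_{k≥1} (u + 2 − r_1 − k − Σ_{i=1}^{k−1}h_i)/(u + 1 − k − Σ_{i=1}^{k−1}h_i^vac) (with r_1 = 1 + Σ_{i≥1}(h_i^vac − h_i)) uniquely determines D(h⃗): if Ω_{h⃗}(u) = Ω_{h⃗'}(u) as rational functions then h⃗ = h⃗'. -/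
noncomputable section

/-!
The rational function `Ω_h(u)` attached to a semi-infinite skew diagram of type
`D_L(N)` determines the diagram.  A diagram is given by the sequence of offsets
`h = (h_1, h_2, …)` (here 0-indexed: `h i = h_{i+1}`), each row having `L`
squares; the vacuum sequence is `h^vac_i = L` if `N ∣ i`, else `0`.  `h` is of
type `D_L(N)` iff `h_i = h^vac_i` for all but finitely many `i` and every column
of the diagram has at most `N` squares (equivalently, every `N` consecutive
offsets sum to at least `L`).  With `r_1 = 1 + Σ_i (h^vac_i − h_i)`,
`Ω_h(u) = Π_{k≥1} (u + 2 − r_1 − k − Σ_{i<k} h_i)/(u + 1 − k − Σ_{i<k} h^vac_i)`,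
a finite product of linear fractions in the field `RatFunc ℂ`.
-/

namespace OmegaDiag

/-- The vacuum offset sequence (0-indexed): `h^vac_{i+1} = L` if `N ∣ i+1`, else 0. -/
def hvac (N L : ℕ) (i : ℕ) : ℕ := if (i + 1) % N = 0 then L else 0

/-- `h` is (the offset sequence of) a semi-infinite skew diagram of type `D_L(N)`. -/
def TypeDLN (N L : ℕ) (h : ℕ → ℕ) : Prop :=
  (∃ K : ℕ, ∀ i ≥ K, h i = hvac N L i) ∧
  (∀ k : ℕ, L ≤ ∑ i ∈ Finset.Ico k (k + N), h i)

/-- `r_1 = 1 + Σ_{i≥1} (h^vac_i − h_i)`. -/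
def r1 (N L : ℕ) (h : ℕ → ℕ) : ℤ :=
  1 + ∑ᶠ i : ℕ, ((hvac N L i : ℤ) - (h i : ℤ))

/-- The rational function `Ω_h(u)`, as an element of `RatFunc ℂ` (the `k`-th factor,
`k = j + 1 ≥ 1`, is `(u + 2 − r_1 − k − Σ_{i<k} h_i)/(u + 1 − k − Σ_{i<k} h^vac_i)`;
all but finitely many factors equal 1). -/
def Omega (N L : ℕ) (h : ℕ → ℕ) : RatFunc ℂ :=
  ∏ᶠ j : ℕ,
    (RatFunc.X - RatFunc.C ((r1 N L h + (j : ℤ) + 1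
        + ∑ i ∈ Finset.range j, (h i : ℤ) - 2 : ℤ) : ℂ))
    / (RatFunc.X - RatFunc.C (((j : ℤ) + 1
        + ∑ i ∈ Finset.range j, (hvac N L i : ℤ) - 1 : ℤ) : ℂ))

end OmegaDiag

/-!
Once `h` agrees with the vacuum, the numerator root of each factor of `Ω_h` equals its
denominator root, so `Ω_h` is a quotient of two polynomials `∏ (X - c)` over a common finite
range, with a denominator independent of `h`. The numerator roots
`r_1 + k + h_1 + ⋯ + h_{k-1} - 2` strictly increase in `k`, so the root multiset of the
numerator recovers them in order, and `h_k` is one less than the gap between consecutive roots.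
-/

open Polynomial

theorem StrictMono.eq_of_multiset_map_range_eq {α : Type*} [LinearOrder α] {f g : ℕ → α}
    (hf : StrictMono f) (hg : StrictMono g) {M : ℕ}
    (hfg : (Multiset.range M).map f = (Multiset.range M).map g) {j : ℕ} (hj : j < M) :
    f j = g j := by
  have sorted : ∀ {F : ℕ → α}, StrictMono F → ((List.range M).map F).Pairwise (· < ·) :=
    fun hF => List.pairwise_lt_range.map _ fun _ _ hab => hF hab
  have hlist : (List.range M).map f = (List.range M).map g :=
    (Multiset.coe_eq_coe.mp hfg).eq_of_pairwise (fun _ _ _ _ h₁ h₂ => (lt_asymm h₁ h₂).elim)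
      (sorted hf) (sorted hg)
  exact List.map_eq_map_iff.mp hlist j (List.mem_range.mpr hj)

theorem Polynomial.roots_prod_range_X_sub_C {R : Type*} [CommRing R] [IsDomain R]
    (f : ℕ → R) (M : ℕ) :
    (∏ j ∈ Finset.range M, (X - C (f j))).roots = (Multiset.range M).map f := by
  rw [← roots_multiset_prod_X_sub_C ((Multiset.range M).map f), Multiset.map_map]
  rfl

theorem StrictMono.eq_of_prod_range_X_sub_C_eq {R : Type*} [CommRing R] [IsDomain R]
    [CharZero R] {f g : ℕ → ℤ} (hf : StrictMono f) (hg : StrictMono g) {M : ℕ}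
    (hfg : ∏ j ∈ Finset.range M, (X - C (f j : R)) =
      ∏ j ∈ Finset.range M, (X - C (g j : R)))
    {j : ℕ} (hj : j < M) : f j = g j := by
  refine hf.eq_of_multiset_map_range_eq hg
    (Multiset.map_injective (Int.cast_injective (α := R)) ?_) hj
  simpa only [Multiset.map_map, Function.comp_def, roots_prod_range_X_sub_C] using
    congrArg roots hfg

theorem RatFunc.X_sub_C_ne_zero {K : Type*} [Field K] (c : K) :
    (RatFunc.X - RatFunc.C c : RatFunc K) ≠ 0 := by
  simpa only [map_sub, RatFunc.algebraMap_X, RatFunc.algebraMap_C] using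
    RatFunc.algebraMap_ne_zero (Polynomial.X_sub_C_ne_zero c)

namespace OmegaDiag

def zeroSeq (N L : ℕ) (h : ℕ → ℕ) (j : ℕ) : ℤ :=
  r1 N L h + (j : ℤ) + 1 + ∑ i ∈ Finset.range j, (h i : ℤ) - 2

def poleSeq (N L : ℕ) (j : ℕ) : ℤ :=
  (j : ℤ) + 1 + ∑ i ∈ Finset.range j, (hvac N L i : ℤ) - 1

lemma zeroSeq_succ_sub (N L : ℕ) (h : ℕ → ℕ) (j : ℕ) :
    zeroSeq N L h (j + 1) - zeroSeq N L h j = h j + 1 := by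
  simp only [zeroSeq, Finset.sum_range_succ]
  push_cast
  ring

lemma zeroSeq_strictMono (N L : ℕ) (h : ℕ → ℕ) : StrictMono (zeroSeq N L h) :=
  strictMono_nat_of_lt_succ fun j => by
    have := zeroSeq_succ_sub N L h j
    omega

lemma eq_of_zeroSeq_eq {N L : ℕ} {h h' : ℕ → ℕ} (heq : zeroSeq N L h = zeroSeq N L h') :
    h = h' := by
  funext j
  have hj := zeroSeq_succ_sub N L h j
  rw [heq, zeroSeq_succ_sub] at hj
  omega

section EventuallyVacuum

variable {N L : ℕ} {h : ℕ → ℕ} {K : ℕ} (hK : ∀ i ≥ K, h i = hvac N L i)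
include hK

lemma r1_eq_sum_range {j : ℕ} (hj : K ≤ j) :
    r1 N L h = 1 + ∑ i ∈ Finset.range j, ((hvac N L i : ℤ) - (h i : ℤ)) := by
  rw [r1, finsum_eq_finsetSum_of_support_subset]
  intro i hi
  by_contra hij
  have hji : j ≤ i := by simpa using hij
  exact hi (by simp [hK i (hj.trans hji)])

lemma zeroSeq_eq_poleSeq {j : ℕ} (hj : K ≤ j) : zeroSeq N L h j = poleSeq N L j := by
  rw [zeroSeq, poleSeq, r1_eq_sum_range hK hj, Finset.sum_sub_distrib]
  ring

lemma Omega_eq_div {M : ℕ} (hM : K ≤ M) :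
    Omega N L h =
      algebraMap ℂ[X] (RatFunc ℂ) (∏ j ∈ Finset.range M, (X - C (zeroSeq N L h j : ℂ))) /
        algebraMap ℂ[X] (RatFunc ℂ)
          (∏ j ∈ Finset.range M, (X - C (poleSeq N L j : ℂ))) := by
  simp only [map_prod, map_sub, RatFunc.algebraMap_X, RatFunc.algebraMap_C,
    ← Finset.prod_div_distrib]
  apply finprod_eq_prod_of_mulSupport_subset
  intro j hj
  by_contra hjM
  have hMj : M ≤ j := by simpa using hjM
  apply hj
  change (RatFunc.X - RatFunc.C (zeroSeq N L h j : ℂ))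
    / (RatFunc.X - RatFunc.C (poleSeq N L j : ℂ)) = 1
  rw [zeroSeq_eq_poleSeq hK (hM.trans hMj)]
  exact div_self (RatFunc.X_sub_C_ne_zero _)

end EventuallyVacuum

theorem statement_17_general (N L : ℕ)
    (h h' : ℕ → ℕ) (Hh : TypeDLN N L h) (Hh' : TypeDLN N L h')
    (heq : Omega N L h = Omega N L h') : h = h' := by
  obtain ⟨K, hK⟩ := Hh.1
  obtain ⟨K', hK'⟩ := Hh'.1
  have hpoles : algebraMap ℂ[X] (RatFunc ℂ)
      (∏ j ∈ Finset.range (max K K'), (X - C (poleSeq N L j : ℂ))) ≠ 0 :=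
    RatFunc.algebraMap_ne_zero (monic_prod_of_monic _ _ fun _ _ => monic_X_sub_C _).ne_zero
  rw [Omega_eq_div hK (le_max_left K K'), Omega_eq_div hK' (le_max_right K K'),
    div_left_inj' hpoles] at heq
  apply eq_of_zeroSeq_eq
  funext j
  rcases lt_or_ge j (max K K') with hj | hj
  · exact (zeroSeq_strictMono N L h).eq_of_prod_range_X_sub_C_eq (zeroSeq_strictMono N L h')
      (RatFunc.algebraMap_injective ℂ heq) hj
  · rw [zeroSeq_eq_poleSeq hK (le_of_max_le_left hj),
      zeroSeq_eq_poleSeq hK' (le_of_max_le_right hj)]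

/-- for diagrams of type `D_L(N)`, the rational function `Ω_h`
uniquely determines the diagram: `Ω_h = Ω_h'` implies `h = h'`. -/
theorem statement_17 (N L : ℕ) (hN : 2 ≤ N) (hL : 2 ≤ L)
    (h h' : ℕ → ℕ) (Hh : TypeDLN N L h) (Hh' : TypeDLN N L h')
    (heq : Omega N L h = Omega N L h') : h = h' :=
  statement_17_general N L h h' Hh Hh' heq

end OmegaDiag

end
end
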